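/- arXiv:2008.10800 — 8 statements merged into one kernel-verified Lean document; each statement's English description precedes it below -/
import Mathlib

section
/- Let G be a finite group. Then ω(G) = 2 if and only if G is a nontrivial elementary abelian p-group for some prime p. -/
theorem exists_linearEquiv_map_eq {K V : Type*} [Field K] [AddCommGroup V] [Module K V]
    [FiniteDimensional K V] {a b : V} (ha : a ≠ 0) (hb : b ≠ 0) :
    ∃ e : V ≃ₗ[K] V, e a = b := by
  obtain ⟨q, hq⟩ := (K ∙ a).exists_isCompl
  obtain ⟨q', hq'⟩ := (K ∙ b).exists_isCompl
  have hr : Module.finrank K q = Module.finrank K q' := by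
    have h1 := Submodule.finrank_add_eq_of_isCompl hq
    have h2 := Submodule.finrank_add_eq_of_isCompl hq'
    have h3 : Module.finrank K (K ∙ a) = Module.finrank K (K ∙ b) := by
      rw [finrank_span_singleton ha, finrank_span_singleton hb]
    omega
  let f1 : (K ∙ a) ≃ₗ[K] (K ∙ b) :=
    (LinearEquiv.toSpanNonzeroSingleton K V a ha).symm.trans
      (LinearEquiv.toSpanNonzeroSingleton K V b hb)
  let f2 : q ≃ₗ[K] q' := LinearEquiv.ofFinrankEq _ _ hr
  refine ⟨(Submodule.prodEquivOfIsCompl (K ∙ a) q hq).symm.trans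
    ((f1.prodCongr f2).trans (Submodule.prodEquivOfIsCompl (K ∙ b) q' hq')), ?_⟩
  have hma : a ∈ K ∙ a := Submodule.mem_span_singleton_self a
  have hmb : b ∈ K ∙ b := Submodule.mem_span_singleton_self b
  have h0 := Submodule.prodEquivOfIsCompl_symm_apply_left _ _ hq (⟨a, hma⟩ : ↥(K ∙ a))
  have hf1 : f1 ⟨a, hma⟩ = ⟨b, hmb⟩ := by
    simp only [f1, LinearEquiv.trans_apply]
    rw [show (⟨a, Submodule.mem_span_singleton_self a⟩ : K ∙ a) =
      LinearEquiv.toSpanNonzeroSingleton K V a ha 1 from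
      (LinearEquiv.toSpanNonzeroSingleton_one K V a ha).symm]
    rw [LinearEquiv.symm_apply_apply]
    exact LinearEquiv.toSpanNonzeroSingleton_one K V b hb
  simp only [LinearEquiv.trans_apply, h0, LinearEquiv.prodCongr_apply, hf1, map_zero]
  simp [Submodule.coe_prodEquivOfIsCompl']

theorem elemab_exists_mulaut {G : Type*} [Group G] [Finite G]
    (hcomm : ∀ a b : G, a * b = b * a) {p : ℕ} (hp : p.Prime) (hpow : ∀ g : G, g ^ p = 1)
    {a b : G} (ha : a ≠ 1) (hb : b ≠ 1) : ∃ φ : MulAut G, φ a = b := by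
  letI : CommGroup G := { ‹Group G› with mul_comm := hcomm }
  haveI : Fact p.Prime := ⟨hp⟩
  letI m1 : Module (ZMod p) (Additive G) := AddCommGroup.zmodModule (by
    intro x
    show Additive.ofMul ((Additive.toMul x) ^ p) = 0
    rw [hpow]; rfl)
  haveI h1 : Module.Finite (ZMod p) (Additive G) := Module.Finite.of_finite
  have ha' : (Additive.ofMul a : Additive G) ≠ 0 := ha
  have hb' : (Additive.ofMul b : Additive G) ≠ 0 := hb
  obtain ⟨e, he⟩ := @exists_linearEquiv_map_eq (ZMod p) (Additive G) _ _ m1 h1 _ _ ha' hb'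
  exact ⟨MulEquiv.toAdditive.symm e.toAddEquiv, he⟩

open MulAction in
theorem orbit_one_quot {G : Type*} [Group G] [Finite G] {x : G} :
    (Quotient.mk'' x : MulAction.orbitRel.Quotient (MulAut G) G) = Quotient.mk'' 1 ↔ x = 1 := by
  rw [Quotient.eq'']
  constructor
  · rintro ⟨φ, hφ⟩
    simpa using hφ.symm
  · rintro rfl
    rfl

/-- For a finite group, ω(G) = 2 iff G is a nontrivial elementary abelian p-group. -/
theorem omega_eq_two_iff_elementary_abelian (G : Type*) [Group G] [Finite G] :
    Nat.card (MulAction.orbitRel.Quotient (MulAut G) G) = 2 ↔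
      (Nontrivial G ∧ (∀ a b : G, a * b = b * a) ∧
        ∃ p : ℕ, p.Prime ∧ ∀ g : G, g ^ p = 1) := by
  constructor
  · intro h
    -- nontrivial
    have hnt : Nontrivial G := by
      by_contra hns
      rw [not_nontrivial_iff_subsingleton] at hns
      haveI : Subsingleton (MulAction.orbitRel.Quotient (MulAut G) G) :=
        Quotient.instSubsingletonQuotient _
      haveI : Nonempty (MulAction.orbitRel.Quotient (MulAut G) G) := ⟨Quotient.mk'' 1⟩
      rw [Nat.card_eq_one_iff_unique.mpr ⟨⟨Subsingleton.elim⟩, this⟩] at h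
      omega
    -- transitivity on nontrivial elements
    have key : ∀ x y : G, x ≠ 1 → y ≠ 1 → ∃ φ : MulAut G, φ x = y := by
      intro x y hx hy
      obtain ⟨u, v, huv, hcov⟩ := Nat.card_eq_two_iff.mp h
      have hmem : ∀ z : MulAction.orbitRel.Quotient (MulAut G) G, z = u ∨ z = v := by
        intro z
        have : z ∈ ({u, v} : Set _) := hcov ▸ Set.mem_univ z
        simpa using this
      have hxy : (Quotient.mk'' x : MulAction.orbitRel.Quotient (MulAut G) G) =
          Quotient.mk'' y := by
        have h1 := hmem (Quotient.mk'' 1)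
        have h2 := hmem (Quotient.mk'' x)
        have h3 := hmem (Quotient.mk'' y)
        have hx1 : (Quotient.mk'' x : MulAction.orbitRel.Quotient (MulAut G) G) ≠
            Quotient.mk'' 1 := fun hc => hx (orbit_one_quot.mp hc)
        have hy1 : (Quotient.mk'' y : MulAction.orbitRel.Quotient (MulAut G) G) ≠
            Quotient.mk'' 1 := fun hc => hy (orbit_one_quot.mp hc)
        rcases h1 with h1 | h1 <;> rcases h2 with h2 | h2 <;> rcases h3 with h3 | h3 <;>
          simp_all
      rw [Quotient.eq''] at hxy
      obtain ⟨φ, hφ⟩ := hxy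
      exact ⟨φ⁻¹, by simpa using congrArg (φ⁻¹ : MulAut G) hφ.symm⟩
    refine ⟨hnt, ?_⟩
    -- find element of prime order
    obtain ⟨g, hg⟩ := exists_ne (1 : G)
    have hgo : orderOf g ≠ 1 := fun hc => hg (orderOf_eq_one_iff.mp hc)
    obtain ⟨p, hp, hpdvd⟩ := Nat.exists_prime_and_dvd hgo
    haveI : Fact p.Prime := ⟨hp⟩
    obtain ⟨h0, hh0⟩ := exists_prime_orderOf_dvd_card' p (hpdvd.trans (orderOf_dvd_natCard g))
    have hh0ne : h0 ≠ 1 := by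
      intro hc
      rw [hc, orderOf_one] at hh0
      exact hp.one_lt.ne hh0
    -- all nontrivial elements have order p
    have hord : ∀ x : G, x ≠ 1 → orderOf x = p := by
      intro x hx
      obtain ⟨φ, hφ⟩ := key h0 x hh0ne hx
      rw [← hφ]
      have := orderOf_injective φ.toMonoidHom φ.injective h0
      simpa [hh0] using this
    have hpow : ∀ x : G, x ^ p = 1 := by
      intro x
      rcases eq_or_ne x 1 with rfl | hx
      · simp
      · rw [← hord x hx]; exact pow_orderOf_eq_one x
    -- G is a p-group, center nontrivial
    have hpg : IsPGroup p G := fun x => ⟨1, by simpa using hpow x⟩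
    haveI := hpg.center_nontrivial
    obtain ⟨z, hz⟩ := exists_ne (1 : Subgroup.center G)
    have hzne : (z : G) ≠ 1 := fun hc => hz (Subtype.ext hc)
    have hcomm : ∀ a b : G, a * b = b * a := by
      intro a b
      rcases eq_or_ne a 1 with rfl | hane
      · simp
      obtain ⟨φ, hφ⟩ := key (z : G) a hzne hane
      have hzc := Subgroup.mem_center_iff.mp z.2
      rw [← hφ]
      calc φ z * b = φ z * φ (φ.symm b) := by rw [φ.apply_symm_apply]
        _ = φ ((z : G) * φ.symm b) := by rw [map_mul]
        _ = φ (φ.symm b * (z : G)) := by rw [hzc]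
        _ = b * φ z := by rw [map_mul, φ.apply_symm_apply]
    exact ⟨hcomm, p, hp, hpow⟩
  · rintro ⟨hnt, hcomm, p, hp, hpow⟩
    obtain ⟨g, hg⟩ := exists_ne (1 : G)
    rw [Nat.card_eq_two_iff]
    refine ⟨Quotient.mk'' 1, Quotient.mk'' g, fun hc => hg (orbit_one_quot.mp hc.symm), ?_⟩
    apply Set.eq_univ_of_forall
    intro z
    induction z using Quotient.inductionOn' with
    | h x =>
      rcases eq_or_ne x 1 with rfl | hx
      · exact Set.mem_insert _ _
      · refine Set.mem_insert_iff.mpr (Or.inr ?_)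
        obtain ⟨φ, hφ⟩ := elemab_exists_mulaut hcomm hp hpow hg hx
        have : (Quotient.mk'' x : MulAction.orbitRel.Quotient (MulAut G) G) =
            Quotient.mk'' g := Quotient.sound' ⟨φ, hφ⟩
        simp [this]
end

section
/- Let V be a vector space over ℚ, let B be a finite subgroup of Aut(V), and let C = C_{Aut(V)}(B) be the centralizer of B in Aut(V). Suppose the action of C on V has only finitely many orbits. If W ≤ V is an irreducible C-submodule and b ∈ B, then W^b = W. -/
/-- If the centralizer C of a finite subgroup B of Aut(V) has finitely many orbits on the
ℚ-vector space V, then every irreducible C-submodule W satisfies W^b = W for each b ∈ B. -/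
theorem irreducible_centralizer_submodule_invariant
    (V : Type*) [AddCommGroup V] [Module ℚ V]
    (B : Subgroup (V ≃ₗ[ℚ] V)) [Finite B]
    (hfin : Finite (MulAction.orbitRel.Quotient
      (Subgroup.centralizer (B : Set (V ≃ₗ[ℚ] V))) V))
    (W : Submodule ℚ V) (hW : W ≠ ⊥)
    (hWinv : ∀ c ∈ Subgroup.centralizer (B : Set (V ≃ₗ[ℚ] V)), ∀ w ∈ W, c w ∈ W)
    (hWirr : ∀ U : Submodule ℚ V, U ≤ W →
      (∀ c ∈ Subgroup.centralizer (B : Set (V ≃ₗ[ℚ] V)), ∀ u ∈ U, c u ∈ U) →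
      U = ⊥ ∨ U = W) :
    ∀ b ∈ B, W.map (b : V →ₗ[ℚ] V) = W := by
  intro b hb
  set C := Subgroup.centralizer (B : Set (V ≃ₗ[ℚ] V)) with hC
  -- commuting relation
  have hcomm : ∀ c ∈ C, ∀ v : V, c (b v) = b (c v) := by
    intro c hc v
    have := (Subgroup.mem_centralizer_iff.mp hc) b hb
    have h2 : (b * c) v = (c * b) v := by rw [this]
    exact h2.symm
  -- W' := W.map b is C-invariant
  set W' := W.map (b : V →ₗ[ℚ] V) with hW'
  have hW'inv : ∀ c ∈ C, ∀ w ∈ W', c w ∈ W' := by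
    rintro c hc _ ⟨w, hw, rfl⟩
    exact ⟨c w, hWinv c hc w hw, (hcomm c hc w).symm⟩
  -- W' is nonzero
  have hW'ne : W' ≠ ⊥ := by
    intro h
    apply hW
    rw [Submodule.eq_bot_iff] at h ⊢
    intro x hx
    have := h (b x) ⟨x, hx, rfl⟩
    simpa using congrArg b.symm this
  -- W' is irreducible
  have hW'irr : ∀ U : Submodule ℚ V, U ≤ W' →
      (∀ c ∈ C, ∀ u ∈ U, c u ∈ U) → U = ⊥ ∨ U = W' := by
    intro U hU hUinv
    have hbinv : b⁻¹ ∈ B := inv_mem hb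
    have hcomm' : ∀ c ∈ C, ∀ v : V, c (b⁻¹ v) = b⁻¹ (c v) := by
      intro c hc v
      have := (Subgroup.mem_centralizer_iff.mp hc) b⁻¹ hbinv
      have h2 : (b⁻¹ * c) v = (c * b⁻¹) v := by rw [this]
      exact h2.symm
    have hle : U.map ((b⁻¹ : V ≃ₗ[ℚ] V) : V →ₗ[ℚ] V) ≤ W := by
      rintro _ ⟨u, hu, rfl⟩
      obtain ⟨w, hw, rfl⟩ := hU hu
      have : (b⁻¹ : V ≃ₗ[ℚ] V) (b w) = w := b.symm_apply_apply w
      simpa [this] using hw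
    have hinv : ∀ c ∈ C, ∀ u ∈ U.map ((b⁻¹ : V ≃ₗ[ℚ] V) : V →ₗ[ℚ] V),
        c u ∈ U.map ((b⁻¹ : V ≃ₗ[ℚ] V) : V →ₗ[ℚ] V) := by
      rintro c hc _ ⟨u, hu, rfl⟩
      exact ⟨c u, hUinv c hc u hu, (hcomm' c hc u).symm⟩
    rcases hWirr _ hle hinv with h | h
    · left
      rw [Submodule.eq_bot_iff] at h ⊢
      intro x hx
      have := h (b⁻¹ x) ⟨x, hx, rfl⟩
      simpa using congrArg b this
    · right
      refine le_antisymm hU ?_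
      rintro _ ⟨w, hw, rfl⟩
      rw [← h] at hw
      obtain ⟨u, hu, rfl⟩ := hw
      have : (b : V ≃ₗ[ℚ] V) ((b⁻¹ : V ≃ₗ[ℚ] V) u) = u := b.apply_symm_apply u
      simpa [this] using hu
  -- suppose W' ≠ W; derive contradiction
  by_contra hne
  -- W ⊓ W' = ⊥
  have hdisj : W ⊓ W' = ⊥ := by
    have hinv : ∀ c ∈ C, ∀ u ∈ W ⊓ W', c u ∈ W ⊓ W' := by
      intro c hc u hu
      exact ⟨hWinv c hc u hu.1, hW'inv c hc u hu.2⟩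
    rcases hWirr _ inf_le_left hinv with h | h
    · exact h
    · -- then W ≤ W', so by irreducibility of W', W = W', contradiction
      have hle : W ≤ W' := by rw [← h]; exact inf_le_right
      rcases hW'irr W hle hWinv with h2 | h2
      · exact absurd h2 hW
      · exact absurd h2.symm hne
  -- pick nonzero w ∈ W
  obtain ⟨w, hwW, hw0⟩ := Submodule.exists_mem_ne_zero_of_ne_bot hW
  -- the map q ↦ orbit of (w + q • b w) is injective
  have hinj : Function.Injective
      (fun q : ℚ => (⟦w + q • b w⟧ : MulAction.orbitRel.Quotient C V)) := by
    intro q q' hqq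
    simp only [MulAction.orbitRel.Quotient] at hqq
    have hrel : (MulAction.orbitRel C V) (w + q • b w) (w + q' • b w) :=
      Quotient.eq''.mp hqq
    rw [MulAction.orbitRel_apply, MulAction.mem_orbit_iff] at hrel
    obtain ⟨⟨c, hc⟩, hcv⟩ := hrel
    have hcv' : c (w + q' • b w) = w + q • b w := hcv
    have hexp : c (w + q' • b w) = c w + q' • b (c w) := by
      rw [map_add, map_smul, hcomm c hc w]
    rw [hexp] at hcv'
    -- c w - w = q • b w - q' • b (c w) lies in W ⊓ W'
    have hmem : c w - w ∈ W ⊓ W' := by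
      constructor
      · exact sub_mem (hWinv c hc w hwW) hwW
      · have : c w - w = q • b w - q' • b (c w) := by
          have := hcv'
          abel_nf
          linear_combination (norm := abel_nf) this
        rw [this]
        have h1 : (q • b w : V) ∈ W' := Submodule.smul_mem _ _ ⟨w, hwW, rfl⟩
        have h2 : (q' • b (c w) : V) ∈ W' :=
          Submodule.smul_mem _ _ ⟨c w, hWinv c hc w hwW, rfl⟩
        exact sub_mem h1 h2
    rw [hdisj, Submodule.mem_bot, sub_eq_zero] at hmem
    -- so c w = w, hence q • b w = q' • b w
    rw [hmem] at hcv'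
    have : q' • b w = q • b w := by
      have := hcv'
      exact add_left_cancel this
    have hbw0 : (b w : V) ≠ 0 := by
      intro h
      exact hw0 (by simpa using congrArg b.symm h)
    have : (q' - q) • (b w : V) = 0 := by rw [sub_smul, this, sub_self]
    rcases smul_eq_zero.mp this with h | h
    · linarith [sub_eq_zero.mp (by exact_mod_cast h)]
    · exact absurd h hbw0
  have := Finite.of_injective _ hinj
  exact not_finite ℚ
end

section
/- Let A be an abelian group and B a finite subgroup of Aut(A), and form the semidirect product G = A ⋊ B. Assume A is a characteristic subgroup of G. Then G has finitely many automorphism orbits if and only if A has finitely many orbits under the action of the centralizer C_{Aut(A)}(B). -/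
open SemidirectProduct Subgroup MulAction

section OmegaSemiAux

variable {A : Type*} [CommGroup A] {B : Subgroup (MulAut A)}

/-- Extension of a normalizer element to an automorphism of the semidirect product. -/
private def liftAut (n : MulAut A) (hn : n ∈ (Subgroup.normalizer (B : Set (MulAut A)))) :
    MulAut (A ⋊[B.subtype] ↥B) where
  toFun g := ⟨n g.left, ⟨n * ↑g.right * n⁻¹, (Subgroup.mem_normalizer_iff.mp hn _).mp g.right.2⟩⟩
  invFun g := ⟨n⁻¹ g.left, ⟨n⁻¹ * ↑g.right * n, by
      simpa using (Subgroup.mem_normalizer_iff.mp (inv_mem hn) _).mp g.right.2⟩⟩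
  left_inv g := by
    ext
    · simp
    · simp [Subtype.ext_iff, mul_assoc]
  right_inv g := by
    ext
    · simp
    · simp [Subtype.ext_iff, mul_assoc]
  map_mul' g h := by
    ext
    · simp [mul_assoc, map_mul]
    · simp [Subtype.ext_iff, mul_assoc]

private lemma liftAut_inl (n : MulAut A) (hn : n ∈ (Subgroup.normalizer (B : Set (MulAut A)))) (a : A) :
    liftAut n hn (inl a) = inl (n a) := by
  ext
  · simp [liftAut]
  · simp [liftAut, Subtype.ext_iff]

private lemma liftAut_mk (n : MulAut A) (hn : n ∈ (Subgroup.normalizer (B : Set (MulAut A)))) (a : A) (b : ↥B) :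
    liftAut n hn ⟨a, b⟩ = ⟨n a, ⟨n * ↑b * n⁻¹, (Subgroup.mem_normalizer_iff.mp hn _).mp b.2⟩⟩ :=
  rfl

private lemma conj_inl_left (g : A ⋊[B.subtype] ↥B) (z : A) :
    (g * inl z * g⁻¹).left = (g.right : MulAut A) z := by
  simp [mul_comm, mul_left_comm]

/-- Restriction of an automorphism of the semidirect product preserving `inl.range`. -/
private def restrict (ψ : MulAut (A ⋊[B.subtype] ↥B))
    (hr : ∀ (χ : MulAut (A ⋊[B.subtype] ↥B)) (a : A), ∃ a', χ (inl a) = inl a') :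
    MulAut A where
  toFun a := (ψ (inl a)).left
  invFun a := (ψ⁻¹ (inl a)).left
  left_inv a := by
    show (ψ⁻¹ (inl ((ψ (inl a)).left))).left = a
    obtain ⟨a', h⟩ := hr ψ a
    rw [h]; simp only [left_inl]; rw [← h]; simp
  right_inv a := by
    show (ψ (inl ((ψ⁻¹ (inl a)).left))).left = a
    obtain ⟨a', h⟩ := hr ψ⁻¹ a
    rw [h]; simp only [left_inl]; rw [← h]; simp
  map_mul' a b := by
    show (ψ (inl (a * b))).left = (ψ (inl a)).left * (ψ (inl b)).left
    obtain ⟨a', ha⟩ := hr ψ a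
    obtain ⟨b', hb⟩ := hr ψ b
    rw [map_mul, map_mul ψ, ha, hb]
    simp

private lemma restrict_apply (ψ : MulAut (A ⋊[B.subtype] ↥B)) (hr) (a : A) :
    restrict ψ hr a = (ψ (inl a)).left := rfl

private lemma restrict_conj (ψ : MulAut (A ⋊[B.subtype] ↥B)) (hr) (b : ↥B) (x : A) :
    restrict ψ hr ((b : MulAut A) x) = ((ψ (inr b)).right : MulAut A) (restrict ψ hr x) := by
  obtain ⟨x', hx⟩ := hr ψ x
  have hx' : restrict ψ hr x = x' := by simp [restrict, hx]
  have h2 : (inl ((b : MulAut A) x) : A ⋊[B.subtype] ↥B) = inr b * inl x * inr b⁻¹ :=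
    inl_aut b x
  have h1 : ψ (inl ((b : MulAut A) x)) = ψ (inr b) * inl x' * (ψ (inr b))⁻¹ := by
    rw [h2]; simp [map_mul, hx]
  have h3 : restrict ψ hr ((b : MulAut A) x) = (ψ (inr b) * inl x' * (ψ (inr b))⁻¹).left := by
    rw [← h1]; rfl
  rw [h3, conj_inl_left, hx']

private lemma restrict_inv (ψ : MulAut (A ⋊[B.subtype] ↥B)) (hr) :
    (restrict ψ hr)⁻¹ = restrict ψ⁻¹ hr := rfl

private lemma restrict_conj_mem (ψ : MulAut (A ⋊[B.subtype] ↥B)) (hr) (b : ↥B) :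
    restrict ψ hr * (b : MulAut A) * (restrict ψ hr)⁻¹ ∈ B := by
  have : restrict ψ hr * (b : MulAut A) * (restrict ψ hr)⁻¹
      = ((ψ (inr b)).right : MulAut A) := by
    ext x
    have := restrict_conj ψ hr b ((restrict ψ hr)⁻¹ x)
    simpa [MulAut.mul_apply] using this
  rw [this]
  exact ((ψ (inr b)).right).2

private lemma restrict_mem_normalizer (ψ : MulAut (A ⋊[B.subtype] ↥B)) (hr) :
    restrict ψ hr ∈ (Subgroup.normalizer (B : Set (MulAut A))) := by
  rw [Subgroup.mem_normalizer_iff]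
  intro h
  constructor
  · intro hh
    exact restrict_conj_mem ψ hr ⟨h, hh⟩
  · intro hh
    have := restrict_conj_mem ψ⁻¹ hr ⟨_, hh⟩
    rw [← restrict_inv ψ hr] at this
    have h2 : (restrict ψ hr)⁻¹ * (restrict ψ hr * h * (restrict ψ hr)⁻¹) *
        ((restrict ψ hr)⁻¹)⁻¹ = h := by group
    rwa [h2] at this

/-- conjugation action of the normalizer on `B`, as permutations. -/
private def kappa (B : Subgroup (MulAut A)) : ↥(Subgroup.normalizer (B : Set (MulAut A))) →* Equiv.Perm ↥B where
  toFun n :=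
    { toFun := fun b => ⟨↑n * ↑b * (↑n)⁻¹, (Subgroup.mem_normalizer_iff.mp n.2 _).mp b.2⟩
      invFun := fun b => ⟨(↑n)⁻¹ * ↑b * ↑n, by
        simpa using (Subgroup.mem_normalizer_iff.mp (inv_mem n.2) _).mp b.2⟩
      left_inv := fun b => by ext; simp [mul_assoc]
      right_inv := fun b => by ext; simp [mul_assoc] }
  map_one' := by ext b; simp
  map_mul' m n := by ext b; simp [mul_assoc]

private lemma kappa_ker_le :
    (kappa B).ker ≤ (Subgroup.centralizer (B : Set (MulAut A))).subgroupOf (Subgroup.normalizer (B : Set (MulAut A))) := by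
  intro n hn
  rw [Subgroup.mem_subgroupOf, Subgroup.mem_centralizer_iff]
  intro h hh
  have := DFunLike.congr_fun hn ⟨h, hh⟩
  have h2 : ↑n * h * (↑n)⁻¹ = h := by
    simpa [kappa, Subtype.ext_iff] using this
  calc h * ↑n = (↑n * h * (↑n)⁻¹) * ↑n := by rw [h2]
    _ = ↑n * h := by group

private lemma centralizer_le_normalizer' {c : MulAut A}
    (hc : c ∈ Subgroup.centralizer (B : Set (MulAut A))) : c ∈ (Subgroup.normalizer (B : Set (MulAut A))) := by
  rw [Subgroup.mem_normalizer_iff]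
  intro h
  have key : ∀ hh : h ∈ B, c * h * c⁻¹ = h := fun hh => by
    have := Subgroup.mem_centralizer_iff.mp hc h hh
    rw [← this]; group
  constructor
  · intro hh; rw [key hh]; exact hh
  · intro hh
    have hcomm := Subgroup.mem_centralizer_iff.mp hc _ hh
    have h1 : c * h = c * (c * h * c⁻¹) := by rw [← hcomm]; group
    have h2 : h = c * h * c⁻¹ := mul_left_cancel h1
    rw [h2]; exact hh

end OmegaSemiAux

/-- For G = A ⋊ B with A abelian, B a finite subgroup of Aut(A), and A characteristic
in G:  ω(G) < ∞ iff A has finitely many orbits under C_{Aut(A)}(B). -/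
theorem omega_semidirect_finite_iff
    (A : Type*) [CommGroup A] (B : Subgroup (MulAut A)) [Finite B]
    (hchar : ((SemidirectProduct.inl : A →* A ⋊[B.subtype] ↥B).range).Characteristic) :
    Finite (MulAction.orbitRel.Quotient (MulAut (A ⋊[B.subtype] ↥B))
        (A ⋊[B.subtype] ↥B)) ↔
      Finite (MulAction.orbitRel.Quotient
        (Subgroup.centralizer (B : Set (MulAut A))) A) := by
  have hr : ∀ (χ : MulAut (A ⋊[B.subtype] ↥B)) (a : A), ∃ a', χ (inl a) = inl a' := by
    intro χ a
    have h1 : (inl a : A ⋊[B.subtype] ↥B) ∈ (inl : A →* A ⋊[B.subtype] ↥B).range := ⟨a, rfl⟩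
    have h2 := hchar.fixed χ
    rw [← h2, Subgroup.mem_comap] at h1
    obtain ⟨a', ha'⟩ := h1
    exact ⟨a', ha'.symm⟩
  constructor
  · intro hG
    -- Step 1: finitely many orbits of the normalizer on A
    have hμwd : ∀ a a' : A, (orbitRel ↥(Subgroup.normalizer (B : Set (MulAut A))) A) a a' →
        (Quotient.mk (orbitRel (MulAut (A ⋊[B.subtype] ↥B)) (A ⋊[B.subtype] ↥B)) (inl a)
          = Quotient.mk _ (inl a')) := by
      intro a a' haa
      obtain ⟨n, hn⟩ := MulAction.orbitRel_apply.mp haa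
      refine Quotient.sound (MulAction.orbitRel_apply.mpr ⟨liftAut ↑n n.2, ?_⟩)
      have hn' : (n : ↥(Subgroup.normalizer (B : Set (MulAut A)))) • a' = a := hn
      show liftAut (B := B) (↑n) n.2 • inl a' = inl a
      rw [MulAut.smul_def, liftAut_inl]
      exact congrArg inl hn'
    let μ : Quotient (orbitRel ↥(Subgroup.normalizer (B : Set (MulAut A))) A) →
        MulAction.orbitRel.Quotient (MulAut (A ⋊[B.subtype] ↥B)) (A ⋊[B.subtype] ↥B) :=
      Quotient.lift _ hμwd
    have hμinj : Function.Injective μ := by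
      intro x y
      refine Quotient.inductionOn₂ x y ?_
      intro a a' h
      obtain ⟨ψ, hψ⟩ := MulAction.orbitRel_apply.mp (Quotient.exact h)
      have hψ' : ψ • inl a' = inl a := hψ
      refine Quotient.sound (MulAction.orbitRel_apply.mpr
        ⟨⟨restrict ψ hr, restrict_mem_normalizer ψ hr⟩, ?_⟩)
      show (⟨restrict ψ hr, restrict_mem_normalizer ψ hr⟩ :
        ↥(Subgroup.normalizer (B : Set (MulAut A)))) • a' = a
      rw [Subgroup.smul_def, MulAut.smul_def, restrict_apply]
      exact congrArg SemidirectProduct.left hψ'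
    have hNfin : Finite (Quotient (orbitRel ↥(Subgroup.normalizer (B : Set (MulAut A))) A)) :=
      Finite.of_injective μ hμinj
    -- Step 2: surjection onto the centralizer orbit quotient
    have hKfin : Finite (↥(Subgroup.normalizer (B : Set (MulAut A))) ⧸ (kappa B).ker) :=
      Finite.of_injective _ (QuotientGroup.kerLift_injective (kappa B))
    let f : Quotient (orbitRel ↥(Subgroup.normalizer (B : Set (MulAut A))) A) × (↥(Subgroup.normalizer (B : Set (MulAut A))) ⧸ (kappa B).ker) →
        MulAction.orbitRel.Quotient (Subgroup.centralizer (B : Set (MulAut A))) A :=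
      fun p => Quotient.mk _ ((p.2.out : ↥(Subgroup.normalizer (B : Set (MulAut A)))) • (p.1.out : A))
    refine Finite.of_surjective f ?_
    intro x
    obtain ⟨a, rfl⟩ := Quotient.exists_rep x
    set t : A := (Quotient.mk (orbitRel ↥(Subgroup.normalizer (B : Set (MulAut A))) A) a).out with hht
    have ht : (orbitRel ↥(Subgroup.normalizer (B : Set (MulAut A))) A) t a :=
      @Quotient.exact _ (orbitRel ↥(Subgroup.normalizer (B : Set (MulAut A))) A) _ _
        (Quotient.out_eq (Quotient.mk (orbitRel ↥(Subgroup.normalizer (B : Set (MulAut A))) A) a))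
    obtain ⟨n, hn⟩ := MulAction.orbitRel_apply.mp ((orbitRel ↥(Subgroup.normalizer (B : Set (MulAut A))) A).symm' ht)
    set y : ↥(Subgroup.normalizer (B : Set (MulAut A))) ⧸ (kappa B).ker := QuotientGroup.mk n with hy
    set m : ↥(Subgroup.normalizer (B : Set (MulAut A))) := y.out with hm
    have hmy : (QuotientGroup.mk m : ↥(Subgroup.normalizer (B : Set (MulAut A))) ⧸ (kappa B).ker) = QuotientGroup.mk n :=
      QuotientGroup.out_eq' y
    have hc : m⁻¹ * n ∈ (kappa B).ker := QuotientGroup.eq.mp hmy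
    have hcC : ((m⁻¹ * n : ↥(Subgroup.normalizer (B : Set (MulAut A)))) : MulAut A) ∈
        Subgroup.centralizer (B : Set (MulAut A)) :=
      Subgroup.mem_subgroupOf.mp (kappa_ker_le hc)
    set c : MulAut A := ((m⁻¹ * n : ↥(Subgroup.normalizer (B : Set (MulAut A)))) : MulAut A) with hcdef
    have hcc : (m : MulAut A) * c * (m : MulAut A)⁻¹ ∈
        Subgroup.centralizer (B : Set (MulAut A)) := by
      rw [Subgroup.mem_centralizer_iff]
      intro h hh
      have hmem : ((m : MulAut A))⁻¹ * h * (m : MulAut A) ∈ B := by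
        simpa using (Subgroup.mem_normalizer_iff.mp (inv_mem m.2) h).mp hh
      have hcomm := Subgroup.mem_centralizer_iff.mp hcC _ hmem
      calc h * ((m : MulAut A) * c * (m : MulAut A)⁻¹)
          = (m : MulAut A) * (((m : MulAut A))⁻¹ * h * (m : MulAut A) * c) *
            (m : MulAut A)⁻¹ := by group
        _ = (m : MulAut A) * (c * (((m : MulAut A))⁻¹ * h * (m : MulAut A))) *
            (m : MulAut A)⁻¹ := by rw [hcomm]
        _ = ((m : MulAut A) * c * (m : MulAut A)⁻¹) * h := by group
    refine ⟨(Quotient.mk _ a, y), ?_⟩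
    show Quotient.mk _ ((y.out : ↥(Subgroup.normalizer (B : Set (MulAut A)))) • t) = Quotient.mk _ a
    refine (Quotient.sound (MulAction.orbitRel_apply.mpr ⟨⟨_, hcc⟩, ?_⟩)).symm
    show ((m : MulAut A) * c * (m : MulAut A)⁻¹) • ((m : ↥(Subgroup.normalizer (B : Set (MulAut A)))) • t) = a
    rw [Subgroup.smul_def m t, smul_smul]
    have heq : (m : MulAut A) * c * (m : MulAut A)⁻¹ * (m : MulAut A) = (n : MulAut A) := by
      rw [hcdef]
      push_cast
      group
    rw [heq, ← Subgroup.smul_def n t]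
    exact hn
  · intro hA
    let f : (MulAction.orbitRel.Quotient (Subgroup.centralizer (B : Set (MulAut A))) A) × ↥B →
        MulAction.orbitRel.Quotient (MulAut (A ⋊[B.subtype] ↥B)) (A ⋊[B.subtype] ↥B) :=
      fun p => Quotient.mk _ (⟨p.1.out, p.2⟩ : A ⋊[B.subtype] ↥B)
    refine Finite.of_surjective f ?_
    intro q
    obtain ⟨g, rfl⟩ := Quotient.exists_rep q
    set x : MulAction.orbitRel.Quotient (Subgroup.centralizer (B : Set (MulAut A))) A :=
      Quotient.mk _ g.left with hx
    have ht : (orbitRel ↥(Subgroup.centralizer (B : Set (MulAut A))) A) x.out g.left :=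
      @Quotient.exact _ (orbitRel ↥(Subgroup.centralizer (B : Set (MulAut A))) A) _ _
        (Quotient.out_eq x)
    obtain ⟨c, hc⟩ := MulAction.orbitRel_apply.mp ht
    have hc' : c • g.left = x.out := hc
    have hcinv : c⁻¹ • x.out = g.left := by
      rw [inv_smul_eq_iff]; exact hc'.symm
    have hcN : ((c⁻¹ : ↥(Subgroup.centralizer (B : Set (MulAut A)))) : MulAut A)
        ∈ (Subgroup.normalizer (B : Set (MulAut A))) := centralizer_le_normalizer' (c⁻¹).2
    refine ⟨(x, g.right), ?_⟩
    show Quotient.mk _ (⟨x.out, g.right⟩ : A ⋊[B.subtype] ↥B) = Quotient.mk _ g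
    refine (Quotient.sound (MulAction.orbitRel_apply.mpr ⟨liftAut _ hcN, ?_⟩)).symm
    show liftAut _ hcN • (⟨x.out, g.right⟩ : A ⋊[B.subtype] ↥B) = g
    rw [MulAut.smul_def, liftAut_mk]
    refine SemidirectProduct.ext ?_ ?_
    · exact hcinv
    · refine Subtype.ext ?_
      have hcomm := Subgroup.mem_centralizer_iff.mp (c⁻¹).2 _ g.right.2
      show ((c⁻¹ : ↥(Subgroup.centralizer (B : Set (MulAut A)))) : MulAut A) * ↑g.right *
        (((c⁻¹ : ↥(Subgroup.centralizer (B : Set (MulAut A)))) : MulAut A))⁻¹ = ↑g.right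
      rw [← hcomm]
      group
end

section
/- Let A be an abelian group, B a finite subgroup of Aut(A), G = A ⋊ B, and C = C_{Aut(A)}(B). Every c ∈ C extends to an automorphism of G defined by (a·b)^c = a^c·b for a ∈ A, b ∈ B (fixing B pointwise). Consequently, if A has finitely many orbits under C, then ω(G) ≤ |B| · ω_C(A). -/
/-- Every c in C = C_{Aut(A)}(B) extends to an automorphism of G = A ⋊ B fixing B
pointwise, and consequently ω(G) ≤ |B| · ω_C(A) whenever C has finitely many orbits
on A. -/
theorem centralizer_extends_and_omega_le
    (A : Type*) [CommGroup A] (B : Subgroup (MulAut A)) [Finite B] :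
    (∀ c ∈ Subgroup.centralizer (B : Set (MulAut A)),
        ∃ f : MulAut (A ⋊[B.subtype] ↥B),
          ∀ (a : A) (b : ↥B), f ⟨a, b⟩ = ⟨c a, b⟩) ∧
    (Finite (MulAction.orbitRel.Quotient
        (Subgroup.centralizer (B : Set (MulAut A))) A) →
      Nat.card (MulAction.orbitRel.Quotient (MulAut (A ⋊[B.subtype] ↥B))
          (A ⋊[B.subtype] ↥B)) ≤
        Nat.card B * Nat.card (MulAction.orbitRel.Quotient
          (Subgroup.centralizer (B : Set (MulAut A))) A)) := by
  have key : ∀ c ∈ Subgroup.centralizer (B : Set (MulAut A)),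
      ∃ f : MulAut (A ⋊[B.subtype] ↥B),
        ∀ (a : A) (b : ↥B), f ⟨a, b⟩ = ⟨c a, b⟩ := by
    intro c hc
    have comm : ∀ (b : ↥B) (a : A), c ((b : MulAut A) a) = (b : MulAut A) (c a) := by
      intro b a
      have h := hc (b : MulAut A) b.2
      have : ((b : MulAut A) * c) a = (c * (b : MulAut A)) a := by rw [h]
      simpa [MulAut.mul_apply] using this.symm
    refine ⟨{ toFun := fun g => ⟨c g.left, g.right⟩
              invFun := fun g => ⟨c⁻¹ g.left, g.right⟩
              left_inv := ?_
              right_inv := ?_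
              map_mul' := ?_ }, ?_⟩
    · intro g
      ext <;> simp
    · intro g
      ext <;> simp
    · intro g h
      ext
      · simp [SemidirectProduct.mul_left, comm]
      · simp [SemidirectProduct.mul_right]
    · intro a b
      rfl
  refine ⟨key, ?_⟩
  intro hfin
  set C := Subgroup.centralizer (B : Set (MulAut A)) with hC
  set G := A ⋊[B.subtype] ↥B with hG
  have hwd : ∀ (b : ↥B) (a a' : A), (MulAction.orbitRel ↥C A).r a a' →
      (⟦(⟨a, b⟩ : G)⟧ : MulAction.orbitRel.Quotient (MulAut G) G) = ⟦(⟨a', b⟩ : G)⟧ := by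
    intro b a a' h
    obtain ⟨⟨c, hcC⟩, hca⟩ := h
    obtain ⟨f, hf⟩ := key c hcC
    refine Quotient.sound ⟨f, ?_⟩
    have h2 : c a' = a := hca
    show f • (⟨a', b⟩ : G) = (⟨a, b⟩ : G)
    rw [MulAut.smul_def, hf a' b, h2]
  let F : MulAction.orbitRel.Quotient ↥C A × ↥B → MulAction.orbitRel.Quotient (MulAut G) G :=
    fun p => Quotient.liftOn p.1 (fun a => (⟦(⟨a, p.2⟩ : G)⟧ :
      MulAction.orbitRel.Quotient (MulAut G) G)) (fun a a' h => hwd p.2 a a' h)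
  have hF : Function.Surjective F := by
    intro q
    obtain ⟨g, rfl⟩ := Quotient.exists_rep q
    exact ⟨(⟦g.left⟧, g.right), rfl⟩
  calc Nat.card (MulAction.orbitRel.Quotient (MulAut G) G)
      ≤ Nat.card (MulAction.orbitRel.Quotient ↥C A × ↥B) :=
        Nat.card_le_card_of_surjective F hF
    _ = Nat.card ↥B * Nat.card (MulAction.orbitRel.Quotient ↥C A) := by
        rw [Nat.card_prod, mul_comm]
end

section
/- Let A be a finite-dimensional vector space over ℚ and B a finite abelian subgroup of GL(A). Then the semidirect product G = A ⋊ B has finitely many automorphism orbits. -/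
open scoped DirectSum

set_option maxHeartbeats 1600000
set_option synthInstance.maxHeartbeats 800000

-- transport a nonzero vector to another by a linear automorphism
theorem exists_linearEquiv_apply_eq {F V : Type*} [Field F] [AddCommGroup V] [Module F V]
    [FiniteDimensional F V] {x y : V} (hx : x ≠ 0) (hy : y ≠ 0) :
    ∃ e : V ≃ₗ[F] V, e x = y := by
  obtain ⟨Cx, hCx⟩ := Submodule.exists_isCompl (F ∙ x)
  obtain ⟨Cy, hCy⟩ := Submodule.exists_isCompl (F ∙ y)
  have hdim : Module.finrank F Cx = Module.finrank F Cy := by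
    have h1 := Submodule.finrank_add_eq_of_isCompl hCx
    have h2 := Submodule.finrank_add_eq_of_isCompl hCy
    have e1 : Module.finrank F (F ∙ x) = 1 := finrank_span_singleton hx
    have e2 : Module.finrank F (F ∙ y) = 1 := finrank_span_singleton hy
    omega
  let eC : Cx ≃ₗ[F] Cy := LinearEquiv.ofFinrankEq _ _ hdim
  let eS : (F ∙ x) ≃ₗ[F] (F ∙ y) :=
    (LinearEquiv.toSpanNonzeroSingleton F V x hx).symm.trans
      (LinearEquiv.toSpanNonzeroSingleton F V y hy)
  let e : V ≃ₗ[F] V :=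
    ((Submodule.prodEquivOfIsCompl _ _ hCx).symm.trans (eS.prodCongr eC)).trans
      (Submodule.prodEquivOfIsCompl _ _ hCy)
  refine ⟨e, ?_⟩
  have hx1 : (Submodule.prodEquivOfIsCompl _ _ hCx).symm x
      = (⟨x, Submodule.mem_span_singleton_self x⟩, 0) := by
    apply (Submodule.prodEquivOfIsCompl _ _ hCx).injective
    simp [Submodule.coe_prodEquivOfIsCompl', Submodule.projection_add_projection_eq_self]
  have hxs : eS ⟨x, Submodule.mem_span_singleton_self x⟩
      = ⟨y, Submodule.mem_span_singleton_self y⟩ := by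
    simp only [eS, LinearEquiv.trans_apply]
    have : (LinearEquiv.toSpanNonzeroSingleton F V x hx) 1
        = ⟨x, Submodule.mem_span_singleton_self x⟩ := by
      apply Subtype.ext
      simp [LinearEquiv.toSpanNonzeroSingleton]
    rw [← this, LinearEquiv.symm_apply_apply]
    apply Subtype.ext
    simp [LinearEquiv.toSpanNonzeroSingleton]
  show (Submodule.prodEquivOfIsCompl _ _ hCy) ((eS.prodCongr eC) ((Submodule.prodEquivOfIsCompl _ _ hCx).symm x)) = y
  rw [hx1]
  have : (eS.prodCongr eC) (⟨x, Submodule.mem_span_singleton_self x⟩, 0)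
      = (⟨y, Submodule.mem_span_singleton_self y⟩, 0) := by
    simp [LinearEquiv.prodCongr_apply, hxs]
  rw [this]
  simp [Submodule.coe_prodEquivOfIsCompl']

universe u v
theorem core_orbit_finite {R₀ : Type u} {M : Type v} [CommRing R₀] [IsArtinianRing R₀]
    [AddCommGroup M] [Module R₀ M] [IsNoetherian R₀ M] [IsSemisimpleModule R₀ M] :
    ∃ (ι : Type u) (_ : Finite ι) (rep : ι → M),
      ∀ x : M, ∃ (i : ι) (e : M ≃ₗ[R₀] M), e (rep i) = x := by
  classical
  -- finitely many maximal ideals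
  have hfin : {I : Ideal R₀ | I.IsMaximal}.Finite := IsArtinianRing.setOfPred_isMaximal_finite R₀
  set T : Finset (Ideal R₀) := hfin.toFinset with hT
  have hTmem : ∀ I : Ideal R₀, I ∈ T ↔ I.IsMaximal := by
    intro I; simp [hT, Set.Finite.mem_toFinset]
  -- pairwise coprime
  have hp : (T : Set (Ideal R₀)).Pairwise fun I J => I ⊔ J = ⊤ := by
    intro I hI J hJ hIJ
    have hIm : I.IsMaximal := (hTmem I).mp (by simpa using hI)
    have hJm : J.IsMaximal := (hTmem J).mp (by simpa using hJ)
    exact Ideal.IsMaximal.coprime_of_ne hIm hJm hIJ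
  -- torsion by the intersection of maximal ideals
  have hM : Module.IsTorsionBySet R₀ M ((⨅ I ∈ T, I : Ideal R₀) : Set R₀) := by
    intro x r
    -- show r • x = 0 for all x
    have hr : (r : R₀) ∈ (⨅ I ∈ T, I : Ideal R₀) := r.2
    have : x ∈ (⊤ : Submodule R₀ M) := trivial
    rw [← IsSemisimpleModule.sSup_simples_eq_top R₀ M] at this
    -- the set of y with r • y = 0 is a submodule containing all simple submodules
    have hle : sSup {m : Submodule R₀ M | IsSimpleModule R₀ m}
        ≤ LinearMap.ker (LinearMap.lsmul R₀ M (r : R₀)) := by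
      apply sSup_le
      rintro m hm
      haveI : IsSimpleModule R₀ m := hm
      intro y hy
      have hann : (Module.annihilator R₀ m).IsMaximal :=
        IsSimpleModule.annihilator_isMaximal
      have hrann : (r : R₀) ∈ Module.annihilator R₀ m := by
        have : (⨅ I ∈ T, I : Ideal R₀) ≤ Module.annihilator R₀ m := by
          apply biInf_le
          exact (hTmem _).mpr hann
        exact this hr
      have := Module.mem_annihilator.mp hrann ⟨y, hy⟩
      have : (r : R₀) • y = 0 := by
        simpa [Submodule.coe_smul] using congrArg Subtype.val this
      simpa [LinearMap.mem_ker, LinearMap.lsmul_apply] using this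
    have := hle this
    simpa [LinearMap.mem_ker, LinearMap.lsmul_apply] using this
  have internal : DirectSum.IsInternal
      (fun i : T => Submodule.torsionBySet R₀ M ((i : Ideal R₀) : Set R₀)) :=
    Submodule.torsionBySet_isInternal (p := fun I : Ideal R₀ => I) (S := T) hp hM
  -- notation
  set Mi : T → Submodule R₀ M :=
    (fun i : T => Submodule.torsionBySet R₀ M ((i : Ideal R₀) : Set R₀)) with hMi
  have D : (⨁ i : T, Mi i) ≃ₗ[R₀] M :=
    LinearEquiv.ofBijective (DirectSum.coeLinearMap Mi) internal
  have P : (⨁ i : T, Mi i) ≃ₗ[R₀] (∀ i : T, Mi i) :=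
    DirectSum.linearEquivFunOnFintype R₀ T (fun i => Mi i)
  -- choose a nonzero vector in each nonzero component
  classical
  set v : ∀ i : T, Mi i :=
    (fun i => if h : ∃ w : Mi i, w ≠ 0 then h.choose else 0) with hv0
  -- per-component transitivity
  have key : ∀ (i : T) (u w : Mi i), (u = 0 ↔ w = 0) → ∃ g : Mi i ≃ₗ[R₀] Mi i, g u = w := by
    intro i u w huw
    by_cases hu : u = 0
    · exact ⟨LinearEquiv.refl _ _, by rw [hu, map_zero, (huw.mp hu).symm]⟩
    · have hw : w ≠ 0 := fun h => hu (huw.mpr h)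
      haveI hmax : (i : Ideal R₀).IsMaximal := (hTmem _).mp i.2
      letI : Field (R₀ ⧸ (i : Ideal R₀)) := Ideal.Quotient.field _
      haveI : Module.Finite R₀ (Mi i) := Module.Finite.iff_fg.mpr (IsNoetherian.noetherian _)
      haveI : Module.Finite (R₀ ⧸ (i : Ideal R₀)) (Mi i) :=
        Module.Finite.of_restrictScalars_finite R₀ _ _
      obtain ⟨g', hg'⟩ := exists_linearEquiv_apply_eq
        (F := R₀ ⧸ (i : Ideal R₀)) (V := Mi i) hu hw
      exact ⟨g'.restrictScalars R₀, hg'⟩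
  classical
  refine ⟨(T → Prop), inferInstance,
    fun s => D (P.symm (fun i => if s i then v i else 0)), fun x => ?_⟩
  set c : ∀ i : T, Mi i := P (D.symm x) with hc
  refine ⟨(fun i => c i ≠ 0), ?_⟩
  have hcomp : ∀ i : T, ∃ g : Mi i ≃ₗ[R₀] Mi i,
      g (if c i ≠ 0 then v i else 0) = c i := by
    intro i
    apply key
    by_cases h : c i = 0
    · simp [h]
    · have hex : ∃ w : Mi i, w ≠ 0 := ⟨c i, h⟩
      have hv : v i ≠ 0 := by
        rw [hv0]
        simpa only [dif_pos hex] using hex.choose_spec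
      simp [h, hv]
  choose g hg using hcomp
  refine ⟨(D.symm.trans (P.trans ((LinearEquiv.piCongrRight g).trans (P.symm.trans D)))), ?_⟩
  have hgc : (LinearEquiv.piCongrRight g) (fun i => if c i ≠ 0 then v i else 0) = c :=
    funext fun i => hg i
  have h2 : D (P.symm c) = x := by rw [hc]; simp
  have h3 := (congrArg (fun w => D (P.symm w)) hgc).trans h2
  simp only [LinearEquiv.trans_apply, LinearEquiv.symm_apply_apply,
    LinearEquiv.apply_symm_apply]
  convert h3 using 4
  congr!

theorem maschke_aux {A : Type*} [AddCommGroup A] [Module ℚ A]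
    (B : Subgroup (A ≃ₗ[ℚ] A)) [Finite B] (p : Submodule ℚ A)
    (hp : ∀ b ∈ B, ∀ x ∈ p, b x ∈ p) :
    ∃ f : A →ₗ[ℚ] A, (∀ x, f x ∈ p) ∧ (∀ x ∈ p, f x = x) ∧
      (∀ b ∈ B, ∀ x, f (b x) = b (f x)) := by
  classical
  haveI : Fintype ↥B := Fintype.ofFinite _
  obtain ⟨q, hq⟩ := Submodule.exists_isCompl p
  set π₀ : A →ₗ[ℚ] A := p.subtype.comp (p.linearProjOfIsCompl q hq) with hπ₀
  have π₀_mem : ∀ x, π₀ x ∈ p := fun x => (p.linearProjOfIsCompl q hq x).2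
  have π₀_id : ∀ x ∈ p, π₀ x = x := by
    intro x hx
    simp [hπ₀]
    exact congrArg Subtype.val (Submodule.projectionOnto_apply_of_mem_left hq hx)
  set n : ℚ := (Fintype.card ↥B : ℚ) with hn
  have hn0 : n ≠ 0 := by
    simp [hn]
  set f : A →ₗ[ℚ] A := n⁻¹ • ∑ b : ↥B,
    ((((b : A ≃ₗ[ℚ] A)).symm.toLinearMap.comp π₀).comp (b : A ≃ₗ[ℚ] A).toLinearMap) with hf
  have hfx : ∀ x, f x = n⁻¹ • ∑ b : ↥B,
      (b : A ≃ₗ[ℚ] A).symm (π₀ ((b : A ≃ₗ[ℚ] A) x)) := by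
    intro x
    simp [hf, LinearMap.sum_apply]
  refine ⟨f, ?_, ?_, ?_⟩
  · intro x
    rw [hfx]
    refine Submodule.smul_mem _ _ (Submodule.sum_mem _ fun b _ => ?_)
    have h1 : π₀ ((b : A ≃ₗ[ℚ] A) x) ∈ p := π₀_mem _
    have := hp (↑b⁻¹) b⁻¹.2 _ h1
    simpa using this
  · intro x hx
    rw [hfx]
    have : ∀ b : ↥B, (b : A ≃ₗ[ℚ] A).symm (π₀ ((b : A ≃ₗ[ℚ] A) x)) = x := by
      intro b
      rw [π₀_id _ (hp ↑b b.2 x hx)]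
      exact (b : A ≃ₗ[ℚ] A).symm_apply_apply x
    rw [Finset.sum_congr rfl fun b _ => this b, Finset.sum_const, Finset.card_univ,
      ← Nat.cast_smul_eq_nsmul ℚ, smul_smul, inv_mul_cancel₀ hn0, one_smul]
  · intro c hc x
    rw [hfx, hfx, Finset.smul_sum, Finset.smul_sum, map_sum]
    simp only [map_smul]
    refine Fintype.sum_equiv (Equiv.mulRight (⟨c, hc⟩ : ↥B)) _ _ ?_
    intro b
    simp only [Equiv.coe_mulRight]
    have h1 : ((↑(b * ⟨c, hc⟩) : A ≃ₗ[ℚ] A)) x = (b : A ≃ₗ[ℚ] A) (c x) := rfl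
    have h2 : ∀ y, ((↑(b * ⟨c, hc⟩) : A ≃ₗ[ℚ] A)).symm y
        = c.symm ((b : A ≃ₗ[ℚ] A).symm y) := fun y => rfl
    rw [h1, h2]
    rw [LinearEquiv.apply_symm_apply]


/-- An automorphism of the semidirect product from a linear automorphism of `A`
commuting with the `B`-action. -/
def semidirectAutOfLinear {A : Type*} [AddCommGroup A] [Module ℚ A]
    (B : Subgroup (A ≃ₗ[ℚ] A)) (φ : ↥B →* MulAut (Multiplicative A))
    (hφ : ∀ (b : ↥B) (a : A),
      φ b (Multiplicative.ofAdd a) = Multiplicative.ofAdd ((b : A ≃ₗ[ℚ] A) a))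
    (e : A ≃ₗ[ℚ] A)
    (hcomm : ∀ (b : ↥B) (x : A), e ((b : A ≃ₗ[ℚ] A) x) = (b : A ≃ₗ[ℚ] A) (e x)) :
    MulAut (Multiplicative A ⋊[φ] ↥B) where
  toFun g := ⟨Multiplicative.ofAdd (e g.left.toAdd), g.right⟩
  invFun g := ⟨Multiplicative.ofAdd (e.symm g.left.toAdd), g.right⟩
  left_inv g := by
    ext
    · simp
    · rfl
  right_inv g := by
    ext
    · simp
    · rfl
  map_mul' g h := by
    ext
    · show Multiplicative.ofAdd (e ((g * h).left.toAdd))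
        = (Multiplicative.ofAdd (e g.left.toAdd)) * (φ g.right (Multiplicative.ofAdd (e h.left.toAdd)))
      rw [SemidirectProduct.mul_left, hφ]
      have h1 : (g.left * φ g.right h.left).toAdd
          = g.left.toAdd + (φ g.right h.left).toAdd := rfl
      have h2 : φ g.right h.left
          = Multiplicative.ofAdd ((g.right : A ≃ₗ[ℚ] A) h.left.toAdd) := by
        rw [← hφ]
        congr 1
      rw [h1, h2]
      have : (Multiplicative.ofAdd ((g.right : A ≃ₗ[ℚ] A) h.left.toAdd)).toAdd
          = (g.right : A ≃ₗ[ℚ] A) h.left.toAdd := rfl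
      rw [this, map_add, hcomm]
      rfl
    · rfl


/-- If A is a finite-dimensional ℚ-vector space and B a finite abelian subgroup of GL(A),
then the semidirect product G = A ⋊ B has finitely many automorphism orbits.
The action is encoded by any φ agreeing with the natural linear action of B on A. -/
theorem omega_semidirect_finite_of_abelian
    (A : Type*) [AddCommGroup A] [Module ℚ A] [FiniteDimensional ℚ A]
    (B : Subgroup (A ≃ₗ[ℚ] A)) [Finite B]
    (hab : ∀ b₁ ∈ B, ∀ b₂ ∈ B, b₁ * b₂ = b₂ * b₁)
    (φ : ↥B →* MulAut (Multiplicative A))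
    (hφ : ∀ (b : ↥B) (a : A),
      φ b (Multiplicative.ofAdd a) = Multiplicative.ofAdd ((b : A ≃ₗ[ℚ] A) a)) :
    Finite (MulAction.orbitRel.Quotient
      (MulAut (Multiplicative A ⋊[φ] ↥B)) (Multiplicative A ⋊[φ] ↥B)) := by
  classical
  set S : Set (Module.End ℚ A) := (fun b : A ≃ₗ[ℚ] A => (b : Module.End ℚ A)) '' B with hS
  set R : Subalgebra ℚ (Module.End ℚ A) := Algebra.adjoin ℚ S with hR
  letI iM : Module ↥R A := inferInstance
  haveI iFD : FiniteDimensional ℚ ↥R := FiniteDimensional.finiteDimensional_subalgebra _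
  haveI iNoeth : IsNoetherian ↥R A := isNoetherian_of_tower ℚ (by infer_instance)
  haveI iAR : IsArtinianRing ↥R := isArtinian_of_tower ℚ (inferInstance : IsArtinian ℚ ↥R)
  -- the smul of R on A is application
  have hsmul : ∀ (r : ↥R) (x : A), r • x = (r : Module.End ℚ A) x := fun r x => rfl
  -- scalar multiplication by a rational, as an element of R
  have hQmem : ∀ q : ℚ, (q • (1 : Module.End ℚ A)) ∈ R := fun q =>
    R.smul_mem R.one_mem q
  have hQsmul : ∀ (q : ℚ) (x : A), (q • (1 : Module.End ℚ A)) x = q • x := fun q x => rfl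
  -- membership of B-elements in R
  have hBmem : ∀ b : ↥B, ((b : A ≃ₗ[ℚ] A) : Module.End ℚ A) ∈ R := fun b =>
    Algebra.subset_adjoin ⟨(b : A ≃ₗ[ℚ] A), b.2, rfl⟩
  -- semisimplicity of A as an R-module, via Maschke averaging
  haveI iSS : IsSemisimpleModule ↥R A := by
    refine (isSemisimpleModule_iff _ _).mpr ⟨?_⟩
    intro q
    set p : Submodule ℚ A :=
      { carrier := q
        add_mem' := fun hx hy => q.add_mem hx hy
        zero_mem' := q.zero_mem
        smul_mem' := fun c x hx => by
          exact q.smul_mem (⟨c • (1 : Module.End ℚ A), hQmem c⟩ : ↥R) hx } with hpdef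
    have hpB : ∀ b ∈ B, ∀ x ∈ p, b x ∈ p := by
      intro b hb x hx
      exact q.smul_mem (⟨((b : A ≃ₗ[ℚ] A) : Module.End ℚ A), hBmem ⟨b, hb⟩⟩ : ↥R) hx
    obtain ⟨f, hf1, hf2, hf3⟩ := maschke_aux B p hpB
    -- f commutes with every element of R
    have key : ∀ e ∈ Algebra.adjoin ℚ S, ∀ x, f (e x) = e (f x) := by
      intro e he
      induction he using Algebra.adjoin_induction with
      | mem e he =>
        obtain ⟨b, hb, rfl⟩ := he
        exact fun x => hf3 b hb x
      | algebraMap c =>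
        intro x
        have h1 : (algebraMap ℚ (Module.End ℚ A) c) x = c • x := rfl
        have h2 : (algebraMap ℚ (Module.End ℚ A) c) (f x) = c • f x := rfl
        rw [h1, h2, map_smul]
      | add e₁ e₂ h₁ h₂ ih₁ ih₂ =>
        intro x
        have hx1 : (e₁ + e₂) x = e₁ x + e₂ x := rfl
        have hx2 : (e₁ + e₂) (f x) = e₁ (f x) + e₂ (f x) := rfl
        rw [hx1, hx2, map_add, ih₁ x, ih₂ x]
      | mul e₁ e₂ h₁ h₂ ih₁ ih₂ =>
        intro x
        have hx1 : (e₁ * e₂) x = e₁ (e₂ x) := rfl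
        have hx2 : (e₁ * e₂) (f x) = e₁ (e₂ (f x)) := rfl
        rw [hx1, hx2, ih₁ (e₂ x), ih₂ x]
    set f' : A →ₗ[↥R] A :=
      { toFun := f
        map_add' := f.map_add
        map_smul' := fun r x => by exact key (r : Module.End ℚ A) r.2 x } with hf'def
    have hrange : ∀ x, f' x ∈ q := fun x => hf1 x
    set π : A →ₗ[↥R] q := LinearMap.codRestrict q f' hrange with hπdef
    have hproj : ∀ x : q, π x = x := by
      intro x
      apply Subtype.ext
      exact hf2 x.1 x.2
    exact ⟨LinearMap.ker π, LinearMap.isCompl_of_proj hproj⟩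
  -- now introduce commutativity and apply the core classification
  letI iCR : CommRing ↥R := Algebra.adjoinCommRingOfComm ℚ (by
    rintro a ⟨b₁, hb₁, rfl⟩ b ⟨b₂, hb₂, rfl⟩
    have := hab b₁ hb₁ b₂ hb₂
    ext v
    simpa [Module.End.mul_apply] using congrArg (fun (e : A ≃ₗ[ℚ] A) => e v) this)
  obtain ⟨ι, hι, rep, hrep⟩ := @core_orbit_finite ↥R A iCR iAR _ iM iNoeth iSS
  -- build the surjection onto the orbit quotient
  haveI : Finite ι := hι
  let G := Multiplicative A ⋊[φ] ↥B
  let F : ι × ↥B → MulAction.orbitRel.Quotient (MulAut G) G := fun ib =>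
    Quotient.mk'' ⟨Multiplicative.ofAdd (rep ib.1), ib.2⟩
  apply Finite.of_surjective F
  intro z
  induction z using Quotient.inductionOn' with
  | h x =>
  obtain ⟨i, e', he'⟩ := hrep x.left.toAdd
  -- turn e' into a ℚ-linear automorphism commuting with B
  have hqlin : ∀ (c : ℚ) (y : A), e' (c • y) = c • e' y := by
    intro c y
    have h1 := map_smul e' (⟨c • (1 : Module.End ℚ A), hQmem c⟩ : ↥R) y
    exact h1
  have hcommE : ∀ (b : ↥B) (y : A), e' ((b : A ≃ₗ[ℚ] A) y) = (b : A ≃ₗ[ℚ] A) (e' y) := by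
    intro b y
    have h1 := map_smul e' (⟨((b : A ≃ₗ[ℚ] A) : Module.End ℚ A), hBmem b⟩ : ↥R) y
    exact h1
  set e : A ≃ₗ[ℚ] A :=
    { toFun := e'
      invFun := e'.symm
      left_inv := e'.left_inv
      right_inv := e'.right_inv
      map_add' := e'.map_add
      map_smul' := hqlin } with hedef
  have hcomm : ∀ (b : ↥B) (y : A), e ((b : A ≃ₗ[ℚ] A) y) = (b : A ≃ₗ[ℚ] A) (e y) :=
    fun b y => hcommE b y
  refine ⟨⟨i, x.right⟩, ?_⟩
  symm
  apply Quotient.sound'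
  rw [MulAction.orbitRel_apply, MulAction.mem_orbit_iff]
  refine ⟨semidirectAutOfLinear B φ hφ e hcomm, ?_⟩
  show (semidirectAutOfLinear B φ hφ e hcomm) ⟨Multiplicative.ofAdd (rep i), x.right⟩ = x
  have hx : e ((Multiplicative.ofAdd (rep i)).toAdd) = x.left.toAdd := he'
  ext
  · show Multiplicative.ofAdd (e ((Multiplicative.ofAdd (rep i)).toAdd)) = x.left
    rw [hx]
    rfl
  · rfl
end

section
/- Let G be a torsion-free group and H a finite subgroup of Aut(G). Suppose a subgroup N of H stabilizes a normal H-invariant series G = G_1 > G_2 > ⋯ > G_t > G_{t+1} = 1, meaning every element of N acts trivially on each quotient G_i/G_{i+1}. Then N = 1. -/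
/-- If a subgroup N of a finite subgroup H of Aut(G), G torsion-free, stabilizes a
normal H-invariant series G = f 0 > f 1 > ⋯ > f t = 1, then N = 1. -/
theorem stabilizer_of_series_trivial
    (G : Type*) [Group G] (hTF : ∀ g : G, g ≠ 1 → ¬IsOfFinOrder g)
    (H : Subgroup (MulAut G)) [Finite H]
    (N : Subgroup (MulAut G)) (hNH : N ≤ H)
    (t : ℕ) (f : ℕ → Subgroup G)
    (h0 : f 0 = ⊤) (hlast : f t = ⊥)
    (hnorm : ∀ i, (f i).Normal)
    (hstrict : ∀ i < t, f (i + 1) < f i)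
    (hinv : ∀ x ∈ H, ∀ i, ∀ g ∈ f i, x g ∈ f i)
    (hstab : ∀ x ∈ N, ∀ i < t, ∀ g ∈ f i, x g * g⁻¹ ∈ f (i + 1)) :
    N = ⊥ := by
  rw [eq_bot_iff]
  intro x hx
  have hxH : x ∈ H := hNH hx
  have hfin : IsOfFinOrder x := by
    have h1 : IsOfFinOrder (⟨x, hxH⟩ : H) := isOfFinOrder_of_finite _
    obtain ⟨m, hm, hme⟩ := isOfFinOrder_iff_pow_eq_one.mp h1
    refine isOfFinOrder_iff_pow_eq_one.mpr ⟨m, hm, ?_⟩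
    have := congrArg (Subgroup.subtype H) hme
    simpa using this
  set n := orderOf x with hn
  have hnpos : 0 < n := hfin.orderOf_pos
  have key : ∀ k, ∀ g ∈ f (t - k), x g = g := by
    intro k
    induction k with
    | zero =>
      intro g hg
      simp only [Nat.sub_zero, hlast, Subgroup.mem_bot] at hg
      simp [hg]
    | succ k ih =>
      rcases le_or_gt t k with hk | hk
      · have heq : t - (k + 1) = t - k := by omega
        rw [heq]; exact ih
      · intro g hg
        have hit : t - (k + 1) < t := by omega
        have hi1 : t - (k + 1) + 1 = t - k := by omega
        have hc : x g * g⁻¹ ∈ f (t - k) := by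
          have := hstab x hx (t - (k + 1)) hit g hg
          rwa [hi1] at this
        set c := x g * g⁻¹ with hcdef
        have hxc : x c = c := ih c hc
        have hpow : ∀ m : ℕ, (x ^ m) g = c ^ m * g := by
          intro m
          induction m with
          | zero => simp
          | succ m ihm =>
            have h1 : (x ^ (m + 1)) g = x ((x ^ m) g) := by
              rw [pow_succ']; rfl
            have hxg : x g = c * g := (inv_mul_cancel_right (x g) g).symm
            rw [h1, ihm, map_mul, map_pow, hxc, hxg, pow_succ]
            group
        have hcn : c ^ n = 1 := by
          have := hpow n
          rw [hn, pow_orderOf_eq_one x] at this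
          simp only [MulAut.one_apply] at this
          exact mul_right_cancel (by rw [← this, one_mul])
        have hc1 : c = 1 := by
          by_contra hne
          exact hTF c hne (isOfFinOrder_iff_pow_eq_one.mpr ⟨n, hnpos, hcn⟩)
        have : x g * g⁻¹ = 1 := hc1
        calc x g = x g * g⁻¹ * g := by group
          _ = g := by rw [this, one_mul]
  have hx1 : x = 1 := by
    ext g
    have : g ∈ f (t - t) := by
      rw [Nat.sub_self, h0]; trivial
    simpa using key t g this
  simp [hx1, Subgroup.one_mem]
end

section
/- Let G be a nilpotent group with finitely many automorphism orbits. Then G = K × Tor(G), where K is a torsion-free radicable subgroup of G and Tor(G) is the set of torsion elements of G. -/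
open Subgroup

universe u

section UniqueRoots

variable {G : Type u} [Group G]

/-- commutator congruence: if `x ∈ A`, commutators of `A` land in `B`,
commutators of `B` land in `C`, then `⁅x^m,g⁆ ≡ ⁅x,g⁆^m mod C`. -/
lemma comm_pow_congr {A B C : Subgroup G}
    (hAB : ∀ a ∈ A, ∀ y : G, a * y * a⁻¹ * y⁻¹ ∈ B)
    (hBC : ∀ b ∈ B, ∀ y : G, b * y * b⁻¹ * y⁻¹ ∈ C)
    {x : G} (hx : x ∈ A) (g : G) :
    ∀ m : ℕ, (x ^ m * g * (x ^ m)⁻¹ * g⁻¹) * ((x * g * x⁻¹ * g⁻¹) ^ m)⁻¹ ∈ C := by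
  intro m
  induction m with
  | zero => simpa using C.one_mem
  | succ m ih =>
    set c := x * g * x⁻¹ * g⁻¹ with hc
    set u := x ^ m * g * (x ^ m)⁻¹ * g⁻¹ with hu
    -- u ∈ B
    have hub : u ∈ B := hAB _ (pow_mem hx m) g
    -- ⁅x, u⁆ ∈ C
    have hxu : x * u * x⁻¹ * u⁻¹ ∈ C := by
      have h1 : u * x * u⁻¹ * x⁻¹ ∈ C := hBC _ hub x
      have : (u * x * u⁻¹ * x⁻¹)⁻¹ = x * u * x⁻¹ * u⁻¹ := by group
      exact this ▸ C.inv_mem h1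
    -- w := u * (c^m)⁻¹ ∈ C  (IH)
    have hw : u * (c ^ m)⁻¹ ∈ C := ih
    -- key identity: x^(m+1) commutator decomposition
    have hid : x ^ (m + 1) * g * (x ^ (m + 1))⁻¹ * g⁻¹
        = (x * u * x⁻¹ * u⁻¹) * (u * (c ^ m)⁻¹) * (c ^ m * c) := by
      simp only [hu, hc]
      rw [pow_succ x m]
      group
    rw [hid]
    have : c ^ m * c = c ^ (m + 1) := by rw [pow_succ]
    rw [this]
    have hmem : (x * u * x⁻¹ * u⁻¹) * (u * (c ^ m)⁻¹) ∈ C := C.mul_mem hxu hw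
    -- (a * b) * (b)⁻¹ form
    have : ((x * u * x⁻¹ * u⁻¹) * (u * (c ^ m)⁻¹) * c ^ (m+1)) * (c ^ (m+1))⁻¹
        = (x * u * x⁻¹ * u⁻¹) * (u * (c ^ m)⁻¹) := by group
    rw [this]
    exact hmem

variable (htf : ∀ x : G, ∀ k : ℕ, 0 < k → x ^ k = 1 → x = 1)

/-- descend through the upper central series using torsion-freeness -/
lemma uc_pow_descend (htf : ∀ x : G, ∀ k : ℕ, 0 < k → x ^ k = 1 → x = 1) :
    ∀ (i : ℕ) (x : G) (m : ℕ), 0 < m → x ∈ Subgroup.upperCentralSeries G (i + 1) →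
      x ^ m ∈ Subgroup.upperCentralSeries G i → x ∈ Subgroup.upperCentralSeries G i := by
  intro i
  induction i with
  | zero =>
    intro x m hm _ hxm
    rw [Subgroup.upperCentralSeries_zero, Subgroup.mem_bot] at hxm ⊢
    exact htf x m hm hxm
  | succ i ih =>
    intro x m hm hx hxm
    rw [Subgroup.mem_upperCentralSeries_succ_iff]
    intro g
    set c := x * g * x⁻¹ * g⁻¹ with hcdef
    have hc1 : c ∈ Subgroup.upperCentralSeries G (i + 1) :=
      Subgroup.mem_upperCentralSeries_succ_iff.mp hx g
    have hcong := comm_pow_congr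
      (A := Subgroup.upperCentralSeries G (i + 2)) (B := Subgroup.upperCentralSeries G (i + 1))
      (C := Subgroup.upperCentralSeries G i)
      (fun a ha y => Subgroup.mem_upperCentralSeries_succ_iff.mp ha y)
      (fun b hb y => Subgroup.mem_upperCentralSeries_succ_iff.mp hb y)
      hx g m
    have hxmg : x ^ m * g * (x ^ m)⁻¹ * g⁻¹ ∈ Subgroup.upperCentralSeries G i :=
      Subgroup.mem_upperCentralSeries_succ_iff.mp hxm g
    have hcm : c ^ m ∈ Subgroup.upperCentralSeries G i := by
      have := (Subgroup.upperCentralSeries G i).mul_mem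
        ((Subgroup.upperCentralSeries G i).inv_mem hcong) hxmg
      have heq : ((x ^ m * g * (x ^ m)⁻¹ * g⁻¹) * (c ^ m)⁻¹)⁻¹ *
          (x ^ m * g * (x ^ m)⁻¹ * g⁻¹) = c ^ m := by group
      rwa [heq] at this
    exact ih c m hm hc1 hcm

/-- in a torsion-free nilpotent group, if a power is central then so is the element -/
lemma central_of_pow_central [Group.IsNilpotent G]
    (htf : ∀ x : G, ∀ k : ℕ, 0 < k → x ^ k = 1 → x = 1)
    {x : G} {m : ℕ} (hm : 0 < m) (hx : x ^ m ∈ Subgroup.center G) :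
    x ∈ Subgroup.center G := by
  obtain ⟨k, hk⟩ := Group.IsNilpotent.nilpotent G
  have key : ∀ (i : ℕ) (y : G), y ∈ Subgroup.upperCentralSeries G (i + 1) →
      y ^ m ∈ Subgroup.center G → y ∈ Subgroup.center G := by
    intro i
    induction i with
    | zero => intro y hy _; rwa [Subgroup.upperCentralSeries_one] at hy
    | succ i ih =>
      intro y hy hym
      have h1 : y ^ m ∈ Subgroup.upperCentralSeries G (i + 1) := by
        have : Subgroup.upperCentralSeries G 1 ≤ Subgroup.upperCentralSeries G (i + 1) :=
          Subgroup.upperCentralSeries_mono G (by omega)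
        exact this (by rwa [Subgroup.upperCentralSeries_one])
      exact ih y (uc_pow_descend htf (i + 1) y m hm hy h1) hym
  have hxtop : x ∈ Subgroup.upperCentralSeries G (k + 1) := by
    have : Subgroup.upperCentralSeries G k ≤ Subgroup.upperCentralSeries G (k + 1) :=
      Subgroup.upperCentralSeries_mono G (by omega)
    exact this (hk ▸ Subgroup.mem_top x)
  exact key k x hxtop hx

/-- commute isolation in torsion-free nilpotent groups -/
lemma commute_of_pow_commute [Group.IsNilpotent G]
    (htf : ∀ x : G, ∀ k : ℕ, 0 < k → x ^ k = 1 → x = 1)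
    {x g : G} {m : ℕ} (hm : 0 < m) (h : Commute (x ^ m) g) : Commute x g := by
  set C := Subgroup.centralizer ({x ^ m} : Set G) with hC
  have hxC : x ∈ C := by
    rw [hC, Subgroup.mem_centralizer_iff]
    rintro y hy
    rw [Set.mem_singleton_iff] at hy
    subst hy
    exact (Commute.pow_self x m).eq
  have hgC : g ∈ C := by
    rw [hC, Subgroup.mem_centralizer_iff]
    rintro y hy
    rw [Set.mem_singleton_iff] at hy
    subst hy
    exact h.eq
  have htfC : ∀ z : C, ∀ k : ℕ, 0 < k → z ^ k = 1 → z = 1 := by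
    intro z k hk hzk
    have : (z : G) ^ k = 1 := by
      have := congrArg (Subtype.val) hzk
      simpa using this
    exact Subtype.ext (htf z k hk this)
  have hcent : (⟨x, hxC⟩ : C) ^ m ∈ Subgroup.center C := by
    rw [Subgroup.mem_center_iff]
    intro z
    apply Subtype.ext
    have hz : (z : G) ∈ Subgroup.centralizer ({x ^ m} : Set G) := z.2
    have h2 := Subgroup.mem_centralizer_iff.mp hz (x ^ m) (Set.mem_singleton _)
    show ((z : G) * (⟨x, hxC⟩ : C).1 ^ m) = ((⟨x, hxC⟩ : C).1 ^ m * (z : G))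
    exact h2.symm
  have hxcent := central_of_pow_central htfC hm hcent
  rw [Subgroup.mem_center_iff] at hxcent
  have := hxcent ⟨g, hgC⟩
  have := congrArg Subtype.val this
  simpa [Commute, SemiconjBy] using this.symm

/-- unique roots in torsion-free nilpotent groups -/
lemma pow_left_injective_tf [Group.IsNilpotent G]
    (htf : ∀ x : G, ∀ k : ℕ, 0 < k → x ^ k = 1 → x = 1)
    {x y : G} {m : ℕ} (hm : 0 < m) (h : x ^ m = y ^ m) : x = y := by
  have hcomm : Commute (x ^ m) y := by
    rw [h]; exact (Commute.pow_self y m).symm.symm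
  have hxy : Commute x y := commute_of_pow_commute htf hm hcomm
  have : (y⁻¹ * x) ^ m = 1 := by
    rw [(hxy.symm.inv_left).mul_pow, inv_pow, h, inv_mul_cancel]
  have := htf _ m hm this
  rw [inv_mul_eq_one] at this
  exact this.symm

/-- the quotient of a torsion-free nilpotent group by its center is torsion-free -/
lemma center_quotient_tf [Group.IsNilpotent G]
    (htf : ∀ x : G, ∀ k : ℕ, 0 < k → x ^ k = 1 → x = 1) :
    ∀ u : G ⧸ Subgroup.center G, ∀ k : ℕ, 0 < k → u ^ k = 1 → u = 1 := by
  intro u k hk huk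
  obtain ⟨g, rfl⟩ := QuotientGroup.mk'_surjective (Subgroup.center G) u
  rw [← map_pow, QuotientGroup.mk'_apply, QuotientGroup.eq_one_iff] at huk
  rw [QuotientGroup.mk'_apply, QuotientGroup.eq_one_iff]
  exact central_of_pow_central htf hk huk

end UniqueRoots

section TorsionClosure

variable {G : Type u} [Group G]

lemma lcs_comm_mem {i : ℕ} {x : G} (hx : x ∈ Subgroup.lowerCentralSeries (⊤ : Subgroup G) i) (y : G) :
    x * y * x⁻¹ * y⁻¹ ∈ Subgroup.lowerCentralSeries (⊤ : Subgroup G) (i + 1) := by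
  rw [Subgroup.mem_lowerCentralSeries_succ_iff]
  exact Subgroup.subset_closure ⟨x, hx, y, Subgroup.mem_top y, rfl⟩

lemma isOfFinOrder_of_pow {x : G} {m : ℕ} (hm : 0 < m) (h : IsOfFinOrder (x ^ m)) :
    IsOfFinOrder x := by
  obtain ⟨k, hk, hxk⟩ := isOfFinOrder_iff_pow_eq_one.mp h
  exact isOfFinOrder_iff_pow_eq_one.mpr ⟨m * k, by positivity, by rwa [pow_mul]⟩

lemma subgroup_isOfFinOrder_iff {K : Subgroup G} {x : K} :
    IsOfFinOrder x ↔ IsOfFinOrder (x : G) := by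
  constructor
  · exact fun h => K.subtype.isOfFinOrder h
  · intro h
    obtain ⟨k, hk, h1⟩ := isOfFinOrder_iff_pow_eq_one.mp h
    refine isOfFinOrder_iff_pow_eq_one.mpr ⟨k, hk, ?_⟩
    apply Subtype.ext
    push_cast
    exact h1

theorem isTorsion_of_torsion_gen {H : Type u} [Group H] [Group.IsNilpotent H] {S : Set H}
    (hS : ∀ s ∈ S, IsOfFinOrder s) (hgen : Subgroup.closure S = ⊤) :
    ∀ w : H, IsOfFinOrder w := by
  -- step for each level of the lower central series
  have hstep : ∀ i : ℕ, ∀ w ∈ Subgroup.lowerCentralSeries (⊤ : Subgroup H) i,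
      ∃ m : ℕ, 0 < m ∧ w ^ m ∈ Subgroup.lowerCentralSeries (⊤ : Subgroup H) (i + 1) := by
    intro i
    induction i with
    | zero =>
      intro w hw0
      clear hw0
      have hw : w ∈ Subgroup.closure S := hgen ▸ Subgroup.mem_top w
      set q := QuotientGroup.mk' (Subgroup.lowerCentralSeries (⊤ : Subgroup H) 1) with hq
      have hcomm : ∀ a b : H, Commute (q a) (q b) := by
        intro a b
        show q a * q b = q b * q a
        rw [← map_mul, ← map_mul]
        rw [QuotientGroup.mk'_apply, QuotientGroup.mk'_apply, QuotientGroup.eq]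
        have := lcs_comm_mem (i := 0) (x := b⁻¹) (Subgroup.mem_top _) a⁻¹
        simpa [mul_assoc] using this
      have hfin : IsOfFinOrder (q w) := by
        induction hw using Subgroup.closure_induction with
        | mem s hs => exact q.isOfFinOrder (hS s hs)
        | one => exact IsOfFinOrder.one
        | mul x y hx hy hqx hqy => rw [map_mul]; exact (hcomm x y).isOfFinOrder_mul hqx hqy
        | inv x hx hqx => rw [map_inv]; exact hqx.inv
      obtain ⟨m, hm, hpow⟩ := isOfFinOrder_iff_pow_eq_one.mp hfin
      refine ⟨m, hm, ?_⟩
      rw [← map_pow, QuotientGroup.mk'_apply, QuotientGroup.eq_one_iff] at hpow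
      simpa using hpow
    | succ i ih =>
      intro w hw
      set q := QuotientGroup.mk' (Subgroup.lowerCentralSeries (⊤ : Subgroup H) (i + 2)) with hq
      have hcomm : ∀ a b : H, a ∈ Subgroup.lowerCentralSeries (⊤ : Subgroup H) (i + 1) →
          b ∈ Subgroup.lowerCentralSeries (⊤ : Subgroup H) (i + 1) → Commute (q a) (q b) := by
        intro a b ha hb
        show q a * q b = q b * q a
        rw [← map_mul, ← map_mul]
        rw [QuotientGroup.mk'_apply, QuotientGroup.mk'_apply, QuotientGroup.eq]
        have := lcs_comm_mem (x := b⁻¹) (inv_mem hb) a⁻¹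
        simpa [mul_assoc] using this
      have hfin : ∀ w ∈ Subgroup.lowerCentralSeries (⊤ : Subgroup H) (i + 1), IsOfFinOrder (q w) := by
        intro w hw
        rw [Subgroup.mem_lowerCentralSeries_succ_iff] at hw
        induction hw using Subgroup.closure_induction with
        | mem g hg =>
          obtain ⟨p, hp, y, -, rfl⟩ := hg
          obtain ⟨m, hm, hpm⟩ := ih p hp
          refine isOfFinOrder_iff_pow_eq_one.mpr ⟨m, hm, ?_⟩
          rw [← map_pow, QuotientGroup.mk'_apply, QuotientGroup.eq_one_iff]
          have hcong := comm_pow_congr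
            (A := Subgroup.lowerCentralSeries (⊤ : Subgroup H) i) (B := Subgroup.lowerCentralSeries (⊤ : Subgroup H) (i + 1))
            (C := Subgroup.lowerCentralSeries (⊤ : Subgroup H) (i + 2))
            (fun a ha y => lcs_comm_mem ha y)
            (fun b hb y => lcs_comm_mem hb y) hp y m
          have h2 : p ^ m * y * (p ^ m)⁻¹ * y⁻¹ ∈ Subgroup.lowerCentralSeries (⊤ : Subgroup H) (i + 2) :=
            lcs_comm_mem hpm y
          have h3 := (Subgroup.lowerCentralSeries (⊤ : Subgroup H) (i + 2)).mul_mem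
            ((Subgroup.lowerCentralSeries (⊤ : Subgroup H) (i + 2)).inv_mem hcong) h2
          have heq : ((p ^ m * y * (p ^ m)⁻¹ * y⁻¹) *
              ((p * y * p⁻¹ * y⁻¹) ^ m)⁻¹)⁻¹ * (p ^ m * y * (p ^ m)⁻¹ * y⁻¹)
              = (p * y * p⁻¹ * y⁻¹) ^ m := by group
          rwa [heq] at h3
        | one => exact IsOfFinOrder.one
        | mul x y hx hy hqx hqy =>
          have hx' : x ∈ Subgroup.lowerCentralSeries (⊤ : Subgroup H) (i + 1) :=
            (Subgroup.mem_lowerCentralSeries_succ_iff ⊤ i x).mpr hx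
          have hy' : y ∈ Subgroup.lowerCentralSeries (⊤ : Subgroup H) (i + 1) :=
            (Subgroup.mem_lowerCentralSeries_succ_iff ⊤ i y).mpr hy
          rw [map_mul]; exact (hcomm x y hx' hy').isOfFinOrder_mul hqx hqy
        | inv x hx hqx => rw [map_inv]; exact hqx.inv
      obtain ⟨m, hm, hpow⟩ := isOfFinOrder_iff_pow_eq_one.mp (hfin w hw)
      refine ⟨m, hm, ?_⟩
      rw [← map_pow, QuotientGroup.mk'_apply, QuotientGroup.eq_one_iff] at hpow
      exact hpow
  -- chain down the series
  obtain ⟨c, hc⟩ := Subgroup.nilpotent_iff_lowerCentralSeries.mp (inferInstance : Group.IsNilpotent H)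
  have aux : ∀ (d i : ℕ) (w : H), w ∈ Subgroup.lowerCentralSeries (⊤ : Subgroup H) i →
      Subgroup.lowerCentralSeries (⊤ : Subgroup H) (i + d) = ⊥ → IsOfFinOrder w := by
    intro d
    induction d with
    | zero =>
      intro i w hw hbot
      rw [Nat.add_zero] at hbot
      rw [hbot, Subgroup.mem_bot] at hw
      simp [hw]
    | succ d ihd =>
      intro i w hw hbot
      obtain ⟨m, hm, hwm⟩ := hstep i w hw
      have : Subgroup.lowerCentralSeries (⊤ : Subgroup H) ((i + 1) + d) = ⊥ := by
        rwa [show (i + 1) + d = i + (d + 1) by omega]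
      exact isOfFinOrder_of_pow hm (ihd (i + 1) (w ^ m) hwm this)
  intro w
  exact aux c 0 w (by simp [Subgroup.lowerCentralSeries_zero]) (by simpa using hc)

theorem isOfFinOrder_mul_of_nilpotent [Group.IsNilpotent G] {x y : G}
    (hx : IsOfFinOrder x) (hy : IsOfFinOrder y) : IsOfFinOrder (x * y) := by
  set K := Subgroup.closure ({x, y} : Set G) with hK
  have hxK : x ∈ K := Subgroup.subset_closure (by simp)
  have hyK : y ∈ K := Subgroup.subset_closure (by simp)
  have habs := isTorsion_of_torsion_gen
    (H := ↥K) (S := (Subtype.val : K → G) ⁻¹' {x, y})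
    (by
      rintro s hs
      rw [subgroup_isOfFinOrder_iff]
      rcases hs with h | h
      · rw [h]; exact hx
      · rw [Set.mem_singleton_iff] at h; rw [h]; exact hy)
    Subgroup.closure_closure_coe_preimage
  have := habs ⟨x * y, K.mul_mem hxK hyK⟩
  rwa [subgroup_isOfFinOrder_iff] at this

end TorsionClosure

section OrbitBound

variable {G : Type u} [Group G]

theorem exists_torsion_bound (hfin : Finite (MulAction.orbitRel.Quotient (MulAut G) G)) :
    ∃ n : ℕ, 0 < n ∧ ∀ g : G, IsOfFinOrder g → g ^ n = 1 := by
  classical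
  have : Fintype (MulAction.orbitRel.Quotient (MulAut G) G) := Fintype.ofFinite _
  have hwd : ∀ a b : G, MulAction.orbitRel (MulAut G) G a b → orderOf a = orderOf b := by
    intro a b hab
    obtain ⟨φ, hφ⟩ := hab
    have : φ • b = a := hφ
    rw [← this]
    exact orderOf_injective (φ : G →* G) φ.injective b
  let f : MulAction.orbitRel.Quotient (MulAut G) G → ℕ := Quotient.lift orderOf hwd
  refine ⟨∏ q : MulAction.orbitRel.Quotient (MulAut G) G, max 1 (f q), ?_, ?_⟩
  · exact Finset.prod_pos fun q _ => by positivity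
  · intro g hg
    have hpos : 0 < orderOf g := hg.orderOf_pos
    have hfg : f (Quotient.mk'' g) = orderOf g := rfl
    have hdvd : orderOf g ∣ ∏ q : MulAction.orbitRel.Quotient (MulAut G) G, max 1 (f q) := by
      have h3 := Finset.dvd_prod_of_mem (fun q => max 1 (f q))
        (Finset.mem_univ (Quotient.mk'' g : MulAction.orbitRel.Quotient (MulAut G) G))
      rwa [hfg, max_eq_right (by omega : 1 ≤ orderOf g)] at h3
    exact orderOf_dvd_iff_pow_eq_one.mp hdvd

theorem orbit_quot_finite_quotient (T : Subgroup G) [T.Normal]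
    (hchar : ∀ φ : MulAut G, ∀ t ∈ T, φ t ∈ T)
    (hfin : Finite (MulAction.orbitRel.Quotient (MulAut G) G)) :
    Finite (MulAction.orbitRel.Quotient (MulAut (G ⧸ T)) (G ⧸ T)) := by
  have hmap : ∀ φ : MulAut G, T.map (φ : G →* G) = T := by
    intro φ
    apply le_antisymm
    · rintro u ⟨t, ht, rfl⟩
      exact hchar φ t ht
    · intro u hu
      refine ⟨φ⁻¹ u, hchar φ⁻¹ u hu, ?_⟩
      simp
  have hwd : ∀ a b : G, MulAction.orbitRel (MulAut G) G a b →
      (Quotient.mk'' (QuotientGroup.mk a : G ⧸ T) :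
        MulAction.orbitRel.Quotient (MulAut (G ⧸ T)) (G ⧸ T)) = Quotient.mk'' (QuotientGroup.mk b) := by
    intro a b hab
    obtain ⟨φ, hφ⟩ := hab
    have hφ' : φ b = a := hφ
    apply Quotient.sound
    refine ⟨(QuotientGroup.congr T T (φ : G ≃* G) (hmap φ) : MulAut (G ⧸ T)), ?_⟩
    show (QuotientGroup.congr T T (φ : G ≃* G) (hmap φ)) (QuotientGroup.mk b) = QuotientGroup.mk a
    rw [show (QuotientGroup.mk b : G ⧸ T) = ((b : G ⧸ T)) from rfl, QuotientGroup.congr_mk]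
    rw [hφ']
  let F : MulAction.orbitRel.Quotient (MulAut G) G →
      MulAction.orbitRel.Quotient (MulAut (G ⧸ T)) (G ⧸ T) :=
    Quotient.lift (fun g => Quotient.mk'' (QuotientGroup.mk g)) hwd
  have hsurj : Function.Surjective F := by
    intro q
    obtain ⟨u, rfl⟩ := Quotient.exists_rep q
    obtain ⟨g, rfl⟩ := QuotientGroup.mk_surjective u
    exact ⟨Quotient.mk'' g, rfl⟩
  exact Finite.of_surjective F hsurj

theorem radicable_of_fin_orbits {H : Type u} [Group H] [Group.IsNilpotent H]
    (htf : ∀ x : H, ∀ k : ℕ, 0 < k → x ^ k = 1 → x = 1)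
    (hfin : Finite (MulAction.orbitRel.Quotient (MulAut H) H)) :
    ∀ x : H, ∀ k : ℕ, 0 < k → ∃ y : H, y ^ k = x := by
  intro x k hk
  rcases Nat.lt_or_ge k 2 with h1 | h2
  · have : k = 1 := by omega
    exact ⟨x, by rw [this, pow_one]⟩
  · have key : ∀ i j : ℕ, i < j →
        (∃ φ : MulAut H, φ (x ^ k ^ j) = x ^ k ^ i) → ∃ y : H, y ^ k = x := by
      intro i j hij ⟨φ, hφ⟩
      have h1 : (φ x ^ k ^ (j - i)) ^ k ^ i = x ^ k ^ i := by
        rw [← pow_mul, ← pow_add]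
        have : j - i + i = j := by omega
        rw [this, ← map_pow]
        exact hφ
      have h2 : φ x ^ k ^ (j - i) = x :=
        pow_left_injective_tf htf (pow_pos (by omega) i) h1
      refine ⟨φ x ^ k ^ (j - i - 1), ?_⟩
      rw [← pow_mul, ← pow_succ]
      have : j - i - 1 + 1 = j - i := by omega
      rw [this]
      exact h2
    obtain ⟨i, j, hne, heq⟩ := Finite.exists_ne_map_eq_of_infinite
      (fun i : ℕ => (Quotient.mk'' (x ^ k ^ i) :
        MulAction.orbitRel.Quotient (MulAut H) H))
    have hrel := Quotient.exact heq
    obtain ⟨φ, hφ⟩ := hrel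
    have hφ' : φ (x ^ k ^ j) = x ^ k ^ i := hφ
    rcases Nat.lt_or_ge i j with h | h
    · exact key i j h ⟨φ, hφ'⟩
    · have hji : j < i := by omega
      refine key j i hji ⟨φ⁻¹, ?_⟩
      rw [← hφ']
      simp
  
end OrbitBound

section CL2

variable {G : Type u} [Group G]

lemma central_swap_pow {x y w : G}
    (hw : ∀ g : G, Commute w g) (hyx : y * x = w * (x * y)) :
    ∀ k : ℕ, y ^ k * x = w ^ k * (x * y ^ k) := by
  have hcom : ∀ (g : G) (k : ℕ), Commute g (w ^ k) := fun g k => ((hw g).pow_left k).symm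
  intro k
  induction k with
  | zero => simp
  | succ k ih =>
    calc y ^ (k + 1) * x = y * (y ^ k * x) := by rw [pow_succ']; group
      _ = y * (w ^ k * (x * y ^ k)) := by rw [ih]
      _ = w ^ k * (y * (x * y ^ k)) := (hcom y k).left_comm _
      _ = w ^ k * ((y * x) * y ^ k) := by rw [← mul_assoc y x]
      _ = w ^ k * ((w * (x * y)) * y ^ k) := by rw [hyx]
      _ = w ^ (k + 1) * (x * y ^ (k + 1)) := by rw [pow_succ w, pow_succ y]; group

lemma central_mul_pow_formula {x y w : G}
    (hw : ∀ g : G, Commute w g) (hyx : y * x = w * (x * y)) :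
    ∀ k : ℕ, (x * y) ^ k = w ^ Nat.choose k 2 * (x ^ k * y ^ k) := by
  have hcom : ∀ (g : G) (k : ℕ), Commute g (w ^ k) := fun g k => ((hw g).pow_left k).symm
  intro k
  induction k with
  | zero => simp
  | succ k ih =>
    have hchoose : Nat.choose (k + 1) 2 = Nat.choose k 2 + k := by
      rw [Nat.choose_succ_succ, Nat.choose_one_right, Nat.add_comm]
    calc (x * y) ^ (k + 1) = (x * y) ^ k * (x * y) := by rw [pow_succ]
      _ = (w ^ Nat.choose k 2 * (x ^ k * y ^ k)) * (x * y) := by rw [ih]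
      _ = w ^ Nat.choose k 2 * (x ^ k * ((y ^ k * x) * y)) := by group
      _ = w ^ Nat.choose k 2 * (x ^ k * ((w ^ k * (x * y ^ k)) * y)) := by
          rw [central_swap_pow hw hyx k]
      _ = w ^ Nat.choose k 2 * (x ^ k * (w ^ k * ((x * y ^ k) * y))) := by group
      _ = w ^ Nat.choose k 2 * (w ^ k * (x ^ k * ((x * y ^ k) * y))) := by
          rw [(hcom (x ^ k) k).left_comm]
      _ = (w ^ Nat.choose k 2 * w ^ k) * ((x ^ k * x) * (y ^ k * y)) := by group
      _ = w ^ Nat.choose (k + 1) 2 * (x ^ (k + 1) * y ^ (k + 1)) := by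
          rw [← pow_add, ← hchoose, ← pow_succ, ← pow_succ]

lemma central_comm_mul_pow {x y : G} {n m : ℕ}
    (hz : ∀ g : G, (x * y * x⁻¹ * y⁻¹) * g = g * (x * y * x⁻¹ * y⁻¹))
    (hzn : (x * y * x⁻¹ * y⁻¹) ^ n = 1)
    (hnc : n ∣ Nat.choose m 2) :
    (x * y) ^ m = x ^ m * y ^ m := by
  set z := x * y * x⁻¹ * y⁻¹ with hzdef
  have hw : ∀ g : G, Commute z⁻¹ g := fun g => ((show Commute z g from hz g)).inv_left
  have hyx : y * x = z⁻¹ * (x * y) := by rw [hzdef]; group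
  have h1 := central_mul_pow_formula hw hyx m
  obtain ⟨t, ht⟩ := hnc
  have h2 : (z⁻¹) ^ Nat.choose m 2 = 1 := by
    rw [ht, inv_pow, pow_mul, hzn, one_pow, inv_one]
  rw [h1, h2, one_mul]

/-- 2 * n ^ 2 works as a universal exponent -/
lemma n_dvd_choose_two_n_sq {n : ℕ} : n ∣ Nat.choose (2 * n ^ 2) 2 := by
  rcases Nat.eq_zero_or_pos n with h | h
  · simp [h]
  · rw [Nat.choose_two_right]
    have h1 : 2 * n ^ 2 * (2 * n ^ 2 - 1) / 2 = n ^ 2 * (2 * n ^ 2 - 1) := by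
      rw [show 2 * n ^ 2 * (2 * n ^ 2 - 1) = 2 * (n ^ 2 * (2 * n ^ 2 - 1)) by ring]
      exact Nat.mul_div_cancel_left _ (by norm_num)
    rw [h1]
    exact Dvd.dvd.mul_right (dvd_pow_self n (by norm_num)) _

end CL2

section Helpers

variable {G : Type u} [Group G]

lemma normal_of_le_center' {A : Subgroup G} (hA : A ≤ Subgroup.center G) : A.Normal := by
  constructor
  intro a ha g
  have hc := Subgroup.mem_center_iff.mp (hA ha) g
  rw [show g * a * g⁻¹ = (g * a) * g⁻¹ from rfl, hc]
  simpa using ha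

lemma map_symm_eq_of_map_eq {H : Type*} [Group H] (e : H ≃* H) {A : Subgroup H}
    (h : A.map (e : H →* H) = A) : A.map (e.symm : H →* H) = A := by
  apply le_antisymm
  · rintro u ⟨a, ha, rfl⟩
    have : a ∈ A.map (e : H →* H) := h.symm ▸ ha
    obtain ⟨b, hb, rfl⟩ := this
    simpa using hb
  · intro u hu
    refine ⟨e u, ?_, by simp⟩
    rw [← h]
    exact ⟨u, hu, rfl⟩

lemma center_stable_equiv {H : Type*} [Group H] (e : H ≃* H) {u : H}
    (hu : u ∈ Subgroup.center H) : e u ∈ Subgroup.center H := by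
  rw [Subgroup.mem_center_iff] at hu ⊢
  intro g
  calc g * e u = e (e.symm g * u) := by rw [map_mul]; simp
    _ = e (u * e.symm g) := by rw [hu]
    _ = e u * g := by rw [map_mul]; simp

lemma rad_of_surjective {H H' : Type*} [Group H] [Group H'] (f : H →* H')
    (hf : Function.Surjective f) (hrad : ∀ x : H, ∀ k : ℕ, 0 < k → ∃ y, y ^ k = x) :
    ∀ x : H', ∀ k : ℕ, 0 < k → ∃ y, y ^ k = x := by
  intro x k hk
  obtain ⟨g, rfl⟩ := hf x
  obtain ⟨y, hy⟩ := hrad g k hk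
  exact ⟨f y, by rw [← map_pow, hy]⟩

end Helpers

section CentralSplit

theorem central_split (n : ℕ) (hn : 0 < n) :
    ∀ (d : ℕ) (G : Type u) (_ : Group G) (_ : Group.IsNilpotent G) (A : Subgroup G)
      (_ : A.Normal)
      (hA : A ≤ Subgroup.center G) (hAn : ∀ a ∈ A, a ^ n = 1)
      (htf : ∀ x : G ⧸ A, ∀ k : ℕ, 0 < k → x ^ k = 1 → x = 1)
      (hrad : ∀ x : G ⧸ A, ∀ k : ℕ, 0 < k → ∃ y, y ^ k = x)
      (_ : Group.nilpotencyClass (G ⧸ A) ≤ d),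
    ∃ K : Subgroup G, (K ⊓ A = ⊥) ∧ (∀ g : G, ∃ k ∈ K, ∃ a ∈ A, g = k * a) ∧
      (∀ φ : G ≃* G, A.map (φ : G →* G) = A → K.map (φ : G →* G) = K) := by
  intro d
  induction d with
  | zero =>
    intro G _ _ A _ hA hAn htf hrad hd
    have hcls : Group.nilpotencyClass (G ⧸ A) = 0 := Nat.le_zero.mp hd
    have hsub : Subsingleton (G ⧸ A) := nilpotencyClass_zero_iff_subsingleton.mp hcls
    refine ⟨⊥, by simp, ?_, ?_⟩
    · intro g
      refine ⟨1, Subgroup.one_mem _, g, ?_, by simp⟩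
      have : (g : G ⧸ A) = 1 := Subsingleton.elim _ _
      exact (QuotientGroup.eq_one_iff g).mp this
    · intro φ _
      simp
  | succ d ih =>
    intro G _ _ A _ hA hAn htf hrad hd
    let π : G →* G ⧸ A := QuotientGroup.mk' A
    let ZQ : Subgroup (G ⧸ A) := Subgroup.center (G ⧸ A)
    let V : Subgroup G := ZQ.comap π
    haveI hVnormal : V.Normal := Subgroup.Normal.comap inferInstance π
    set m := 2 * n ^ 2 with hm_def
    have hm : 0 < m := by positivity
    have hnm : n ∣ m := ⟨2 * n, by ring⟩
    have hnc : n ∣ Nat.choose m 2 := n_dvd_choose_two_n_sq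
    have hπV : ∀ v : G, v ∈ V → π v ∈ ZQ := fun v hv => Subgroup.mem_comap.mp hv
    have comm_in_A : ∀ v w : G, v ∈ V → w ∈ V → v * w * v⁻¹ * w⁻¹ ∈ A := by
      intro v w hv hw
      have hc : π v * π w = π w * π v :=
        (Subgroup.mem_center_iff.mp (hπV v hv) (π w)).symm
      have : π (v * w * v⁻¹ * w⁻¹) = 1 := by
        rw [map_mul, map_mul, map_mul, map_inv, map_inv, hc]
        group
      rwa [QuotientGroup.mk'_apply, QuotientGroup.eq_one_iff] at this
    have powV : ∀ v w : G, v ∈ V → w ∈ V → (v * w) ^ m = v ^ m * w ^ m := by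
      intro v w hv hw
      have hcA := comm_in_A v w hv hw
      refine central_comm_mul_pow (n := n) ?_ (hAn _ hcA) hnc
      intro g
      exact (Subgroup.mem_center_iff.mp (hA hcA) g).symm
    let S : Subgroup G :=
      { carrier := (fun v : G => v ^ m) '' (V : Set G)
        one_mem' := ⟨1, V.one_mem, one_pow m⟩
        mul_mem' := by
          rintro x y ⟨v, hv, rfl⟩ ⟨w, hw, rfl⟩
          exact ⟨v * w, V.mul_mem hv hw, by dsimp only; rw [powV v w hv hw]⟩
        inv_mem' := by
          rintro x ⟨v, hv, rfl⟩
          exact ⟨v⁻¹, V.inv_mem hv, by dsimp only; rw [inv_pow]⟩ }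
    have hmemS : ∀ x : G, x ∈ S ↔ ∃ v ∈ V, v ^ m = x := by
      intro x
      constructor
      · rintro ⟨v, hv, rfl⟩; exact ⟨v, hv, rfl⟩
      · rintro ⟨v, hv, rfl⟩; exact ⟨v, hv, rfl⟩
    haveI hSnormal : S.Normal := by
      constructor
      rintro s hs g
      obtain ⟨v, hv, rfl⟩ := (hmemS s).mp hs
      refine (hmemS _).mpr ⟨g * v * g⁻¹, hVnormal.conj_mem v hv g, ?_⟩
      rw [conj_pow]
    -- decomposition of V
    have hSAV : ∀ v : G, v ∈ V → ∃ w ∈ V, ∃ a ∈ A, v = w ^ m * a := by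
      intro v hv
      obtain ⟨u, hu⟩ := hrad (π v) m hm
      have huZ : u ∈ ZQ := by
        apply central_of_pow_central htf hm
        rw [hu]
        exact hπV v hv
      obtain ⟨w, hw⟩ := QuotientGroup.mk'_surjective A u
      have hwV : w ∈ V := Subgroup.mem_comap.mpr (by rw [show π w = u from hw]; exact huZ)
      refine ⟨w, hwV, (w ^ m)⁻¹ * v, ?_, by group⟩
      have : π ((w ^ m)⁻¹ * v) = 1 := by
        rw [map_mul, map_inv, map_pow, show π w = u from hw, hu]
        group
      rwa [QuotientGroup.mk'_apply, QuotientGroup.eq_one_iff] at this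
    have hSbotA : ∀ x : G, x ∈ S → x ∈ A → x = 1 := by
      intro x hxS hxA
      obtain ⟨v, hv, rfl⟩ := (hmemS x).mp hxS
      have h1 : (π v) ^ m = 1 := by
        rw [← map_pow, QuotientGroup.mk'_apply, QuotientGroup.eq_one_iff]
        exact hxA
      have h2 : π v = 1 := htf _ m hm h1
      have h3 : v ∈ A := by
        rwa [QuotientGroup.mk'_apply, QuotientGroup.eq_one_iff] at h2
      rw [hm_def]
      rw [show 2 * n ^ 2 = n * (2 * n) by ring, pow_mul, hAn v h3, one_pow]
    -- the quotient G ⧸ S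
    let π2 : G →* G ⧸ S := QuotientGroup.mk' S
    let A2 : Subgroup (G ⧸ S) := A.map π2
    have hA2cent : A2 ≤ Subgroup.center (G ⧸ S) := by
      rintro x ⟨a, ha, rfl⟩
      rw [Subgroup.mem_center_iff]
      intro u
      obtain ⟨g, rfl⟩ := QuotientGroup.mk'_surjective S u
      rw [← map_mul, ← map_mul]
      congr 1
      exact Subgroup.mem_center_iff.mp (hA ha) g
    haveI hA2normal : A2.Normal := normal_of_le_center' hA2cent
    have hA2n : ∀ b ∈ A2, b ^ n = 1 := by
      rintro b ⟨a, ha, rfl⟩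
      rw [← map_pow, hAn a ha, map_one]
    -- S ⊔ A = V
    have hSV : S ≤ V := by
      intro x hx
      obtain ⟨v, hv, rfl⟩ := (hmemS x).mp hx
      exact V.pow_mem hv m
    have hAV : A ≤ V := by
      intro a ha
      refine Subgroup.mem_comap.mpr ?_
      have : π a = 1 := by rw [QuotientGroup.mk'_apply, QuotientGroup.eq_one_iff]; exact ha
      rw [this]; exact ZQ.one_mem
    have hsupSA : S ⊔ A = V := by
      apply le_antisymm (sup_le hSV hAV)
      intro v hv
      obtain ⟨w, hw, a, ha, rfl⟩ := hSAV v hv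
      exact Subgroup.mul_mem _ (Subgroup.mem_sup_left ((hmemS _).mpr ⟨w, hw, rfl⟩))
        (Subgroup.mem_sup_right ha)
    -- the isomorphism (G ⧸ S) ⧸ A2 ≃* (G ⧸ A) ⧸ ZQ
    have hVmap2 : V.map π2 = A2 := by
      rw [← hsupSA, Subgroup.map_sup]
      have h1 : S.map π2 = ⊥ := by
        apply le_antisymm
        · rintro x ⟨s, hs, rfl⟩
          rw [Subgroup.mem_bot, QuotientGroup.mk'_apply, QuotientGroup.eq_one_iff]
          exact hs
        · exact bot_le
      rw [h1, bot_sup_eq]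
    have hVmapA : V.map π = ZQ := Subgroup.map_comap_eq_self_of_surjective
      (QuotientGroup.mk'_surjective A) ZQ
    let e0 : ((G ⧸ S) ⧸ A2) ≃* ((G ⧸ S) ⧸ V.map π2) :=
      QuotientGroup.quotientMulEquivOfEq hVmap2.symm
    let e1 : ((G ⧸ S) ⧸ V.map (QuotientGroup.mk' S)) ≃* (G ⧸ V) :=
      QuotientGroup.quotientQuotientEquivQuotient S V hSV
    let e2 : ((G ⧸ A) ⧸ V.map (QuotientGroup.mk' A)) ≃* (G ⧸ V) :=
      QuotientGroup.quotientQuotientEquivQuotient A V hAV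
    let e3 : ((G ⧸ A) ⧸ ZQ) ≃* ((G ⧸ A) ⧸ V.map (QuotientGroup.mk' A)) :=
      QuotientGroup.quotientMulEquivOfEq hVmapA.symm
    let e : ((G ⧸ S) ⧸ A2) ≃* ((G ⧸ A) ⧸ ZQ) :=
      ((e0.trans e1).trans (e3.trans e2).symm)
    -- properties of the new quotient
    have htfZ : ∀ x : (G ⧸ A) ⧸ ZQ, ∀ k : ℕ, 0 < k → x ^ k = 1 → x = 1 :=
      center_quotient_tf htf
    have hradZ : ∀ x : (G ⧸ A) ⧸ ZQ, ∀ k : ℕ, 0 < k → ∃ y, y ^ k = x :=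
      rad_of_surjective (QuotientGroup.mk' ZQ) (QuotientGroup.mk'_surjective ZQ) hrad
    have htf2 : ∀ x : (G ⧸ S) ⧸ A2, ∀ k : ℕ, 0 < k → x ^ k = 1 → x = 1 := by
      intro x k hk hx
      have : (e x) ^ k = 1 := by rw [← map_pow, hx, map_one]
      have := htfZ (e x) k hk this
      have := congrArg e.symm this
      simpa using this
    have hrad2 : ∀ x : (G ⧸ S) ⧸ A2, ∀ k : ℕ, 0 < k → ∃ y, y ^ k = x := by
      intro x k hk
      obtain ⟨y, hy⟩ := hradZ (e x) k hk
      refine ⟨e.symm y, ?_⟩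
      rw [← map_pow e.symm y k, hy]
      simp
    have hd2 : Group.nilpotencyClass ((G ⧸ S) ⧸ A2) ≤ d := by
      have h1 : Group.nilpotencyClass ((G ⧸ S) ⧸ A2) ≤
          Group.nilpotencyClass ((G ⧸ A) ⧸ ZQ) :=
        nilpotencyClass_le_of_surjective (e.symm : ((G ⧸ A) ⧸ ZQ) →* ((G ⧸ S) ⧸ A2))
          e.symm.surjective
      have h2 : Group.nilpotencyClass ((G ⧸ A) ⧸ ZQ) = Group.nilpotencyClass (G ⧸ A) - 1 :=
        nilpotencyClass_quotient_center
      omega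
    -- apply the induction hypothesis
    obtain ⟨K2, hK2inf, hK2dec, hK2inv⟩ :=
      ih (G ⧸ S) inferInstance inferInstance A2 inferInstance hA2cent hA2n htf2 hrad2 hd2
    let K : Subgroup G := K2.comap π2
    have hKmem : ∀ x : G, x ∈ K ↔ π2 x ∈ K2 := fun x => Subgroup.mem_comap
    refine ⟨K, ?_, ?_, ?_⟩
    · -- K ⊓ A = ⊥
      apply le_antisymm ?_ bot_le
      intro x hx
      rw [Subgroup.mem_inf] at hx
      obtain ⟨hxK, hxA⟩ := hx
      have h1 : π2 x ∈ K2 := (hKmem x).mp hxK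
      have h2 : π2 x ∈ A2 := ⟨x, hxA, rfl⟩
      have h3 : π2 x ∈ K2 ⊓ A2 := Subgroup.mem_inf.mpr ⟨h1, h2⟩
      rw [hK2inf, Subgroup.mem_bot] at h3
      have h4 : x ∈ S := by
        rwa [QuotientGroup.mk'_apply, QuotientGroup.eq_one_iff] at h3
      rw [Subgroup.mem_bot]
      exact hSbotA x h4 hxA
    · -- decomposition
      intro g
      obtain ⟨k2, hk2, b, hb, hdec⟩ := hK2dec (π2 g)
      obtain ⟨a, ha, rfl⟩ := hb
      obtain ⟨x, hx⟩ := QuotientGroup.mk'_surjective S k2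
      have hxK : x ∈ K := (hKmem x).mpr (by rw [show π2 x = k2 from hx]; exact hk2)
      have hs : π2 (g * (x * a)⁻¹) = 1 := by
        rw [map_mul, map_inv, map_mul, show π2 x = k2 from hx, hdec]
        group
      have hsS : g * (x * a)⁻¹ ∈ S := by
        rwa [QuotientGroup.mk'_apply, QuotientGroup.eq_one_iff] at hs
      have hsK : g * (x * a)⁻¹ ∈ K :=
        (hKmem _).mpr (by rw [show π2 (g * (x * a)⁻¹) = 1 from hs]; exact K2.one_mem)
      refine ⟨(g * (x * a)⁻¹) * x, K.mul_mem hsK hxK, a, ha, by group⟩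
    · -- invariance
      have key : ∀ φ : G ≃* G, A.map (φ : G →* G) = A → ∀ x ∈ K, φ x ∈ K := by
        intro φ hφA x hx
        -- φ stabilizes V
        have hφZ : ∀ v : G, v ∈ V → φ v ∈ V := by
          intro v hv
          refine Subgroup.mem_comap.mpr ?_
          have hcongr : π (φ v) = (QuotientGroup.congr A A φ hφA) (π v) := by
            rw [QuotientGroup.mk'_apply, QuotientGroup.mk'_apply, QuotientGroup.congr_mk]
          rw [hcongr]
          exact center_stable_equiv _ (hπV v hv)
        have hφS : ∀ s ∈ S, φ s ∈ S := by
          intro s hs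
          obtain ⟨v, hv, rfl⟩ := (hmemS s).mp hs
          exact (hmemS _).mpr ⟨φ v, hφZ v hv, by rw [map_pow]⟩
        have hφSmap : S.map (φ : G →* G) = S := by
          apply le_antisymm
          · rintro u ⟨s, hs, rfl⟩
            exact hφS s hs
          · intro s hs
            have hφA' : A.map (φ.symm : G →* G) = A := map_symm_eq_of_map_eq φ hφA
            have hφZ' : ∀ v : G, v ∈ V → φ.symm v ∈ V := by
              intro v hv
              refine Subgroup.mem_comap.mpr ?_
              have hcongr : π (φ.symm v) = (QuotientGroup.congr A A φ.symm hφA') (π v) := by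
                rw [QuotientGroup.mk'_apply, QuotientGroup.mk'_apply, QuotientGroup.congr_mk]
              rw [hcongr]
              exact center_stable_equiv _ (hπV v hv)
            refine ⟨φ.symm s, ?_, by simp⟩
            obtain ⟨v, hv, rfl⟩ := (hmemS s).mp hs
            exact (hmemS _).mpr ⟨φ.symm v, hφZ' v hv, by rw [map_pow]⟩
        let φ2 : (G ⧸ S) ≃* (G ⧸ S) := QuotientGroup.congr S S φ hφSmap
        have hφ2mk : ∀ g : G, φ2 (π2 g) = π2 (φ g) := by
          intro g
          rw [QuotientGroup.mk'_apply, QuotientGroup.mk'_apply]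
          exact QuotientGroup.congr_mk S S φ hφSmap g
        have hφ2A2 : A2.map (φ2 : (G ⧸ S) →* (G ⧸ S)) = A2 := by
          apply le_antisymm
          · rintro u ⟨b, hb, rfl⟩
            obtain ⟨a, ha, rfl⟩ := hb
            rw [show (φ2 : (G ⧸ S) →* (G ⧸ S)) (π2 a) = π2 (φ a) from hφ2mk a]
            refine ⟨φ a, ?_, rfl⟩
            rw [← hφA]
            exact ⟨a, ha, rfl⟩
          · rintro u ⟨a, ha, rfl⟩
            have hφA' : A.map (φ.symm : G →* G) = A := map_symm_eq_of_map_eq φ hφA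
            refine ⟨π2 (φ.symm a), ⟨φ.symm a, ?_, rfl⟩, ?_⟩
            · rw [← hφA']
              exact ⟨a, ha, rfl⟩
            · rw [show (φ2 : (G ⧸ S) →* (G ⧸ S)) (π2 (φ.symm a)) = π2 (φ (φ.symm a)) from
                hφ2mk (φ.symm a)]
              simp
        have hK2stab := hK2inv φ2 hφ2A2
        have h1 : π2 (φ x) ∈ K2 := by
          rw [← hφ2mk x, ← hK2stab]
          exact ⟨π2 x, (hKmem x).mp hx, rfl⟩
        exact (hKmem _).mpr h1
      intro φ hφA
      apply le_antisymm
      · rintro u ⟨x, hx, rfl⟩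
        exact key φ hφA x hx
      · intro x hx
        have hφA' : A.map (φ.symm : G →* G) = A := map_symm_eq_of_map_eq φ hφA
        refine ⟨φ.symm x, key φ.symm hφA' x hx, by simp⟩

end CentralSplit

section HeightSplit

theorem height_split (n : ℕ) (hn : 0 < n) :
    ∀ (i : ℕ) (G : Type u) (_ : Group G) (_ : Group.IsNilpotent G) (T : Subgroup G)
      (_ : T.Normal)
      (hTn : ∀ t ∈ T, t ^ n = 1) (hT : T ≤ Subgroup.upperCentralSeries G i)
      (htf : ∀ x : G ⧸ T, ∀ k : ℕ, 0 < k → x ^ k = 1 → x = 1)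
      (hrad : ∀ x : G ⧸ T, ∀ k : ℕ, 0 < k → ∃ y, y ^ k = x),
    ∃ K : Subgroup G, K.Normal ∧ K ⊓ T = ⊥ ∧ (∀ g : G, ∃ k ∈ K, ∃ t ∈ T, g = k * t) := by
  intro i
  induction i with
  | zero =>
    intro G _ _ T _ hTn hT htf hrad
    have hT' : T = ⊥ := le_bot_iff.mp (by rwa [Subgroup.upperCentralSeries_zero] at hT)
    refine ⟨⊤, inferInstance, by simp [hT'], fun g => ⟨g, trivial, 1, T.one_mem, by simp⟩⟩
  | succ i ih =>
    intro G _ _ T _ hTn hT htf hrad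
    set T1 : Subgroup G := T ⊓ Subgroup.center G with hT1def
    have hT1c : T1 ≤ Subgroup.center G := inf_le_right
    have hT1T : T1 ≤ T := inf_le_left
    haveI hT1norm : T1.Normal := normal_of_le_center' hT1c
    let π1 : G →* G ⧸ T1 := QuotientGroup.mk' T1
    let T' : Subgroup (G ⧸ T1) := T.map π1
    haveI hT'norm : T'.Normal :=
      Subgroup.Normal.map inferInstance π1 (QuotientGroup.mk'_surjective T1)
    have hT'n : ∀ u ∈ T', u ^ n = 1 := by
      rintro u ⟨t, ht, rfl⟩
      rw [← map_pow, hTn t ht, map_one]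
    -- height decreases
    have claim : ∀ j : ℕ, ∀ x : G, x ∈ T → x ∈ Subgroup.upperCentralSeries G (j + 1) →
        π1 x ∈ Subgroup.upperCentralSeries (G ⧸ T1) j := by
      intro j
      induction j with
      | zero =>
        intro x hxT hx1
        rw [Subgroup.upperCentralSeries_one] at hx1
        rw [Subgroup.upperCentralSeries_zero, Subgroup.mem_bot, QuotientGroup.mk'_apply,
          QuotientGroup.eq_one_iff]
        exact Subgroup.mem_inf.mpr ⟨hxT, hx1⟩
      | succ j ihj =>
        intro x hxT hx2
        rw [Subgroup.mem_upperCentralSeries_succ_iff]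
        intro u
        obtain ⟨y, rfl⟩ := QuotientGroup.mk'_surjective T1 u
        have h1 : π1 x * π1 y * (π1 x)⁻¹ * (π1 y)⁻¹ = π1 (x * y * x⁻¹ * y⁻¹) := by
          simp [map_mul, map_inv]
        show π1 x * π1 y * (π1 x)⁻¹ * (π1 y)⁻¹ ∈ _
        rw [h1]
        apply ihj
        · have h2 : y * x⁻¹ * y⁻¹ ∈ T := by
            have := Subgroup.Normal.conj_mem (inferInstance : T.Normal) x⁻¹ (T.inv_mem hxT) y
            simpa [mul_assoc] using this
          have := T.mul_mem hxT h2
          simpa [mul_assoc] using this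
        · exact Subgroup.mem_upperCentralSeries_succ_iff.mp hx2 y
    have hT'height : T' ≤ Subgroup.upperCentralSeries (G ⧸ T1) i := by
      rintro u ⟨x, hx, rfl⟩
      exact claim i x hx (hT hx)
    -- transported torsion-freeness and radicability
    let e3 : ((G ⧸ T1) ⧸ T') ≃* G ⧸ T :=
      QuotientGroup.quotientQuotientEquivQuotient T1 T hT1T
    have htf1 : ∀ x : (G ⧸ T1) ⧸ T', ∀ k : ℕ, 0 < k → x ^ k = 1 → x = 1 := by
      intro x k hk hx
      have h1 : (e3 x) ^ k = 1 := by rw [← map_pow, hx, map_one]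
      have h2 := htf (e3 x) k hk h1
      have := congrArg e3.symm h2
      simpa using this
    have hrad1 : ∀ x : (G ⧸ T1) ⧸ T', ∀ k : ℕ, 0 < k → ∃ y, y ^ k = x :=
      rad_of_surjective (e3.symm : (G ⧸ T) →* ((G ⧸ T1) ⧸ T')) e3.symm.surjective hrad
    obtain ⟨K', hK'norm, hK'inf, hK'dec⟩ :=
      ih (G ⧸ T1) inferInstance inferInstance T' inferInstance hT'n hT'height htf1 hrad1
    let K : Subgroup G := K'.comap π1
    haveI hKnorm : K.Normal := Subgroup.Normal.comap hK'norm π1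
    have hKmem : ∀ x : G, x ∈ K ↔ π1 x ∈ K' := fun x => Subgroup.mem_comap
    have hT1K : T1 ≤ K := by
      intro t ht
      refine (hKmem t).mpr ?_
      have : π1 t = 1 := by rw [QuotientGroup.mk'_apply, QuotientGroup.eq_one_iff]; exact ht
      rw [this]; exact K'.one_mem
    have hKT : ∀ x : G, x ∈ K → x ∈ T → x ∈ T1 := by
      intro x hxK hxT
      have h1 : π1 x ∈ K' ⊓ T' := Subgroup.mem_inf.mpr ⟨(hKmem x).mp hxK, ⟨x, hxT, rfl⟩⟩
      rw [hK'inf, Subgroup.mem_bot] at h1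
      rwa [QuotientGroup.mk'_apply, QuotientGroup.eq_one_iff] at h1
    have decompKT : ∀ g : G, ∃ k ∈ K, ∃ t ∈ T, g = k * t := by
      intro g
      obtain ⟨k', hk', t', ht', hdec⟩ := hK'dec (π1 g)
      obtain ⟨t0, ht0, rfl⟩ := ht'
      obtain ⟨x0, hx0⟩ := QuotientGroup.mk'_surjective T1 k'
      have hx0K : x0 ∈ K := (hKmem x0).mpr (by rw [show π1 x0 = k' from hx0]; exact hk')
      have hs : π1 (g * (x0 * t0)⁻¹) = 1 := by
        rw [map_mul, map_inv, map_mul, show π1 x0 = k' from hx0, hdec]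
        group
      have hsT1 : g * (x0 * t0)⁻¹ ∈ T1 := by
        rwa [QuotientGroup.mk'_apply, QuotientGroup.eq_one_iff] at hs
      refine ⟨(g * (x0 * t0)⁻¹) * x0, K.mul_mem (hT1K hsT1) hx0K, t0, ht0, by group⟩
    -- now split T1 off inside K using the central splitting
    let A1 : Subgroup ↥K := T1.subgroupOf K
    have hA1c : A1 ≤ Subgroup.center ↥K := by
      rintro ⟨x, hxK⟩ hx
      have hx' : x ∈ T1 := hx
      clear hx; rename' hx' => hx
      rw [Subgroup.mem_center_iff]
      rintro ⟨c, hcK⟩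
      apply Subtype.ext
      exact Subgroup.mem_center_iff.mp (hT1c hx) c
    haveI hA1norm : A1.Normal := normal_of_le_center' hA1c
    have hA1n : ∀ a ∈ A1, a ^ n = 1 := by
      rintro ⟨x, hxK⟩ hx
      have hx' : x ∈ T1 := hx
      clear hx; rename' hx' => hx
      apply Subtype.ext
      push_cast
      exact hTn x (hT1T hx)
    let ψ : ↥K →* G ⧸ T := (QuotientGroup.mk' T).comp K.subtype
    have hkerψ : ψ.ker = A1 := by
      ext ⟨x, hxK⟩
      constructor
      · intro h
        have h1 : (QuotientGroup.mk' T) x = 1 := h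
        rw [QuotientGroup.mk'_apply, QuotientGroup.eq_one_iff] at h1
        exact (hKT x hxK h1 : x ∈ T1)
      · intro h
        have h1 : x ∈ T1 := h
        show (QuotientGroup.mk' T) x = 1
        rw [QuotientGroup.mk'_apply, QuotientGroup.eq_one_iff]
        exact hT1T h1
    have hψsurj : Function.Surjective ψ := by
      intro u
      obtain ⟨g, rfl⟩ := QuotientGroup.mk_surjective u
      obtain ⟨k, hk, t, ht, rfl⟩ := decompKT g
      refine ⟨⟨k, hk⟩, ?_⟩
      show (QuotientGroup.mk' T) k = QuotientGroup.mk (k * t)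
      rw [QuotientGroup.mk'_apply]
      rw [QuotientGroup.eq]
      have : k⁻¹ * (k * t) ∈ T := by simpa using ht
      exact this
    let e4 : (↥K ⧸ A1) ≃* G ⧸ T :=
      (QuotientGroup.quotientMulEquivOfEq hkerψ.symm).trans
        (QuotientGroup.quotientKerEquivOfSurjective ψ hψsurj)
    have htf4 : ∀ x : ↥K ⧸ A1, ∀ k : ℕ, 0 < k → x ^ k = 1 → x = 1 := by
      intro x k hk hx
      have h1 : (e4 x) ^ k = 1 := by rw [← map_pow, hx, map_one]
      have h2 := htf (e4 x) k hk h1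
      have := congrArg e4.symm h2
      simpa using this
    have hrad4 : ∀ x : ↥K ⧸ A1, ∀ k : ℕ, 0 < k → ∃ y, y ^ k = x :=
      rad_of_surjective (e4.symm : (G ⧸ T) →* (↥K ⧸ A1)) e4.symm.surjective hrad
    obtain ⟨K0', hK0inf, hK0dec, hK0inv⟩ :=
      central_split n hn (Group.nilpotencyClass (↥K ⧸ A1)) ↥K inferInstance inferInstance
        A1 inferInstance hA1c hA1n htf4 hrad4 le_rfl
    let K0 : Subgroup G := K0'.map K.subtype
    have hK0K : K0 ≤ K := by
      rintro x ⟨x0, hx0, rfl⟩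
      exact x0.2
    refine ⟨K0, ?_, ?_, ?_⟩
    · -- normality
      constructor
      rintro s hs g
      obtain ⟨x0, hx0, rfl⟩ := hs
      -- conjugation automorphism of K
      let φg : ↥K ≃* ↥K :=
        { toFun := fun x => ⟨g * ↑x * g⁻¹, hKnorm.conj_mem ↑x x.2 g⟩
          invFun := fun x => ⟨g⁻¹ * ↑x * g, by
            have := hKnorm.conj_mem ↑x x.2 g⁻¹
            simpa using this⟩
          left_inv := fun x => by apply Subtype.ext; simp; group
          right_inv := fun x => by apply Subtype.ext; simp; group
          map_mul' := fun x y => by apply Subtype.ext; push_cast; group }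
      have hφgA1 : A1.map (φg : ↥K →* ↥K) = A1 := by
        apply le_antisymm
        · rintro u ⟨⟨x, hxK⟩, hx, rfl⟩
          have hx' : x ∈ T1 := hx
          exact hT1norm.conj_mem x hx' g
        · rintro ⟨a, haK⟩ ha
          have ha' : a ∈ T1 := ha
          have h1 : g⁻¹ * a * g ∈ T1 := by
            have := hT1norm.conj_mem a ha' g⁻¹
            simpa using this
          have h2 : g⁻¹ * a * g ∈ K := hT1K h1
          refine ⟨⟨g⁻¹ * a * g, h2⟩, ?_, ?_⟩
          · exact h1
          · apply Subtype.ext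
            show g * (g⁻¹ * a * g) * g⁻¹ = a
            group
      have hstab := hK0inv φg hφgA1
      have h1 : φg x0 ∈ K0' := by
        rw [← hstab]
        exact ⟨x0, hx0, rfl⟩
      exact ⟨φg x0, h1, rfl⟩
    · -- trivial intersection with T
      apply le_antisymm ?_ bot_le
      intro x hx
      rw [Subgroup.mem_inf] at hx
      obtain ⟨hxK0, hxT⟩ := hx
      obtain ⟨x0, hx0, rfl⟩ := hxK0
      have h1 : (x0 : G) ∈ T1 := hKT _ x0.2 hxT
      have h2 : x0 ∈ A1 := h1
      have h3 : x0 ∈ K0' ⊓ A1 := Subgroup.mem_inf.mpr ⟨hx0, h2⟩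
      rw [hK0inf, Subgroup.mem_bot] at h3
      rw [Subgroup.mem_bot, h3]
      simp
    · -- decomposition
      intro g
      obtain ⟨k, hk, t, ht, rfl⟩ := decompKT g
      obtain ⟨k0, hk0, a, ha, hx⟩ := hK0dec ⟨k, hk⟩
      have ha2 : (a : G) ∈ T1 := ha
      have hcoe : k = (k0 : G) * (a : G) := by
        have := congrArg (Subtype.val) hx
        simpa using this
      refine ⟨(k0 : G), ⟨k0, hk0, rfl⟩, (a : G) * t, T.mul_mem (hT1T ha2) ht, ?_⟩
      rw [hcoe]
      group

end HeightSplit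

/-- A nilpotent group with finitely many automorphism orbits decomposes as
G = K × Tor(G) with K torsion-free and radicable. -/
theorem nilpotent_decomposition
    (G : Type*) [Group G] [Group.IsNilpotent G]
    (hfin : Finite (MulAction.orbitRel.Quotient (MulAut G) G)) :
    ∃ K T : Subgroup G, K.Normal ∧ T.Normal ∧
      (∀ g : G, g ∈ T ↔ IsOfFinOrder g) ∧
      (∀ k ∈ K, k ≠ 1 → ¬ IsOfFinOrder k) ∧
      (∀ k ∈ K, ∀ n : ℕ, 0 < n → ∃ h ∈ K, h ^ n = k) ∧
      K.IsComplement' T := by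
  classical
  obtain ⟨n, hn, hbound⟩ := exists_torsion_bound hfin
  let T : Subgroup G :=
    { carrier := {g | IsOfFinOrder g}
      one_mem' := IsOfFinOrder.one
      mul_mem' := fun hx hy => isOfFinOrder_mul_of_nilpotent hx hy
      inv_mem' := fun hx => hx.inv }
  have hTmem : ∀ g : G, g ∈ T ↔ IsOfFinOrder g := fun g => Iff.rfl
  haveI hTnorm : T.Normal := by
    constructor
    intro t ht g
    obtain ⟨k, hk, h1⟩ := isOfFinOrder_iff_pow_eq_one.mp ((hTmem t).mp ht)
    refine (hTmem _).mpr (isOfFinOrder_iff_pow_eq_one.mpr ⟨k, hk, ?_⟩)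
    rw [conj_pow, h1]
    group
  have hTn : ∀ t ∈ T, t ^ n = 1 := fun t ht => hbound t ((hTmem t).mp ht)
  have htf : ∀ x : G ⧸ T, ∀ k : ℕ, 0 < k → x ^ k = 1 → x = 1 := by
    intro x k hk hx
    obtain ⟨g, rfl⟩ := QuotientGroup.mk_surjective x
    have h1 : g ^ k ∈ T := by
      rw [← QuotientGroup.eq_one_iff]
      push_cast
      exact hx
    have h2 : IsOfFinOrder g := isOfFinOrder_of_pow hk ((hTmem _).mp h1)
    rw [QuotientGroup.eq_one_iff]
    exact (hTmem g).mpr h2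
  have hchar : ∀ φ : MulAut G, ∀ t ∈ T, φ t ∈ T := by
    intro φ t ht
    exact (hTmem _).mpr ((φ : G →* G).isOfFinOrder ((hTmem t).mp ht))
  haveI hfinQ := orbit_quot_finite_quotient T hchar hfin
  have hradQ : ∀ x : G ⧸ T, ∀ k : ℕ, 0 < k → ∃ y, y ^ k = x :=
    radicable_of_fin_orbits htf hfinQ
  obtain ⟨c, hc⟩ := Group.IsNilpotent.nilpotent G
  have hheight : T ≤ Subgroup.upperCentralSeries G c := hc ▸ le_top
  obtain ⟨K, hKnorm, hKinf, hKdec⟩ :=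
    height_split n hn c G inferInstance inferInstance T inferInstance hTn hheight htf hradQ
  refine ⟨K, T, hKnorm, hTnorm, hTmem, ?_, ?_, ?_⟩
  · -- torsion-freeness of K
    intro k hkK hne hfin'
    have h1 : k ∈ K ⊓ T := Subgroup.mem_inf.mpr ⟨hkK, (hTmem k).mpr hfin'⟩
    rw [hKinf, Subgroup.mem_bot] at h1
    exact hne h1
  · -- radicability of K
    intro k hkK n' hn'
    let ψ : ↥K →* G ⧸ T := (QuotientGroup.mk' T).comp K.subtype
    have hψinj : Function.Injective ψ := by
      rw [← MonoidHom.ker_eq_bot_iff]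
      apply le_antisymm ?_ bot_le
      rintro ⟨x, hxK⟩ hx
      have h1 : (QuotientGroup.mk' T) x = 1 := hx
      rw [QuotientGroup.mk'_apply, QuotientGroup.eq_one_iff] at h1
      have h2 : x ∈ K ⊓ T := Subgroup.mem_inf.mpr ⟨hxK, h1⟩
      rw [hKinf, Subgroup.mem_bot] at h2
      rw [Subgroup.mem_bot]
      exact Subtype.ext h2
    have hψsurj : Function.Surjective ψ := by
      intro u
      obtain ⟨g, rfl⟩ := QuotientGroup.mk_surjective u
      obtain ⟨x, hxK, t, ht, rfl⟩ := hKdec g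
      refine ⟨⟨x, hxK⟩, ?_⟩
      show (QuotientGroup.mk' T) x = QuotientGroup.mk (x * t)
      rw [QuotientGroup.mk'_apply, QuotientGroup.eq]
      have : x⁻¹ * (x * t) ∈ T := by simpa using ht
      exact this
    obtain ⟨u, hu⟩ := hradQ (ψ ⟨k, hkK⟩) n' hn'
    obtain ⟨y, rfl⟩ := hψsurj u
    have h1 : ψ (y ^ n') = ψ ⟨k, hkK⟩ := by rw [map_pow, hu]
    have h2 : y ^ n' = ⟨k, hkK⟩ := hψinj h1
    refine ⟨(y : G), y.2, ?_⟩
    have := congrArg Subtype.val h2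
    push_cast at this
    exact this
  · -- complement
    apply Subgroup.isComplement'_of_disjoint_and_mul_eq_univ
    · exact disjoint_iff.mpr hKinf
    · rw [Set.eq_univ_iff_forall]
      intro g
      obtain ⟨x, hxK, t, ht, rfl⟩ := hKdec g
      exact Set.mem_mul.mpr ⟨x, hxK, t, ht, rfl⟩
end

section
/- Let G be a virtually nilpotent group with finitely many automorphism orbits. Then G has a torsion-free radicable nilpotent subgroup K and a torsion subgroup H such that G = K ⋊ H (K is normal, K ∩ H = 1, KH = G). -/
set_option linter.unusedSectionVars false

open Subgroup
open scoped commutatorElement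

namespace VNSplit

variable {G : Type*} [Group G]

/-! ### Generic helpers -/

lemma isComplement'_of_disjoint_cover {K H : Subgroup G}
    (hdis : K ⊓ H = ⊥) (hcov : ∀ g : G, ∃ k ∈ K, ∃ h ∈ H, k * h = g) :
    K.IsComplement' H := by
  constructor
  · rintro ⟨⟨k₁, hk₁⟩, ⟨h₁, hh₁⟩⟩ ⟨⟨k₂, hk₂⟩, ⟨h₂, hh₂⟩⟩ hmul
    simp only [Subtype.coe_mk] at hmul
    have key : k₂⁻¹ * k₁ ∈ K ⊓ H := by
      constructor
      · exact K.mul_mem (K.inv_mem hk₂) hk₁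
      · have h0 : k₂⁻¹ * k₁ * h₁ = h₂ := by rw [mul_assoc, hmul, inv_mul_cancel_left]
        have : k₂⁻¹ * k₁ = h₂ * h₁⁻¹ := by rw [← h0]; group
        rw [this]
        exact H.mul_mem hh₂ (H.inv_mem hh₁)
    rw [hdis, mem_bot] at key
    have hk : k₁ = k₂ := by
      have := key
      rwa [inv_mul_eq_one, eq_comm] at this
    have hh : h₁ = h₂ := by
      apply mul_left_cancel (a := k₁)
      rw [hmul, hk]
    simp only [Prod.ext_iff, Subtype.ext_iff]
    exact ⟨hk, hh⟩
  · intro g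
    obtain ⟨k, hk, h, hh, hkh⟩ := hcov g
    exact ⟨⟨⟨k, hk⟩, ⟨h, hh⟩⟩, hkh⟩

lemma nilpotent_of_le {A B : Subgroup G} (h : A ≤ B) (hB : Group.IsNilpotent B) :
    Group.IsNilpotent A := by
  haveI := hB
  exact nilpotent_of_mulEquiv (Subgroup.subgroupOfEquivOfLe h)

lemma normal_subgroupOf {A H : Subgroup G} (hA : A.Normal) : (A.subgroupOf H).Normal := by
  constructor
  intro n hn g
  simp only [Subgroup.mem_subgroupOf] at hn ⊢
  exact hA.conj_mem _ hn _

/-! ### P1 : bounded orders -/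

lemma exists_order_bound (hfin : Finite (MulAction.orbitRel.Quotient (MulAut G) G)) :
    ∃ B : ℕ, ∀ g : G, orderOf g ≤ B := by
  have hwd : ∀ (a b : G), (MulAction.orbitRel (MulAut G) G).r a b → orderOf a = orderOf b := by
    intro a b hab
    rw [MulAction.orbitRel_apply, MulAction.mem_orbit_iff] at hab
    obtain ⟨φ, hφ⟩ := hab
    have : φ • b = φ b := rfl
    rw [← hφ, this]
    exact orderOf_injective φ.toMonoidHom φ.injective b
  let f : MulAction.orbitRel.Quotient (MulAut G) G → ℕ := Quotient.lift orderOf hwd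
  have hfr : (Set.range f).Finite := Set.finite_range f
  obtain ⟨B, hB⟩ := hfr.bddAbove
  refine ⟨B, fun g => ?_⟩
  have : orderOf g = f (Quotient.mk _ g) := rfl
  rw [this]
  exact hB (Set.mem_range_self _)

/-! ### P2 : the radicable part K -/

/-- The subgroup generated by `n`-th powers. -/
def powSubgroup (G : Type*) [Group G] (n : ℕ) : Subgroup G :=
  Subgroup.closure (Set.range fun g : G => g ^ n)

lemma powSubgroup_map_aut (n : ℕ) (f : G ≃* G) :
    (powSubgroup G n).map f.toMonoidHom = powSubgroup G n := by
  unfold powSubgroup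
  rw [MonoidHom.map_closure]
  congr 1
  ext x
  constructor
  · rintro ⟨y, ⟨g, rfl⟩, rfl⟩
    exact ⟨f g, by simp [map_pow]⟩
  · rintro ⟨g, rfl⟩
    exact ⟨(f.symm g) ^ n, ⟨f.symm g, rfl⟩, by simp [map_pow]⟩

lemma powSubgroup_normal (n : ℕ) : (powSubgroup G n).Normal := by
  constructor
  intro x hx g
  have h1 : g * x * g⁻¹ = (MulAut.conj g).toMonoidHom x := rfl
  rw [h1, ← powSubgroup_map_aut n (MulAut.conj g)]
  exact Subgroup.mem_map_of_mem _ hx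

lemma pow_mem_powSubgroup (n : ℕ) (g : G) : g ^ n ∈ powSubgroup G n :=
  Subgroup.subset_closure ⟨g, rfl⟩

lemma pow_pow_mem_powSubgroup (n t : ℕ) (g : G) : g ^ (n * t) ∈ powSubgroup G n := by
  rw [pow_mul]
  exact Subgroup.pow_mem _ (pow_mem_powSubgroup n g) t

lemma powSubgroup_le_of_dvd {m n : ℕ} (h : m ∣ n) : powSubgroup G n ≤ powSubgroup G m := by
  rw [powSubgroup, Subgroup.closure_le]
  rintro x ⟨g, rfl⟩
  obtain ⟨k, rfl⟩ := h
  exact pow_pow_mem_powSubgroup m k g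

lemma exists_radicable_part (hfin : Finite (MulAction.orbitRel.Quotient (MulAut G) G)) :
    ∃ (K : Subgroup G) (e : ℕ), 0 < e ∧ K.Normal ∧ (∀ g : G, g ^ e ∈ K) ∧
      (∀ n : ℕ, 0 < n → K ≤ Subgroup.closure {x : G | ∃ k ∈ K, k ^ n = x}) := by
  classical
  set F : ℕ → Subgroup G := fun n => powSubgroup G (Nat.factorial (n + 1)) with hF
  have hanti : ∀ p q : ℕ, p ≤ q → F q ≤ F p := by
    intro p q hpq
    exact powSubgroup_le_of_dvd (Nat.factorial_dvd_factorial (by omega))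
  -- `F` has finite range, since each `F n` is `MulAut`-invariant
  have key : ∀ r : ℕ, ∀ x : G,
      Quotient.mk (MulAction.orbitRel (MulAut G) G) x ∈
        (Quotient.mk (MulAction.orbitRel (MulAut G) G) '' ((powSubgroup G r : Subgroup G) : Set G)) →
        x ∈ powSubgroup G r := by
    intro r x hx
    obtain ⟨y, hy, hxy⟩ := hx
    have hr : (MulAction.orbitRel (MulAut G) G).r x y := Quotient.exact hxy.symm
    rw [MulAction.orbitRel_apply, MulAction.mem_orbit_iff] at hr
    obtain ⟨φ, hφ⟩ := hr
    have hφy : φ • y = φ.toMonoidHom y := rfl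
    rw [← hφ, hφy, ← powSubgroup_map_aut r φ]
    exact Subgroup.mem_map_of_mem _ hy
  have hinj : ∀ p q : ℕ, (Quotient.mk (MulAction.orbitRel (MulAut G) G) '' (F p : Set G)) =
      (Quotient.mk (MulAction.orbitRel (MulAut G) G) '' (F q : Set G)) → F p = F q := by
    intro p q hpq
    apply le_antisymm
    · intro x hx
      exact key _ x (hpq ▸ Set.mem_image_of_mem _ hx)
    · intro x hx
      exact key _ x (hpq.symm ▸ Set.mem_image_of_mem _ hx)
  have hfinrange : (Set.range F).Finite := by
    have : Finite (Set (MulAction.orbitRel.Quotient (MulAut G) G)) := by infer_instance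
    have h2 : (Set.range (fun n => (Quotient.mk (MulAction.orbitRel (MulAut G) G) ''
        (F n : Set G)))).Finite := Set.toFinite _
    apply Set.Finite.of_finite_image (f := fun S : Subgroup G =>
      (Quotient.mk (MulAction.orbitRel (MulAut G) G) '' (S : Set G)))
    · apply h2.subset
      rintro _ ⟨_, ⟨n, rfl⟩, rfl⟩
      exact ⟨n, rfl⟩
    · rintro _ ⟨p, rfl⟩ _ ⟨q, rfl⟩ h
      exact hinj p q h
  -- stabilization
  obtain ⟨S, ⟨m, hm⟩, hSmin⟩ := Set.Finite.exists_minimalFor id _ hfinrange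
    (Set.range_nonempty F)
  have hstab : ∀ n : ℕ, m ≤ n → F n = F m := by
    intro n hn
    have h1 : F n ≤ F m := hanti m n hn
    have h2 : id S = id (F n) := le_antisymm (hSmin ⟨n, rfl⟩ (le_of_le_of_eq h1 hm)) (le_of_le_of_eq h1 hm)
    exact (h2.symm.trans hm.symm : F n = F m)
  refine ⟨F m, Nat.factorial (m + 1), Nat.factorial_pos _, powSubgroup_normal _, ?_, ?_⟩
  · intro g
    exact pow_mem_powSubgroup _ g
  · intro n hn
    set N := Nat.factorial (m + 1) * n with hN
    have hmN : m ≤ N := by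
      have h1 : m + 1 ≤ Nat.factorial (m + 1) := Nat.self_le_factorial _
      calc m ≤ m + 1 := by omega
        _ ≤ Nat.factorial (m + 1) := h1
        _ ≤ Nat.factorial (m + 1) * n := Nat.le_mul_of_pos_right _ hn
    have hFN : F N = F m := hstab N hmN
    -- N ∣ (N+1)!, so (m+1)! * n ∣ (N+1)!
    have hdvd : Nat.factorial (m + 1) * n ∣ Nat.factorial (N + 1) :=
      dvd_trans (by rw [← hN]; exact Nat.dvd_factorial (by positivity) (by omega)) dvd_rfl
    obtain ⟨t, ht⟩ := hdvd
    have key2 : powSubgroup G (Nat.factorial (N + 1)) ≤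
        Subgroup.closure {x : G | ∃ k ∈ F m, k ^ n = x} := by
      rw [powSubgroup, Subgroup.closure_le]
      rintro _ ⟨g, rfl⟩
      show g ^ (Nat.factorial (N + 1)) ∈ _
      apply Subgroup.subset_closure
      show ∃ k ∈ F m, k ^ n = g ^ (Nat.factorial (N + 1))
      refine ⟨g ^ (Nat.factorial (m + 1) * t), pow_pow_mem_powSubgroup _ t g, ?_⟩
      rw [← pow_mul]
      congr 1
      rw [ht]
      ring
    have hle : F m ≤ powSubgroup G (Nat.factorial (N + 1)) := le_of_eq hFN.symm
    exact le_trans hle key2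
  

/-! ### P3 : K is contained in any finite-index subgroup -/

/-- transfer of the generation property into the subgroup -/
lemma mem_closure_pow_subgroup {K : Subgroup G} {n : ℕ}
    (hgen : K ≤ Subgroup.closure {x : G | ∃ k ∈ K, k ^ n = x}) (x : K) :
    x ∈ Subgroup.closure (Set.range fun y : K => y ^ n) := by
  have hle : Subgroup.closure {x : G | ∃ k ∈ K, k ^ n = x} ≤
      Subgroup.map K.subtype (Subgroup.closure (Set.range fun y : K => y ^ n)) := by
    rw [Subgroup.closure_le]
    rintro _ ⟨k, hk, rfl⟩
    exact ⟨(⟨k, hk⟩ : K) ^ n, Subgroup.subset_closure ⟨⟨k, hk⟩, rfl⟩, rfl⟩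
  obtain ⟨y, hy, hyx⟩ := hle (hgen x.2)
  have : y = x := Subtype.ext hyx
  rwa [← this]

lemma le_of_finiteIndex {K N : Subgroup G}
    (hgen : ∀ n : ℕ, 0 < n → K ≤ Subgroup.closure {x : G | ∃ k ∈ K, k ^ n = x})
    (hN : N.FiniteIndex) : K ≤ N := by
  haveI := hN
  set D := (N.subgroupOf K).normalCore with hD
  haveI : D.Normal := Subgroup.normalCore_normal _
  haveI : D.FiniteIndex := Subgroup.finiteIndex_normalCore _
  haveI : Finite (K ⧸ D) := Subgroup.finite_quotient_of_finiteIndex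
  set c := Nat.card (K ⧸ D) with hc
  have hc0 : 0 < c := Nat.card_pos
  have hall : ∀ x : K, (QuotientGroup.mk x : K ⧸ D) = 1 := by
    intro x
    have hx := mem_closure_pow_subgroup (hgen c hc0) x
    have himg : (QuotientGroup.mk x : K ⧸ D) ∈ Subgroup.map (QuotientGroup.mk' D)
        (Subgroup.closure (Set.range fun y : K => y ^ c)) :=
      Subgroup.mem_map_of_mem _ hx
    rw [MonoidHom.map_closure] at himg
    have : ((QuotientGroup.mk' D) '' (Set.range fun y : K => y ^ c)) ⊆ {1} := by
      rintro _ ⟨_, ⟨y, rfl⟩, rfl⟩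
      simp only [Set.mem_singleton_iff, map_pow]
      rw [hc]
      exact pow_card_eq_one'
    have h1 : Subgroup.closure ((QuotientGroup.mk' D) ''
        (Set.range fun y : K => y ^ c)) ≤ ⊥ := by
      rw [Subgroup.closure_le]
      intro z hz
      simp only [Subgroup.coe_bot, Set.mem_singleton_iff]
      exact this hz
    have := h1 himg
    rwa [Subgroup.mem_bot] at this
  intro k hk
  have : (⟨k, hk⟩ : K) ∈ D := by
    have := hall ⟨k, hk⟩
    rwa [← QuotientGroup.eq_one_iff]
    -- fallback
  have hD2 : D ≤ N.subgroupOf K := Subgroup.normalCore_le _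
  have := hD2 this
  rwa [Subgroup.mem_subgroupOf] at this

/-! ### P4 : radicability -/

lemma lcs_le_map_of_surjective {Γ Γ' : Type*} [Group Γ] [Group Γ'] (f : Γ →* Γ')
    (hf : Function.Surjective f) (n : ℕ) :
    Subgroup.lowerCentralSeries (⊤ : Subgroup Γ') n ≤ Subgroup.map f (Subgroup.lowerCentralSeries (⊤ : Subgroup Γ) n) := by
  induction n with
  | zero =>
    intro x _
    obtain ⟨y, rfl⟩ := hf x
    exact Subgroup.mem_map_of_mem _ (Subgroup.mem_top y)
  | succ n ih =>
    rw [Subgroup.lowerCentralSeries_succ, Subgroup.commutator_def, Subgroup.closure_le]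
    rintro _ ⟨p, hp, q, -, rfl⟩
    obtain ⟨x, hx, rfl⟩ := ih hp
    obtain ⟨y, rfl⟩ := hf q
    show ⁅f x, f y⁆ ∈ _
    rw [← map_commutatorElement]
    apply Subgroup.mem_map_of_mem
    have : Subgroup.lowerCentralSeries (⊤ : Subgroup Γ) (n + 1) = ⁅Subgroup.lowerCentralSeries (⊤ : Subgroup Γ) n, (⊤ : Subgroup Γ)⁆ := rfl
    rw [this]
    exact Subgroup.commutator_mem_commutator hx (Subgroup.mem_top y)

lemma central_divisible {Γ : Type*} [Group Γ] (L : Subgroup Γ)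
    (hcent : L ≤ Subgroup.center Γ)
    (hLgen : ∀ m : ℕ, 0 < m → L ≤ Subgroup.closure {x : Γ | ∃ w ∈ L, w ^ m = x}) :
    ∀ z ∈ L, ∀ m : ℕ, 0 < m → ∃ v ∈ L, v ^ m = z := by
  intro z hz m hm
  set ψ : L →* Γ :=
    { toFun := fun w => (w : Γ) ^ m
      map_one' := by simp
      map_mul' := by
        intro a b
        have hc : Commute (a : Γ) (b : Γ) :=
          (Subgroup.mem_center_iff.mp (hcent a.2) b).symm
        simp only [Subgroup.coe_mul]
        exact hc.mul_pow m } with hψ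
  have hle : Subgroup.closure {x : Γ | ∃ w ∈ L, w ^ m = x} ≤ ψ.range := by
    rw [Subgroup.closure_le]
    rintro _ ⟨w, hw, rfl⟩
    exact ⟨⟨w, hw⟩, rfl⟩
  obtain ⟨v, hv⟩ := hle (hLgen m hm hz)
  exact ⟨v, v.2, hv⟩

universe u

lemma radicable_aux (c : ℕ) : ∀ (Γ : Type u) [Group Γ],
    Subgroup.lowerCentralSeries (⊤ : Subgroup Γ) c = ⊥ →
    (∀ n : ℕ, 0 < n → (Subgroup.closure (Set.range fun g : Γ => g ^ n) = ⊤)) →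
    ∀ (g : Γ) (n : ℕ), 0 < n → ∃ x : Γ, x ^ n = g := by
  induction c with
  | zero =>
    intro Γ _ hbot _ g n _
    have : g ∈ (⊥ : Subgroup Γ) := hbot ▸ Subgroup.mem_top g
    rw [Subgroup.mem_bot] at this
    exact ⟨1, by rw [this, one_pow]⟩
  | succ c ih =>
    intro Γ _ hbot hgen g n hn
    set L := Subgroup.lowerCentralSeries (⊤ : Subgroup Γ) c with hL
    have hcent : L ≤ Subgroup.center Γ := by
      intro x hx
      rw [Subgroup.mem_center_iff]
      intro g'
      have h1 : ⁅x, g'⁆ ∈ Subgroup.lowerCentralSeries (⊤ : Subgroup Γ) (c + 1) := by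
        rw [Subgroup.lowerCentralSeries_succ]
        exact Subgroup.commutator_mem_commutator hx (Subgroup.mem_top g')
      rw [hbot, Subgroup.mem_bot] at h1
      exact (commutatorElement_eq_one_iff_commute.mp h1).symm
    have hLgen : ∀ m : ℕ, 0 < m → L ≤ Subgroup.closure {x : Γ | ∃ w ∈ L, w ^ m = x} := by
      intro m hm
      match c, hL with
      | 0, hL =>
        intro x _
        have h2 : Subgroup.closure (Set.range fun g : Γ => g ^ m) ≤
            Subgroup.closure {x : Γ | ∃ w ∈ L, w ^ m = x} := by
          apply Subgroup.closure_mono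
          rintro _ ⟨g', rfl⟩
          exact ⟨g', by rw [hL]; exact Subgroup.mem_top _, rfl⟩
        apply h2
        rw [hgen m hm]
        exact Subgroup.mem_top _
      | (c' + 1), hL =>
        have hLdef : L = ⁅Subgroup.lowerCentralSeries (⊤ : Subgroup Γ) c', (⊤ : Subgroup Γ)⁆ := hL.trans rfl
        refine le_trans (le_of_eq hLdef) ?_
        rw [Subgroup.commutator_le]
        intro y hy b _
        -- the map g ↦ ⁅y, g⁆ is a homomorphism with central values
        have hval : ∀ b' : Γ, ⁅y, b'⁆ ∈ L := by
          intro b'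
          rw [hLdef]
          exact Subgroup.commutator_mem_commutator hy (Subgroup.mem_top b')
        set φ : Γ →* Γ :=
          { toFun := fun g' => ⁅y, g'⁆
            map_one' := by simp
            map_mul' := by
              intro a b'
              show ⁅y, a * b'⁆ = ⁅y, a⁆ * ⁅y, b'⁆
              have h1 : ⁅y, a * b'⁆ = ⁅y, a⁆ * (a * ⁅y, b'⁆ * a⁻¹) := by
                simp only [commutatorElement_def]
                group
              have h2 : a * ⁅y, b'⁆ * a⁻¹ = ⁅y, b'⁆ := by
                have := Subgroup.mem_center_iff.mp (hcent (hval b')) a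
                rw [this, mul_inv_cancel_right]
              rw [h1, h2] } with hφ
        have hb : b ∈ Subgroup.closure (Set.range fun g' : Γ => g' ^ m) := by
          rw [hgen m hm]; exact Subgroup.mem_top _
        have himg : φ b ∈ Subgroup.map φ (Subgroup.closure (Set.range fun g' : Γ => g' ^ m)) :=
          Subgroup.mem_map_of_mem _ hb
        rw [MonoidHom.map_closure] at himg
        have hsub : Subgroup.closure (φ '' (Set.range fun g' : Γ => g' ^ m)) ≤
            Subgroup.closure {x : Γ | ∃ w ∈ L, w ^ m = x} := by
          apply Subgroup.closure_mono
          rintro _ ⟨_, ⟨x, rfl⟩, rfl⟩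
          exact ⟨φ x, hval x, by rw [← map_pow]⟩
        exact hsub himg
    have hdiv := central_divisible L hcent hLgen
    -- pass to the quotient
    haveI : L.Normal := Subgroup.lowerCentralSeries_normal ⊤ c
    have hbot' : Subgroup.lowerCentralSeries (⊤ : Subgroup (Γ ⧸ L)) c = ⊥ := by
      apply le_antisymm _ bot_le
      refine le_trans (lcs_le_map_of_surjective (QuotientGroup.mk' L)
        QuotientGroup.mk_surjective c) ?_
      rintro _ ⟨x, hx, rfl⟩
      rw [Subgroup.mem_bot]
      exact (QuotientGroup.eq_one_iff x).mpr hx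
    have hgen' : ∀ m : ℕ, 0 < m →
        Subgroup.closure (Set.range fun g' : Γ ⧸ L => g' ^ m) = ⊤ := by
      intro m hm
      apply le_antisymm le_top
      intro z _
      obtain ⟨x, rfl⟩ := QuotientGroup.mk_surjective z
      have hx : x ∈ Subgroup.closure (Set.range fun g' : Γ => g' ^ m) := by
        rw [hgen m hm]; exact Subgroup.mem_top _
      have himg := Subgroup.mem_map_of_mem (QuotientGroup.mk' L) hx
      rw [MonoidHom.map_closure] at himg
      refine Subgroup.closure_mono ?_ himg
      rintro _ ⟨_, ⟨x', rfl⟩, rfl⟩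
      exact ⟨QuotientGroup.mk' L x', by rw [map_pow]⟩
    obtain ⟨xb, hxb⟩ := ih (Γ ⧸ L) hbot' hgen' (QuotientGroup.mk g) n hn
    obtain ⟨x, rfl⟩ := QuotientGroup.mk_surjective xb
    have hmem : (x ^ n)⁻¹ * g ∈ L := by
      rw [← QuotientGroup.eq, QuotientGroup.mk_pow]
      exact hxb
    obtain ⟨v, hvL, hv⟩ := hdiv _ hmem n hn
    refine ⟨x * v, ?_⟩
    have hcomm : Commute x v := Subgroup.mem_center_iff.mp (hcent hvL) x
    rw [hcomm.mul_pow, hv, mul_inv_cancel_left]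

lemma radicable_of_nilpotent_gen (Γ : Type u) [Group Γ] [hnil : Group.IsNilpotent Γ]
    (hgen : ∀ n : ℕ, 0 < n → (Subgroup.closure (Set.range fun g : Γ => g ^ n) = ⊤)) :
    ∀ (g : Γ) (n : ℕ), 0 < n → ∃ x : Γ, x ^ n = g := by
  obtain ⟨c, hc⟩ := Subgroup.nilpotent_iff_lowerCentralSeries.mp hnil
  exact radicable_aux c Γ hc hgen

/-! ### P5 : torsion-freeness -/

lemma torsionfree_of_radicable {K : Subgroup G} (B : ℕ)
    (hB : ∀ g : G, orderOf g ≤ B)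
    (hrad : ∀ k ∈ K, ∀ n : ℕ, 0 < n → ∃ x ∈ K, x ^ n = k) :
    ∀ k ∈ K, k ≠ 1 → ¬ IsOfFinOrder k := by
  intro k hkK hk1 hord
  set d := orderOf k with hd
  have hd1 : d ≠ 1 := by
    intro h
    exact hk1 (orderOf_eq_one_iff.mp h)
  have hd0 : 0 < d := hord.orderOf_pos
  set p := d.minFac with hp'
  have hp : p.Prime := Nat.minFac_prime hd1
  set k' := k ^ (d / p) with hk'def
  have hdp : (d / p) ∣ d := Nat.div_dvd_of_dvd (Nat.minFac_dvd d)
  have hdp0 : 0 < d / p := Nat.div_pos (Nat.minFac_le hd0) hp.pos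
  have hk'ord : orderOf k' = p := by
    rw [hk'def, orderOf_pow' k hdp0.ne', ← hd, Nat.gcd_eq_right hdp,
      Nat.div_div_self (Nat.minFac_dvd d) hd0.ne']
  have hk'1 : k' ≠ 1 := by
    intro h
    rw [h, orderOf_one] at hk'ord
    exact hp.ne_one hk'ord.symm
  have hk'K : k' ∈ K := K.pow_mem hkK _
  obtain ⟨x, hxK, hxn⟩ := hrad k' hk'K (p ^ (B + 1)) (pow_pos hp.pos _)
  have hx1 : x ^ (p ^ (B + 2)) = 1 := by
    rw [pow_succ, pow_mul, hxn, ← hk'ord, pow_orderOf_eq_one]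
  have hdvd : orderOf x ∣ p ^ (B + 2) := orderOf_dvd_of_pow_eq_one hx1
  have hndvd : ¬ (orderOf x ∣ p ^ (B + 1)) := by
    intro h
    exact hk'1 (hxn ▸ orderOf_dvd_iff_pow_eq_one.mp h)
  obtain ⟨i, hi, hoi⟩ := (Nat.dvd_prime_pow hp).mp hdvd
  have hiB : i = B + 2 := by
    by_contra hne
    exact hndvd (hoi ▸ pow_dvd_pow p (by omega))
  have hlarge : orderOf x = p ^ (B + 2) := by rw [hoi, hiB]
  have h2B : 2 ^ (B + 2) ≤ p ^ (B + 2) := Nat.pow_le_pow_left hp.two_le _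
  have hBlt : B < 2 ^ (B + 2) := lt_of_lt_of_le (Nat.lt_two_pow_self (n := B)) (Nat.pow_le_pow_right (by omega) (by omega))
  have := hB x
  omega

/-! ### Commutator power identity -/

lemma commutator_pow_left {Γ : Type*} [Group Γ] (a b : Γ) (hc : Commute ⁅a, b⁆ a) (k : ℕ) :
    ⁅a ^ k, b⁆ = ⁅a, b⁆ ^ k := by
  induction k with
  | zero => simp [commutatorElement_def]
  | succ k ih =>
    have key : ⁅a * a ^ k, b⁆ = a * ⁅a ^ k, b⁆ * a⁻¹ * ⁅a, b⁆ := by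
      simp only [commutatorElement_def]
      group
    have h1 : a ^ (k + 1) = a * a ^ k := by rw [pow_succ']
    rw [h1, key, ih]
    have h2 : a * ⁅a, b⁆ ^ k = ⁅a, b⁆ ^ k * a := ((hc.pow_left k).symm).eq
    rw [mul_assoc a (⁅a, b⁆ ^ k), ← mul_assoc a, h2, mul_assoc, mul_assoc, mul_inv_cancel_left,
      ← pow_succ]

/-! ### Torsion-free upper central factors -/

section UCS
variable {Γ : Type*} [Group Γ]

lemma image_ucs_central {i : ℕ} {z : Γ} (hz : z ∈ Subgroup.upperCentralSeries Γ (i + 1)) :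
    (QuotientGroup.mk' (Subgroup.upperCentralSeries Γ i)) z ∈
      Subgroup.center (Γ ⧸ Subgroup.upperCentralSeries Γ i) := by
  rw [Subgroup.mem_center_iff]
  intro w
  obtain ⟨y, rfl⟩ := QuotientGroup.mk'_surjective _ w
  have h1 : ⁅z, y⁆ ∈ Subgroup.upperCentralSeries Γ i := Subgroup.mem_upperCentralSeries_succ_iff.mp hz y
  have h2 : (QuotientGroup.mk' (Subgroup.upperCentralSeries Γ i)) ⁅z, y⁆ = 1 := by
    rw [QuotientGroup.mk'_apply, QuotientGroup.eq_one_iff]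
    exact h1
  rw [map_commutatorElement] at h2
  exact (commutatorElement_eq_one_iff_commute.mp h2).symm.eq

lemma ucs_factor_tf (htf : ∀ x : Γ, ∀ n : ℕ, 0 < n → x ^ n = 1 → x = 1) :
    ∀ (i : ℕ) (x : Γ) (n : ℕ), 0 < n → x ∈ Subgroup.upperCentralSeries Γ (i + 1) →
      x ^ n ∈ Subgroup.upperCentralSeries Γ i → x ∈ Subgroup.upperCentralSeries Γ i := by
  intro i
  induction i with
  | zero =>
    intro x n hn hx hxn
    have h1 : x ^ n = 1 := by rwa [Subgroup.upperCentralSeries_zero, Subgroup.mem_bot] at hxn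
    have h2 : x = 1 := htf x n hn h1
    rw [h2, Subgroup.upperCentralSeries_zero, Subgroup.mem_bot]
  | succ i ih =>
    intro x n hn hx hxn
    rw [Subgroup.mem_upperCentralSeries_succ_iff]
    intro y
    have hdmem : ⁅x, y⁆ ∈ Subgroup.upperCentralSeries Γ (i + 1) :=
      Subgroup.mem_upperCentralSeries_succ_iff.mp hx y
    have hdn : ⁅x, y⁆ ^ n ∈ Subgroup.upperCentralSeries Γ i := by
      set π := QuotientGroup.mk' (Subgroup.upperCentralSeries Γ i) with hπ
      have hπd : π ⁅x, y⁆ = ⁅π x, π y⁆ := map_commutatorElement π x y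
      have hcentd := image_ucs_central hdmem
      have hcomm : Commute ⁅π x, π y⁆ (π x) := by
        rw [← hπd]
        exact (Subgroup.mem_center_iff.mp hcentd (π x)).symm
      have hB := commutator_pow_left (π x) (π y) hcomm n
      have hxncent := image_ucs_central hxn
      have h1 : ⁅(π x) ^ n, π y⁆ = 1 := by
        rw [← map_pow]
        exact commutatorElement_eq_one_iff_commute.mpr
          ((Subgroup.mem_center_iff.mp hxncent (π y)).symm)
      have h2 : π (⁅x, y⁆ ^ n) = 1 := by
        rw [map_pow, hπd, ← hB, h1]
      rwa [QuotientGroup.mk'_apply, QuotientGroup.eq_one_iff] at h2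
    exact ih ⁅x, y⁆ n hn hdmem hdn

lemma ucs_pow_descend (htf : ∀ x : Γ, ∀ n : ℕ, 0 < n → x ^ n = 1 → x = 1) :
    ∀ (j i : ℕ), i ≤ j → ∀ (x : Γ) (n : ℕ), 0 < n → x ∈ Subgroup.upperCentralSeries Γ j →
      x ^ n ∈ Subgroup.upperCentralSeries Γ i → x ∈ Subgroup.upperCentralSeries Γ i := by
  intro j
  induction j with
  | zero =>
    intro i hij x n hn hx _
    have : i = 0 := by omega
    subst this
    exact hx
  | succ j ih =>
    intro i hij x n hn hx hxn
    rcases Nat.eq_or_lt_of_le hij with rfl | hlt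
    · exact hx
    · have hij' : i ≤ j := by omega
      apply ih i hij' x n hn _ hxn
      exact ucs_factor_tf htf j x n hn hx (Subgroup.upperCentralSeries_mono Γ hij' hxn)

end UCS

/-! ### The mapped upper central series chain -/

section Chain
variable {G : Type*} [Group G] (K : Subgroup G) [K.Normal]

/-- The upper central series of `K`, as subgroups of `G`. -/
def ucsMap (i : ℕ) : Subgroup G := (Subgroup.upperCentralSeries K i).map K.subtype

lemma ucsMap_zero : ucsMap K 0 = ⊥ := by
  have h : Subgroup.upperCentralSeries K 0 = ⊥ := Subgroup.upperCentralSeries_zero K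
  rw [ucsMap, h, Subgroup.map_bot]

lemma ucsMap_mono {i j : ℕ} (h : i ≤ j) : ucsMap K i ≤ ucsMap K j :=
  Subgroup.map_mono (Subgroup.upperCentralSeries_mono _ h)

lemma ucsMap_le (i : ℕ) : ucsMap K i ≤ K := Subgroup.map_subtype_le _

lemma ucsMap_normal (i : ℕ) : (ucsMap K i).Normal := by
  constructor
  rintro x hx g
  obtain ⟨a, ha, rfl⟩ := hx
  set e : K ≃* K := (MulAut.conjNormal g : MulAut K) with he
  have h1 : e a ∈ Subgroup.upperCentralSeries K i := by
    have h2 := Subgroup.comap_upperCentralSeries e i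
    have h4 : a ∈ Subgroup.comap (e : K →* K) (Subgroup.upperCentralSeries K i) := by
      rw [h2]
      exact ha
    exact Subgroup.mem_comap.mp h4
  have h3 : (K.subtype (e a) : G) = g * K.subtype a * g⁻¹ := MulAut.conjNormal_apply g a
  rw [← h3]
  exact Subgroup.mem_map_of_mem _ h1

lemma ucsMap_top [hnil : Group.IsNilpotent K] :
    ucsMap K (Group.nilpotencyClass K) = K := by
  rw [ucsMap, Subgroup.upperCentralSeries_nilpotencyClass]
  ext x
  constructor
  · rintro ⟨a, -, rfl⟩
    exact a.2
  · intro hx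
    exact ⟨⟨x, hx⟩, Subgroup.mem_top _, rfl⟩

lemma ucsMap_comm {i : ℕ} {x y : G} (hx : x ∈ ucsMap K (i + 1)) (hy : y ∈ ucsMap K (i + 1)) :
    ⁅x, y⁆ ∈ ucsMap K i := by
  obtain ⟨a, ha, rfl⟩ := hx
  obtain ⟨b, hb, rfl⟩ := hy
  have h1 : ⁅a, b⁆ ∈ Subgroup.upperCentralSeries K i := Subgroup.mem_upperCentralSeries_succ_iff.mp ha b
  have h2 := Subgroup.mem_map_of_mem K.subtype h1
  rwa [map_commutatorElement] at h2

lemma ucsMap_comm_K {i : ℕ} {k x : G} (hk : k ∈ K) (hx : x ∈ ucsMap K (i + 1)) :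
    ⁅k, x⁆ ∈ ucsMap K i := by
  obtain ⟨a, ha, rfl⟩ := hx
  have h1 : ⁅a, (⟨k, hk⟩ : K)⁆ ∈ Subgroup.upperCentralSeries K i :=
    Subgroup.mem_upperCentralSeries_succ_iff.mp ha _
  have h2 := Subgroup.mem_map_of_mem K.subtype h1
  rw [map_commutatorElement] at h2
  rw [← commutatorElement_inv]
  exact Subgroup.inv_mem _ h2

lemma ucsMap_ht [Group.IsNilpotent K]
    (htfK : ∀ x : K, ∀ n : ℕ, 0 < n → x ^ n = 1 → x = 1)
    {i : ℕ} {x : G} {n : ℕ} (hn : 0 < n) (hx : x ∈ ucsMap K (i + 1))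
    (hxn : x ^ n ∈ ucsMap K i) : x ∈ ucsMap K i := by
  obtain ⟨a, ha, rfl⟩ := hx
  obtain ⟨b, hb, hba⟩ := hxn
  have hab : a ^ n = b := by
    apply Subtype.ext
    push_cast
    exact hba.symm
  rw [← hab] at hb
  exact Subgroup.mem_map_of_mem _ (ucs_factor_tf htfK i a n hn ha hb)

lemma ucsMap_hd [Group.IsNilpotent K]
    (htfK : ∀ x : K, ∀ n : ℕ, 0 < n → x ^ n = 1 → x = 1)
    (hrad : ∀ k ∈ K, ∀ n : ℕ, 0 < n → ∃ y ∈ K, y ^ n = k)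
    {i : ℕ} {x : G} {n : ℕ} (hn : 0 < n) (hx : x ∈ ucsMap K (i + 1)) :
    ∃ y ∈ ucsMap K (i + 1), y ^ n = x := by
  obtain ⟨y, hyK, hyx⟩ := hrad x (ucsMap_le K _ hx) n hn
  obtain ⟨c, hc, hcx⟩ := hx
  have han : (⟨y, hyK⟩ : K) ^ n = c := by
    apply Subtype.ext
    push_cast
    rw [hyx, ← hcx]
    rfl
  have hanmem : (⟨y, hyK⟩ : K) ^ n ∈ Subgroup.upperCentralSeries K (i + 1) := han ▸ hc
  have hamem : (⟨y, hyK⟩ : K) ∈ Subgroup.upperCentralSeries K (i + 1) := by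
    rcases le_or_gt (i + 1) (Group.nilpotencyClass K) with hle | hlt
    · refine ucs_pow_descend htfK (Group.nilpotencyClass K) (i + 1) hle _ n hn ?_ hanmem
      rw [Subgroup.upperCentralSeries_nilpotencyClass]
      exact Subgroup.mem_top _
    · apply Subgroup.upperCentralSeries_mono _ (le_of_lt hlt)
      rw [Subgroup.upperCentralSeries_nilpotencyClass]
      exact Subgroup.mem_top _
  exact ⟨y, Subgroup.mem_map_of_mem _ hamem, hyx⟩

end Chain

/-! ### A finite-index nilpotent normal subgroup centralizes the factors -/

lemma ucsMap_M_comm {G : Type*} [Group G] (K N₀ : Subgroup G) [K.Normal] [N₀.Normal]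
    [Group.IsNilpotent K] [Group.IsNilpotent N₀] (hKN : K ≤ N₀) (e : ℕ) (he : 0 < e)
    (hexp : ∀ g : G, g ^ e ∈ K)
    (htfK : ∀ x : K, ∀ n : ℕ, 0 < n → x ^ n = 1 → x = 1) :
    ∀ (i : ℕ), ∀ g ∈ N₀, ∀ x ∈ ucsMap K (i + 1), ⁅g, x⁆ ∈ ucsMap K i := by
  intro i
  suffices H : ∀ (j : ℕ), ∀ g ∈ N₀, ∀ x, x ∈ ucsMap K (i + 1) → x ∈ ucsMap N₀ j →
      ⁅g, x⁆ ∈ ucsMap K i by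
    intro g hg x hx
    apply H (Group.nilpotencyClass N₀) g hg x hx
    rw [ucsMap_top]
    exact hKN (ucsMap_le K _ hx)
  intro j
  induction j with
  | zero =>
    intro g hg x hx hxY
    rw [ucsMap_zero, Subgroup.mem_bot] at hxY
    subst hxY
    have h1 : ⁅g, (1 : G)⁆ = 1 := by simp [commutatorElement_def]
    rw [h1]
    exact Subgroup.one_mem _
  | succ j ih =>
    intro g hg x hx hxY
    haveI hKiN := ucsMap_normal K i
    haveI hKi1N := ucsMap_normal K (i + 1)
    have hdY : ⁅g, x⁆ ∈ ucsMap N₀ j := ucsMap_comm_K N₀ hg hxY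
    have hdZ : ⁅g, x⁆ ∈ ucsMap K (i + 1) := by
      show g * x * g⁻¹ * x⁻¹ ∈ ucsMap K (i + 1)
      exact Subgroup.mul_mem _ (hKi1N.conj_mem x hx g) (Subgroup.inv_mem _ hx)
    have hgd : ⁅g, ⁅g, x⁆⁆ ∈ ucsMap K i := ih g hg ⁅g, x⁆ hdZ hdY
    set π := QuotientGroup.mk' (ucsMap K i) with hπ
    have hcomm : Commute ⁅π g, π x⁆ (π g) := by
      have h1 : π ⁅g, ⁅g, x⁆⁆ = 1 := by
        rw [QuotientGroup.mk'_apply, QuotientGroup.eq_one_iff]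
        exact hgd
      rw [map_commutatorElement, map_commutatorElement] at h1
      exact (commutatorElement_eq_one_iff_commute.mp h1).symm
    have hB := commutator_pow_left (π g) (π x) hcomm e
    have hge : ⁅g ^ e, x⁆ ∈ ucsMap K i := ucsMap_comm_K K (hexp g) hx
    have h2 : ⁅(π g) ^ e, π x⁆ = 1 := by
      rw [← map_pow, ← map_commutatorElement, QuotientGroup.mk'_apply,
        QuotientGroup.eq_one_iff]
      exact hge
    have h3 : π (⁅g, x⁆ ^ e) = 1 := by
      rw [map_pow, map_commutatorElement, ← hB, h2]
    have h4 : ⁅g, x⁆ ^ e ∈ ucsMap K i := by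
      rwa [QuotientGroup.mk'_apply, QuotientGroup.eq_one_iff] at h3
    exact ucsMap_ht K htfK he hdZ h4

/-! ### Local finiteness of torsion virtually nilpotent groups -/

lemma fg_nilpotent_torsion_finite_aux (c : ℕ) : ∀ (Γ : Type u) [Group Γ]
    [Group.IsNilpotent Γ] [Group.FG Γ], Group.nilpotencyClass Γ ≤ c →
    Monoid.IsTorsion Γ → Finite Γ := by
  induction c with
  | zero =>
    intro Γ _ _ _ hcls _
    haveI : Subsingleton Γ :=
      nilpotencyClass_zero_iff_subsingleton.mp (Nat.le_zero.mp hcls)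
    exact Finite.of_subsingleton
  | succ c ih =>
    intro Γ _ _ _ hcls htor
    set Z := Subgroup.center Γ with hZ
    have hcls' : Group.nilpotencyClass (Γ ⧸ Z) ≤ c := by
      rw [nilpotencyClass_quotient_center]
      omega
    have htor' : Monoid.IsTorsion (Γ ⧸ Z) := by
      intro x
      obtain ⟨y, rfl⟩ := QuotientGroup.mk_surjective x
      exact (QuotientGroup.mk' Z).isOfFinOrder (htor y)
    haveI hfinQ : Finite (Γ ⧸ Z) := ih (Γ ⧸ Z) hcls' htor'
    haveI : Z.FiniteIndex := Subgroup.finiteIndex_of_finite_quotient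
    haveI : Group.FG Z := Subgroup.fg_of_index_ne_zero Z
    haveI hfinZ : Finite Z := by
      letI : CommGroup Z := { Z.toGroup with
        mul_comm := fun a b => Subtype.ext (Subgroup.mem_center_iff.mp b.2 a) }
      refine @CommGroup.finite_of_fg_torsion _ _ ‹Group.FG Z› ?_
      intro x
      have hx := htor (x : Γ)
      rw [isOfFinOrder_iff_pow_eq_one] at hx ⊢
      obtain ⟨n, hn, hxn⟩ := hx
      exact ⟨n, hn, Subtype.ext (by push_cast; exact hxn)⟩
    exact Finite.of_equiv _ (Subgroup.groupEquivQuotientProdSubgroup (s := Z)).symm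

lemma finite_of_fg_torsion_virtually_nilpotent {Q : Type u} [Group Q] (M : Subgroup Q)
    [Group.IsNilpotent M] (hMfi : M.FiniteIndex) (e : ℕ) (he : 0 < e)
    (hexp : ∀ q : Q, q ^ e = 1) (S : Subgroup Q) (hSfg : S.FG) : Finite S := by
  haveI := hMfi
  haveI : Group.FG S := (Group.fg_iff_subgroup_fg S).mpr hSfg
  set M' := M.subgroupOf S with hM'
  haveI : M'.FiniteIndex := Subgroup.instFiniteIndex_subgroupOf M S
  have hM'eq : M' = (S ⊓ M).subgroupOf S := by
    ext x
    simp only [hM', Subgroup.mem_subgroupOf, Subgroup.mem_inf]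
    exact ⟨fun h => ⟨x.2, h⟩, fun h => h.2⟩
  haveI : Group.IsNilpotent M' := by
    rw [hM'eq]
    haveI : Group.IsNilpotent (S ⊓ M : Subgroup Q) :=
      nilpotent_of_le (inf_le_right : S ⊓ M ≤ M) inferInstance
    exact nilpotent_of_mulEquiv (Subgroup.subgroupOfEquivOfLe (inf_le_left : S ⊓ M ≤ S)).symm
  haveI : Group.FG M' := Subgroup.fg_of_index_ne_zero M'
  have htor : Monoid.IsTorsion M' := by
    intro x
    rw [isOfFinOrder_iff_pow_eq_one]
    refine ⟨e, he, ?_⟩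
    apply Subtype.ext
    apply Subtype.ext
    push_cast
    exact hexp _
  haveI : Finite M' :=
    fg_nilpotent_torsion_finite_aux (Group.nilpotencyClass M') M' le_rfl htor
  haveI : Finite (S ⧸ M') := Subgroup.finite_quotient_of_finiteIndex
  exact Finite.of_equiv _ (Subgroup.groupEquivQuotientProdSubgroup (s := M')).symm

/-! ### Splitting over a finite quotient (abelian kernel, averaging) -/

lemma commGroup_aux1 {A : Type*} [CommGroup A] (a b c : A) : c = (a * b * c⁻¹)⁻¹ * b * a := by
  have h : b⁻¹ * a⁻¹ * b * a = 1 := by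
    rw [mul_comm b⁻¹ a⁻¹, inv_mul_cancel_right, inv_mul_cancel]
  calc c = c * (b⁻¹ * a⁻¹ * b * a) := by rw [h, mul_one]
    _ = (a * b * c⁻¹)⁻¹ * b * a := by group

lemma commGroup_aux2 {A : Type*} [CommGroup A] (x y z : A) : (x⁻¹ * y * z)⁻¹ = y⁻¹ * z⁻¹ * x := by
  rw [mul_comm y⁻¹ z⁻¹]
  group

set_option maxHeartbeats 1000000 in
lemma finite_quotient_splitting {Γ : Type u} [Group Γ] (A : Subgroup Γ) [hAn : A.Normal]
    (habel : ∀ x ∈ A, ∀ y ∈ A, x * y = y * x)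
    (htf : ∀ x ∈ A, ∀ n : ℕ, 0 < n → x ^ n = 1 → x = 1)
    (hdiv : ∀ x ∈ A, ∀ n : ℕ, 0 < n → ∃ y ∈ A, y ^ n = x)
    [hfinq : Finite (Γ ⧸ A)] :
    ∃ H : Subgroup Γ, A.IsComplement' H := by
  classical
  letI : Fintype (Γ ⧸ A) := Fintype.ofFinite _
  letI instCG : CommGroup A :=
    { (inferInstance : Group A) with
      mul_comm := fun a b => Subtype.ext (habel _ a.2 _ b.2) }
  -- coercion lemmas for our instance
  have coe_mul : ∀ x y : A, ((x * y : A) : Γ) = (x : Γ) * (y : Γ) := fun _ _ => rfl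
  have coe_inv : ∀ x : A, ((x⁻¹ : A) : Γ) = (x : Γ)⁻¹ := fun _ => rfl
  have coe_pow : ∀ (x : A) (k : ℕ), ((x ^ k : A) : Γ) = (x : Γ) ^ k := by
    intro x k
    induction k with
    | zero => rfl
    | succ k ih => rw [pow_succ, pow_succ, coe_mul, ih]
  set n := Nat.card (Γ ⧸ A) with hn
  have hn0 : 0 < n := Nat.card_pos
  -- section
  set sec : Γ ⧸ A → Γ := fun q => q.out with hsec'
  have hsec : ∀ q : Γ ⧸ A, (QuotientGroup.mk (sec q) : Γ ⧸ A) = q := fun q =>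
    QuotientGroup.out_eq' q
  have hmkA : ∀ x ∈ A, (QuotientGroup.mk x : Γ ⧸ A) = 1 := fun x hx =>
    (QuotientGroup.eq_one_iff x).mpr hx
  -- the 2-cocycle
  have hcomem : ∀ q r : Γ ⧸ A, sec q * sec r * (sec (q * r))⁻¹ ∈ A := by
    intro q r
    rw [← QuotientGroup.eq_one_iff]
    have : (QuotientGroup.mk (sec q * sec r * (sec (q * r))⁻¹) : Γ ⧸ A) =
        QuotientGroup.mk (sec q) * QuotientGroup.mk (sec r) *
          (QuotientGroup.mk (sec (q * r)))⁻¹ := by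
      rw [QuotientGroup.mk_mul, QuotientGroup.mk_mul, QuotientGroup.mk_inv]
    rw [this, hsec, hsec, hsec, mul_inv_cancel]
  set coA : Γ ⧸ A → Γ ⧸ A → A := fun q r => ⟨sec q * sec r * (sec (q * r))⁻¹, hcomem q r⟩
    with hcoA
  -- conjugation homomorphisms
  have hconjmem : ∀ (g : Γ) (a : A), g * (a : Γ) * g⁻¹ ∈ A := fun g a => hAn.conj_mem _ a.2 g
  set conjA : Γ → (A →* A) := fun g =>
    { toFun := fun a => ⟨g * (a : Γ) * g⁻¹, hconjmem g a⟩
      map_one' := by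
        apply Subtype.ext
        simp
      map_mul' := by
        intro a b
        apply Subtype.ext
        show g * ((a * b : A) : Γ) * g⁻¹ = (g * a * g⁻¹) * (g * b * g⁻¹)
        rw [coe_mul]
        group } with hconjA
  have hconj_coe : ∀ (g : Γ) (a : A), ((conjA g a : A) : Γ) = g * (a : Γ) * g⁻¹ :=
    fun _ _ => rfl
  -- the sum
  set SS : Γ ⧸ A → A := fun q => ∏ r : Γ ⧸ A, coA q r with hSS
  -- cocycle identity
  have hcoc : ∀ q r s : Γ ⧸ A, coA q r * coA (q * r) s = conjA (sec q) (coA r s) * coA q (r * s) := by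
    intro q r s
    apply Subtype.ext
    rw [coe_mul, coe_mul, hconj_coe]
    show (sec q * sec r * (sec (q * r))⁻¹) * (sec (q * r) * sec s * (sec (q * r * s))⁻¹) =
      (sec q * (sec r * sec s * (sec (r * s))⁻¹) * (sec q)⁻¹) *
        (sec q * sec (r * s) * (sec (q * (r * s)))⁻¹)
    rw [← mul_assoc q r s]
    group
  -- summed identity
  have hkey : ∀ q r : Γ ⧸ A, (coA q r) ^ n = conjA (sec q) (SS r) * SS q * (SS (q * r))⁻¹ := by
    intro q r
    have h1 : (coA q r) ^ n * SS (q * r) = conjA (sec q) (SS r) * SS q := by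
      calc (coA q r) ^ n * SS (q * r)
          = ∏ s : Γ ⧸ A, (coA q r * coA (q * r) s) := by
            rw [Finset.prod_mul_distrib, Finset.prod_const, Finset.card_univ, hn,
              Nat.card_eq_fintype_card]
        _ = ∏ s : Γ ⧸ A, (conjA (sec q) (coA r s) * coA q (r * s)) := by
            apply Finset.prod_congr rfl
            intro s _
            exact hcoc q r s
        _ = (∏ s : Γ ⧸ A, conjA (sec q) (coA r s)) * ∏ s : Γ ⧸ A, coA q (r * s) := by
            rw [Finset.prod_mul_distrib]
        _ = conjA (sec q) (SS r) * SS q := by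
            congr 1
            · rw [hSS, map_prod]
            · exact Fintype.prod_equiv (Equiv.mulLeft r) _ _ (fun s => rfl)
    exact eq_mul_inv_of_mul_eq h1
  -- n-th roots in A
  have hroot : ∀ a : A, ∃ b : A, b ^ n = a := by
    intro a
    obtain ⟨y, hyA, hy⟩ := hdiv (a : Γ) a.2 n hn0
    refine ⟨⟨y, hyA⟩, Subtype.ext ?_⟩
    rw [coe_pow]
    exact hy
  have huniq : ∀ x y : A, x ^ n = y ^ n → x = y := by
    intro x y hxy
    have h1 : (x * y⁻¹) ^ n = 1 := by
      rw [mul_pow, hxy, inv_pow, mul_inv_cancel]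
    have h2 : ((x * y⁻¹ : A) : Γ) ^ n = 1 := by
      rw [← coe_pow, h1]
      rfl
    have h3 : ((x * y⁻¹ : A) : Γ) = 1 := htf _ (x * y⁻¹).2 n hn0 h2
    have h4 : x * y⁻¹ = 1 := Subtype.ext h3
    rw [← mul_inv_cancel y] at h4
    exact mul_right_cancel h4
  choose σ hσ using hroot
  set β : Γ ⧸ A → A := fun q => (σ (SS q))⁻¹ with hβ
  have hτkey : ∀ q r : Γ ⧸ A, β (q * r) = β q * conjA (sec q) (β r) * coA q r := by
    intro q r
    have h1 : σ (SS (q * r)) = (coA q r)⁻¹ * σ (SS q) * conjA (sec q) (σ (SS r)) := by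
      apply huniq
      rw [hσ]
      rw [mul_pow, mul_pow, inv_pow, hσ, ← map_pow, hσ]
      rw [hkey q r]
      exact commGroup_aux1 _ _ _
    rw [hβ]
    show (σ (SS (q * r)))⁻¹ = (σ (SS q))⁻¹ * conjA (sec q) ((σ (SS r))⁻¹) * coA q r
    rw [h1, map_inv]
    exact commGroup_aux2 _ _ _
  set τ : Γ ⧸ A → Γ := fun q => (β q : Γ) * sec q with hτ'
  have hτmul : ∀ q r : Γ ⧸ A, τ q * τ r = τ (q * r) := by
    intro q r
    show (β q : Γ) * sec q * ((β r : Γ) * sec r) = (β (q * r) : Γ) * sec (q * r)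
    rw [hτkey q r, coe_mul, coe_mul, hconj_coe]
    show (β q : Γ) * sec q * ((β r : Γ) * sec r) =
      (β q : Γ) * (sec q * (β r : Γ) * (sec q)⁻¹) * (sec q * sec r * (sec (q * r))⁻¹) *
        sec (q * r)
    group
  have hτone : τ 1 = 1 := by
    have h1 := hτmul 1 1
    rw [mul_one] at h1
    have h2 : τ 1 * τ 1 = 1 * τ 1 := by rw [h1, one_mul]
    exact mul_right_cancel h2
  have hτinv : ∀ q : Γ ⧸ A, τ q⁻¹ = (τ q)⁻¹ := by
    intro q
    have h1 := hτmul q q⁻¹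
    rw [mul_inv_cancel, hτone] at h1
    exact eq_inv_of_mul_eq_one_right h1
  set H : Subgroup Γ :=
    { carrier := Set.range τ
      one_mem' := ⟨1, hτone⟩
      mul_mem' := by
        rintro _ _ ⟨q, rfl⟩ ⟨r, rfl⟩
        exact ⟨q * r, (hτmul q r).symm⟩
      inv_mem' := by
        rintro _ ⟨q, rfl⟩
        exact ⟨q⁻¹, hτinv q⟩ } with hH
  have hmkτ : ∀ q : Γ ⧸ A, (QuotientGroup.mk (τ q) : Γ ⧸ A) = q := by
    intro q
    show (QuotientGroup.mk ((β q : Γ) * sec q) : Γ ⧸ A) = q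
    rw [QuotientGroup.mk_mul, hmkA _ (β q).2, one_mul, hsec]
  refine ⟨H, isComplement'_of_disjoint_cover ?_ ?_⟩
  · rw [eq_bot_iff]
    rintro x ⟨hxA, hxH⟩
    obtain ⟨q, rfl⟩ := hxH
    have h1 : q = 1 := by
      rw [← hmkτ q]
      exact hmkA _ hxA
    rw [Subgroup.mem_bot, h1, hτone]
  · intro g
    refine ⟨g * (τ (QuotientGroup.mk g))⁻¹, ?_, τ (QuotientGroup.mk g),
      ⟨QuotientGroup.mk g, rfl⟩, by group⟩
    rw [← QuotientGroup.eq_one_iff]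
    rw [QuotientGroup.mk_mul, QuotientGroup.mk_inv, hmkτ, mul_inv_cancel]

/-! ### Abelian splitting with finite-index centralizer -/

set_option maxHeartbeats 1000000 in
lemma abelian_splitting {Γ : Type u} [Group Γ] (A : Subgroup Γ) [hAn : A.Normal]
    (habel : ∀ x ∈ A, ∀ y ∈ A, x * y = y * x)
    (htf : ∀ x ∈ A, ∀ n : ℕ, 0 < n → x ^ n = 1 → x = 1)
    (hdiv : ∀ x ∈ A, ∀ n : ℕ, 0 < n → ∃ y ∈ A, y ^ n = x)
    (e : ℕ) (he : 0 < e) (hexp : ∀ g : Γ, g ^ e ∈ A)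
    (M : Subgroup Γ) (hMfi : M.FiniteIndex) (hMcent : ∀ m ∈ M, ∀ a ∈ A, m * a = a * m)
    (hlf : ∀ S : Subgroup (Γ ⧸ A), S.FG → Finite S) :
    ∃ H : Subgroup Γ, A.IsComplement' H := by
  classical
  set C := Subgroup.centralizer (A : Set Γ) with hC
  have hAC : A ≤ C := by
    intro a ha
    rw [Subgroup.mem_centralizer_iff]
    intro h hh
    exact habel h hh a ha
  have hMC : M ≤ C := by
    intro m hm
    rw [Subgroup.mem_centralizer_iff]
    intro h hh
    exact (hMcent m hm h hh).symm
  have hCfi : C.FiniteIndex := by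
    constructor
    intro h0
    have hdvd : C.index ∣ M.index := Subgroup.index_dvd_of_le hMC
    rw [h0] at hdvd
    exact hMfi.index_ne_zero (zero_dvd_iff.mp hdvd)
  have hCcomm : ∀ c ∈ C, ∀ a ∈ A, c * a = a * c := by
    intro c hc a ha
    exact (Subgroup.mem_centralizer_iff.mp hc a ha).symm
  haveI hCn : C.Normal := by
    constructor
    intro c hc g
    rw [Subgroup.mem_centralizer_iff]
    intro a ha
    have ha' : g⁻¹ * a * g ∈ A := by
      have := hAn.conj_mem a ha g⁻¹
      simpa using this
    have h1 : (g⁻¹ * a * g) * c = c * (g⁻¹ * a * g) :=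
      Subgroup.mem_centralizer_iff.mp hc _ ha'
    calc a * (g * c * g⁻¹) = g * ((g⁻¹ * a * g) * c) * g⁻¹ := by group
      _ = g * (c * (g⁻¹ * a * g)) * g⁻¹ := by rw [h1]
      _ = g * c * g⁻¹ * a := by group
  -- torsion subgroup of C
  have hmulT : ∀ t s : Γ, (t ∈ C ∧ IsOfFinOrder t) → (s ∈ C ∧ IsOfFinOrder s) →
      (t * s ∈ C ∧ IsOfFinOrder (t * s)) := by
    rintro t s ⟨htC, htor⟩ ⟨hsC, hsor⟩
    refine ⟨C.mul_mem htC hsC, ?_⟩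
    set q := QuotientGroup.mk' A with hq
    set S₀ := Subgroup.closure {q t, q s} with hS₀
    haveI hS₀fin : Finite S₀ := hlf S₀ ⟨{q t, q s}, by simp [hS₀]⟩
    set W := (Subgroup.comap q S₀) ⊓ C with hW
    have hAW : A ≤ W := by
      intro a ha
      refine ⟨?_, hAC ha⟩
      have : q a = 1 := (QuotientGroup.eq_one_iff a).mpr ha
      show q a ∈ S₀
      rw [this]
      exact S₀.one_mem
    have htW : t ∈ W := ⟨Subgroup.subset_closure (by simp), htC⟩
    have hsW : s ∈ W := ⟨Subgroup.subset_closure (by simp), hsC⟩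
    set A' := A.subgroupOf W with hA'
    haveI : A'.Normal := normal_subgroupOf hAn
    -- quotient of W by A' is finite
    set ψ : W →* Γ ⧸ A := q.comp W.subtype with hψ
    have hker : ψ.ker = A' := by
      ext x
      simp only [hψ, MonoidHom.mem_ker, MonoidHom.comp_apply, Subgroup.coe_subtype,
        hq, QuotientGroup.mk'_apply, QuotientGroup.eq_one_iff]
      rfl
    have hrange : ∀ x : W, ψ x ∈ S₀ := fun x => x.2.1
    haveI hWq : Finite (W ⧸ A') := by
      rw [← hker]
      have e1 := QuotientGroup.quotientKerEquivRange ψ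
      haveI : Finite ψ.range := by
        have hinj : Function.Injective (Subgroup.inclusion
            (show ψ.range ≤ S₀ by rintro _ ⟨x, rfl⟩; exact hrange x)) :=
          Subgroup.inclusion_injective _
        exact Finite.of_injective _ hinj
      exact Finite.of_equiv _ e1.symm.toEquiv
    have habel' : ∀ x ∈ A', ∀ y ∈ A', x * y = y * x := by
      intro x hx y hy
      exact Subtype.ext (habel _ hx _ hy)
    have htf' : ∀ x ∈ A', ∀ n : ℕ, 0 < n → x ^ n = 1 → x = 1 := by
      intro x hx n hn hxn
      apply Subtype.ext
      apply htf _ hx n hn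
      have : ((x ^ n : W) : Γ) = 1 := by rw [hxn]; rfl
      rwa [SubgroupClass.coe_pow] at this
    have hdiv' : ∀ x ∈ A', ∀ n : ℕ, 0 < n → ∃ y ∈ A', y ^ n = x := by
      intro x hx n hn
      obtain ⟨y, hyA, hy⟩ := hdiv _ hx n hn
      refine ⟨⟨y, hAW hyA⟩, hyA, ?_⟩
      apply Subtype.ext
      rw [SubgroupClass.coe_pow]
      exact hy
    obtain ⟨T_W, hTW⟩ := finite_quotient_splitting A' habel' htf' hdiv'
    have hdisj : A' ⊓ T_W = ⊥ := disjoint_iff.mp hTW.disjoint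
    haveI hTWfin : Finite T_W := by
      set φ : T_W →* W ⧸ A' := (QuotientGroup.mk' A').comp T_W.subtype with hφ
      have hinj : Function.Injective φ := by
        rw [← MonoidHom.ker_eq_bot_iff]
        ext x
        simp only [hφ, MonoidHom.mem_ker, MonoidHom.comp_apply, Subgroup.coe_subtype,
          QuotientGroup.mk'_apply, QuotientGroup.eq_one_iff, Subgroup.mem_bot]
        constructor
        · intro hx
          have : (x : W) ∈ A' ⊓ T_W := ⟨hx, x.2⟩
          rw [hdisj, Subgroup.mem_bot] at this
          exact Subtype.ext this
        · intro hx
          rw [hx]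
          exact A'.one_mem
      exact Finite.of_injective _ hinj
    -- central elements of A' commute with everything in W
    have hcentral : ∀ (a : W), (a : Γ) ∈ A → ∀ w : W, Commute a w := by
      intro a ha w
      apply Subtype.ext
      show ((a : Γ) * w) = (w : Γ) * a
      exact (hCcomm _ w.2.2 _ ha).symm
    -- t and s lie in T_W
    have hmem_TW : ∀ (x : W), IsOfFinOrder (x : Γ) → x ∈ T_W := by
      intro x hxor
      obtain ⟨p, hp⟩ := hTW.existsUnique x |>.exists
      obtain ⟨⟨a, haA'⟩, ⟨u, huT⟩⟩ := p
      simp only at hp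
      obtain ⟨k, hk, hxk⟩ := isOfFinOrder_iff_pow_eq_one.mp hxor
      have hxWk : (x : W) ^ k = 1 := by
        apply Subtype.ext
        rw [SubgroupClass.coe_pow]
        exact hxk
      have hcomm : Commute a u := hcentral a haA' u
      have h2 : a ^ k * u ^ k = 1 := by
        rw [← hcomm.mul_pow, hp, hxWk]
      have h3 : a ^ k ∈ A' ⊓ T_W := by
        constructor
        · exact A'.pow_mem haA' k
        · have : a ^ k = (u ^ k)⁻¹ := eq_inv_of_mul_eq_one_left h2
          rw [this]
          exact T_W.inv_mem (T_W.pow_mem huT k)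
      rw [hdisj, Subgroup.mem_bot] at h3
      have ha1 : a = 1 := htf' a haA' k hk h3
      rw [← hp, ha1, one_mul]
      exact huT
    have htTW : (⟨t, htW⟩ : W) ∈ T_W := hmem_TW _ htor
    have hsTW : (⟨s, hsW⟩ : W) ∈ T_W := hmem_TW _ hsor
    have hts : (⟨t, htW⟩ : W) * ⟨s, hsW⟩ ∈ T_W := T_W.mul_mem htTW hsTW
    have : IsOfFinOrder ((⟨t, htW⟩ : W) * ⟨s, hsW⟩ : W) := by
      have := isTorsion_of_finite (G := T_W) ⟨(⟨t, htW⟩ : W) * ⟨s, hsW⟩, hts⟩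
      obtain ⟨k, hk, hk1⟩ := isOfFinOrder_iff_pow_eq_one.mp this
      rw [isOfFinOrder_iff_pow_eq_one]
      refine ⟨k, hk, ?_⟩
      have := congrArg (Subtype.val) hk1
      rwa [SubgroupClass.coe_pow] at this
    obtain ⟨k, hk, hk1⟩ := isOfFinOrder_iff_pow_eq_one.mp this
    rw [isOfFinOrder_iff_pow_eq_one]
    refine ⟨k, hk, ?_⟩
    have := congrArg (Subtype.val) hk1
    rwa [SubgroupClass.coe_pow] at this
  set T : Subgroup Γ :=
    { carrier := {g : Γ | g ∈ C ∧ IsOfFinOrder g}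
      one_mem' := ⟨C.one_mem, IsOfFinOrder.one⟩
      mul_mem' := fun hx hy => hmulT _ _ hx hy
      inv_mem' := fun hx => ⟨C.inv_mem hx.1, hx.2.inv⟩ } with hT
  have hTmem : ∀ x : Γ, x ∈ T ↔ x ∈ C ∧ IsOfFinOrder x := fun x => Iff.rfl
  haveI hTn : T.Normal := by
    constructor
    intro x hx g
    refine ⟨hCn.conj_mem x hx.1 g, ?_⟩
    have := ((MulAut.conj g).toMonoidHom).isOfFinOrder hx.2
    simpa using this
  have hAT : A ⊓ T = ⊥ := by
    rw [eq_bot_iff]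
    rintro x ⟨hxA, hxT⟩
    obtain ⟨k, hk, hk1⟩ := isOfFinOrder_iff_pow_eq_one.mp hxT.2
    rw [Subgroup.mem_bot]
    exact htf x hxA k hk hk1
  have hTC : T ≤ C := fun x hx => hx.1
  have hCAT : ∀ c ∈ C, ∃ t ∈ T, ∃ a ∈ A, c = t * a := by
    intro c hc
    obtain ⟨a, haA, ha⟩ := hdiv (c ^ e) (hexp c) e he
    have hcomm : Commute c a := (hCcomm c hc a haA).symm.symm
    have hcomm' : Commute c a := hCcomm c hc a haA
    have h1 : (c * a⁻¹) ^ e = 1 := by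
      rw [(hcomm'.inv_right).mul_pow, inv_pow, ha, mul_inv_cancel]
    refine ⟨c * a⁻¹, ⟨C.mul_mem hc (C.inv_mem (hAC haA)), ?_⟩, a, haA, by group⟩
    rw [isOfFinOrder_iff_pow_eq_one]
    exact ⟨e, he, h1⟩
  -- pass to the quotient by T
  set π : Γ →* Γ ⧸ T := QuotientGroup.mk' T with hπ
  set A₁ := Subgroup.map π A with hA₁
  haveI : A₁.Normal := hAn.map π (QuotientGroup.mk'_surjective T)
  have habel₁ : ∀ x ∈ A₁, ∀ y ∈ A₁, x * y = y * x := by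
    rintro _ ⟨a, haA, rfl⟩ _ ⟨b, hbA, rfl⟩
    rw [← map_mul, ← map_mul, habel a haA b hbA]
  have htf₁ : ∀ x ∈ A₁, ∀ n : ℕ, 0 < n → x ^ n = 1 → x = 1 := by
    rintro _ ⟨a, haA, rfl⟩ n hn hxn
    rw [← map_pow] at hxn
    have h1 : a ^ n ∈ T := by
      rwa [hπ, QuotientGroup.mk'_apply, QuotientGroup.eq_one_iff] at hxn
    have h2 : a ^ n ∈ A ⊓ T := ⟨A.pow_mem haA n, h1⟩
    rw [hAT, Subgroup.mem_bot] at h2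
    have h3 : a = 1 := htf a haA n hn h2
    rw [h3, map_one]
  have hdiv₁ : ∀ x ∈ A₁, ∀ n : ℕ, 0 < n → ∃ y ∈ A₁, y ^ n = x := by
    rintro _ ⟨a, haA, rfl⟩ n hn
    obtain ⟨y, hyA, hy⟩ := hdiv a haA n hn
    exact ⟨π y, Subgroup.mem_map_of_mem _ hyA, by rw [← map_pow, hy]⟩
  have hmapC : Subgroup.map π C = A₁ := by
    apply le_antisymm
    · rintro _ ⟨c, hcC, rfl⟩
      obtain ⟨t, htT, a, haA, rfl⟩ := hCAT c hcC
      have h1 : π (t * a) = π a := by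
        rw [map_mul]
        have : π t = 1 := by
          rw [hπ, QuotientGroup.mk'_apply, QuotientGroup.eq_one_iff]
          exact htT
        rw [this, one_mul]
      rw [h1]
      exact Subgroup.mem_map_of_mem _ haA
    · exact Subgroup.map_mono hAC
  haveI hfinq1 : Finite ((Γ ⧸ T) ⧸ A₁) := by
    have e1 := QuotientGroup.quotientQuotientEquivQuotient T C hTC
    rw [← hmapC]
    haveI : Finite (Γ ⧸ C) := Subgroup.finite_quotient_of_finiteIndex
    exact Finite.of_equiv _ e1.symm.toEquiv
  obtain ⟨H₁, hH₁⟩ := finite_quotient_splitting A₁ habel₁ htf₁ hdiv₁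
  refine ⟨Subgroup.comap π H₁, isComplement'_of_disjoint_cover ?_ ?_⟩
  · rw [eq_bot_iff]
    rintro x ⟨hxA, hxH⟩
    have h1 : π x ∈ A₁ ⊓ H₁ := ⟨Subgroup.mem_map_of_mem _ hxA, hxH⟩
    rw [disjoint_iff.mp hH₁.disjoint, Subgroup.mem_bot] at h1
    have h2 : x ∈ T := by
      rwa [hπ, QuotientGroup.mk'_apply, QuotientGroup.eq_one_iff] at h1
    have h3 : x ∈ A ⊓ T := ⟨hxA, h2⟩
    rw [hAT, Subgroup.mem_bot] at h3
    rw [Subgroup.mem_bot]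
    exact h3
  · intro g
    obtain ⟨p, hp⟩ := (hH₁.existsUnique (π g)).exists
    obtain ⟨⟨a₁, ha₁⟩, ⟨h₁, hh₁⟩⟩ := p
    simp only at hp
    obtain ⟨a, haA, ha⟩ := ha₁
    refine ⟨a, haA, a⁻¹ * g, ?_, by group⟩
    show π (a⁻¹ * g) ∈ H₁
    rw [map_mul, map_inv, ha]
    have : (a₁ : Γ ⧸ T)⁻¹ * (a₁ * h₁) = h₁ := by group
    rw [← hp, this]
    exact hh₁

/-! ### The splitting recursion -/

lemma subgroupFG_map {G' H' : Type*} [Group G'] [Group H'] (f : G' →* H') {S : Subgroup G'}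
    (h : S.FG) : (S.map f).FG := by
  classical
  obtain ⟨s, hs⟩ := h
  exact ⟨s.image f, by rw [Finset.coe_image, ← MonoidHom.map_closure, hs]⟩

set_option maxHeartbeats 2000000 in
lemma splitting_rec (c : ℕ) : ∀ (Γ : Type u) [Group Γ] (e : ℕ), 0 < e →
    ∀ (Kh M : Subgroup Γ) [hKn : Kh.Normal], M.FiniteIndex →
    ∀ (C : ℕ → Subgroup Γ), C 0 = ⊥ → C c = Kh →
    (∀ i, C i ≤ C (i + 1)) →
    (∀ i, (C i).Normal) →
    (∀ i, ∀ x ∈ C (i + 1), ∀ y ∈ C (i + 1), ⁅x, y⁆ ∈ C i) →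
    (∀ i, ∀ x ∈ C (i + 1), ∀ n : ℕ, 0 < n → x ^ n ∈ C i → x ∈ C i) →
    (∀ i, ∀ x ∈ C (i + 1), ∀ n : ℕ, 0 < n → ∃ y ∈ C (i + 1), y ^ n * x⁻¹ ∈ C i) →
    (∀ i, ∀ g ∈ M, ∀ x ∈ C (i + 1), ⁅g, x⁆ ∈ C i) →
    (∀ g : Γ, g ^ e ∈ Kh) →
    (∀ S : Subgroup (Γ ⧸ Kh), S.FG → Finite S) →
    ∃ H : Subgroup Γ, Kh.IsComplement' H := by
  induction c with
  | zero =>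
    intro Γ _ e he Kh M hKn hMfi C hC0 hCc hmono hnorm habel ht hd hMc hexp hlf
    refine ⟨⊤, ?_⟩
    have : Kh = ⊥ := by rw [← hCc, hC0]
    rw [this]
    exact Subgroup.isComplement'_bot_top
  | succ c ih =>
    intro Γ _ e he Kh M hKn hMfi C hC0 hCc hmono hnorm habel ht hd hMc hexp hlf
    classical
    have hCmono : Monotone C := monotone_nat_of_le_succ hmono
    set Z := C 1 with hZ
    haveI hZn : Z.Normal := hnorm 1
    have hZK : Z ≤ Kh := by rw [← hCc]; exact hCmono (by omega)
    set π := QuotientGroup.mk' Z with hπ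
    have hπsurj : Function.Surjective π := QuotientGroup.mk'_surjective Z
    have hπker : ∀ x : Γ, π x = 1 ↔ x ∈ Z := fun x => QuotientGroup.eq_one_iff x
    set C' : ℕ → Subgroup (Γ ⧸ Z) := fun i => Subgroup.map π (C (i + 1)) with hC'
    set K' := Subgroup.map π Kh with hK'
    haveI hK'n : K'.Normal := hKn.map π hπsurj
    set M' := Subgroup.map π M with hM'
    have hM'fi : M'.FiniteIndex := by
      constructor
      intro h0
      have hdvd : M'.index ∣ M.index := Subgroup.index_map_dvd M hπsurj
      rw [h0] at hdvd
      exact hMfi.index_ne_zero (zero_dvd_iff.mp hdvd)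
    have hZC : ∀ i, Z ≤ C (i + 1) := fun i => hCmono (by omega)
    have hC'0 : C' 0 = ⊥ := by
      rw [eq_bot_iff]
      rintro _ ⟨x, hx, rfl⟩
      rw [Subgroup.mem_bot]
      exact (hπker x).mpr hx
    have hC'c : C' c = K' := by rw [hC', hK', ← hCc]
    have hmono' : ∀ i, C' i ≤ C' (i + 1) := fun i => Subgroup.map_mono (hmono (i + 1))
    have hnorm' : ∀ i, (C' i).Normal := fun i => (hnorm (i + 1)).map π hπsurj
    have habel' : ∀ i, ∀ x ∈ C' (i + 1), ∀ y ∈ C' (i + 1), ⁅x, y⁆ ∈ C' i := by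
      rintro i _ ⟨a, ha, rfl⟩ _ ⟨b, hb, rfl⟩
      rw [← map_commutatorElement]
      exact Subgroup.mem_map_of_mem _ (habel (i + 1) a ha b hb)
    have ht' : ∀ i, ∀ x ∈ C' (i + 1), ∀ n : ℕ, 0 < n → x ^ n ∈ C' i → x ∈ C' i := by
      rintro i _ ⟨a, ha, rfl⟩ n hn hxn
      rw [← map_pow] at hxn
      obtain ⟨b, hb, hba⟩ := hxn
      have h1 : a ^ n * b⁻¹ ∈ Z := by
        rw [← hπker]
        rw [map_mul, map_inv, hba, mul_inv_cancel]
      have h2 : a ^ n ∈ C (i + 1) := by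
        have h3 : a ^ n = (a ^ n * b⁻¹) * b := by group
        rw [h3]
        exact Subgroup.mul_mem _ (hZC i (h1)) hb
      exact Subgroup.mem_map_of_mem _ (ht (i + 1) a ha n hn h2)
    have hd' : ∀ i, ∀ x ∈ C' (i + 1), ∀ n : ℕ, 0 < n → ∃ y ∈ C' (i + 1), y ^ n * x⁻¹ ∈ C' i := by
      rintro i _ ⟨a, ha, rfl⟩ n hn
      obtain ⟨y, hy, hyn⟩ := hd (i + 1) a ha n hn
      refine ⟨π y, Subgroup.mem_map_of_mem _ hy, ?_⟩
      rw [← map_pow, ← map_inv, ← map_mul]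
      exact Subgroup.mem_map_of_mem _ hyn
    have hMc' : ∀ i, ∀ g ∈ M', ∀ x ∈ C' (i + 1), ⁅g, x⁆ ∈ C' i := by
      rintro i _ ⟨g, hg, rfl⟩ _ ⟨a, ha, rfl⟩
      rw [← map_commutatorElement]
      exact Subgroup.mem_map_of_mem _ (hMc (i + 1) g hg a ha)
    have hexp' : ∀ x : Γ ⧸ Z, x ^ e ∈ K' := by
      intro x
      obtain ⟨g, rfl⟩ := hπsurj x
      rw [← map_pow]
      exact Subgroup.mem_map_of_mem _ (hexp g)
    have hlf' : ∀ S : Subgroup ((Γ ⧸ Z) ⧸ K'), S.FG → Finite S := by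
      intro S hS
      set θ := QuotientGroup.quotientQuotientEquivQuotient Z Kh hZK with hθ
      haveI : Finite (Subgroup.map θ.toMonoidHom S) :=
        hlf _ (subgroupFG_map θ.toMonoidHom hS)
      exact Finite.of_equiv _ (Subgroup.equivMapOfInjective S θ.toMonoidHom θ.injective).symm.toEquiv
    obtain ⟨H', hH'⟩ := ih (Γ ⧸ Z) e he K' M' hM'fi C' hC'0 hC'c hmono' hnorm' habel' ht' hd'
      hMc' hexp' hlf'
    -- pull back the complement
    set Hc := Subgroup.comap π H' with hHc
    have hZH : Z ≤ Hc := by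
      intro z hz
      show π z ∈ H'
      rw [(hπker z).mpr hz]
      exact H'.one_mem
    have hKHc : ∀ x : Γ, (x ∈ Kh ∧ x ∈ Hc) ↔ x ∈ Z := by
      intro x
      constructor
      · rintro ⟨hxK, hxH⟩
        have h1 : π x ∈ K' ⊓ H' := ⟨Subgroup.mem_map_of_mem _ hxK, hxH⟩
        rw [disjoint_iff.mp hH'.disjoint, Subgroup.mem_bot] at h1
        exact (hπker x).mp h1
      · intro hxZ
        exact ⟨hZK hxZ, hZH hxZ⟩
    -- decompose any γ as k * h with k ∈ Kh, h ∈ Hc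
    have hdecomp : ∀ γ : Γ, ∃ k ∈ Kh, k⁻¹ * γ ∈ Hc := by
      intro γ
      obtain ⟨p, hp⟩ := (hH'.existsUnique (π γ)).exists
      obtain ⟨⟨k', hk'⟩, ⟨h', hh'⟩⟩ := p
      simp only at hp
      obtain ⟨k, hkK, hk⟩ := hk'
      refine ⟨k, hkK, ?_⟩
      show π (k⁻¹ * γ) ∈ H'
      rw [map_mul, map_inv, hk]
      have h2 : k'⁻¹ * (k' * h') = h' := by group
      rw [← hp, h2]
      exact hh'
    -- now split Z inside Hc
    set A₂ := Z.subgroupOf Hc with hA₂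
    haveI : A₂.Normal := normal_subgroupOf hZn
    have hmemA₂ : ∀ x : Hc, x ∈ A₂ ↔ (x : Γ) ∈ Z := fun x => Iff.rfl
    have habel₂ : ∀ x ∈ A₂, ∀ y ∈ A₂, x * y = y * x := by
      intro x hx y hy
      have h1 : ⁅(x : Γ), (y : Γ)⁆ ∈ C 0 := habel 0 _ hx _ hy
      rw [hC0, Subgroup.mem_bot] at h1
      have h2 : Commute (x : Γ) (y : Γ) := commutatorElement_eq_one_iff_commute.mp h1
      exact Subtype.ext h2
    have htf₂ : ∀ x ∈ A₂, ∀ n : ℕ, 0 < n → x ^ n = 1 → x = 1 := by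
      intro x hx n hn hxn
      have h1 : (x : Γ) ^ n ∈ C 0 := by
        rw [hC0, Subgroup.mem_bot]
        have := congrArg (Subtype.val) hxn
        rwa [SubgroupClass.coe_pow] at this
      have h2 : (x : Γ) ∈ C 0 := ht 0 _ hx n hn h1
      rw [hC0, Subgroup.mem_bot] at h2
      exact Subtype.ext h2
    have hdiv₂ : ∀ x ∈ A₂, ∀ n : ℕ, 0 < n → ∃ y ∈ A₂, y ^ n = x := by
      intro x hx n hn
      obtain ⟨y, hy, hyn⟩ := hd 0 (x : Γ) hx n hn
      rw [hC0, Subgroup.mem_bot] at hyn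
      have hyx : y ^ n = (x : Γ) := by
        have := mul_inv_eq_one.mp hyn
        exact this
      have hyZ : y ∈ Z := hy
      refine ⟨⟨y, hZH hyZ⟩, hyZ, ?_⟩
      apply Subtype.ext
      rw [SubgroupClass.coe_pow]
      exact hyx
    have hexp₂ : ∀ g : Hc, g ^ e ∈ A₂ := by
      intro g
      rw [hmemA₂, SubgroupClass.coe_pow]
      rw [← hKHc]
      exact ⟨hexp _, Hc.pow_mem g.2 e⟩
    set M₂ := M.subgroupOf Hc with hM₂
    haveI := hMfi
    haveI hM₂fi : M₂.FiniteIndex := Subgroup.instFiniteIndex_subgroupOf M Hc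
    have hM₂cent : ∀ m ∈ M₂, ∀ a ∈ A₂, m * a = a * m := by
      intro m hm a ha
      have h1 : ⁅(m : Γ), (a : Γ)⁆ ∈ C 0 := hMc 0 _ hm _ ha
      rw [hC0, Subgroup.mem_bot] at h1
      exact Subtype.ext (commutatorElement_eq_one_iff_commute.mp h1)
    have hlf₂ : ∀ S : Subgroup (Hc ⧸ A₂), S.FG → Finite S := by
      set ψ : Hc →* Γ ⧸ Kh := (QuotientGroup.mk' Kh).comp Hc.subtype with hψ
      have hψsurj : Function.Surjective ψ := by
        intro w
        obtain ⟨γ, rfl⟩ := QuotientGroup.mk'_surjective Kh w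
        obtain ⟨k, hkK, hk⟩ := hdecomp γ
        refine ⟨⟨k⁻¹ * γ, hk⟩, ?_⟩
        show QuotientGroup.mk' Kh (k⁻¹ * γ) = QuotientGroup.mk' Kh γ
        rw [map_mul, map_inv]
        have : QuotientGroup.mk' Kh k = 1 := (QuotientGroup.eq_one_iff k).mpr hkK
        rw [this, inv_one, one_mul]
      have hψker : ψ.ker = A₂ := by
        ext x
        simp only [hψ, MonoidHom.mem_ker, MonoidHom.comp_apply, Subgroup.coe_subtype,
          QuotientGroup.mk'_apply, QuotientGroup.eq_one_iff]
        rw [hmemA₂, ← hKHc]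
        exact ⟨fun h => ⟨h, x.2⟩, fun h => h.1⟩
      intro S hS
      have e2 : Hc ⧸ A₂ ≃* Γ ⧸ Kh :=
        (QuotientGroup.quotientMulEquivOfEq hψker.symm).trans
          (QuotientGroup.quotientKerEquivOfSurjective ψ hψsurj)
      haveI : Finite (Subgroup.map e2.toMonoidHom S) := hlf _ (subgroupFG_map e2.toMonoidHom hS)
      exact Finite.of_equiv _ (Subgroup.equivMapOfInjective S e2.toMonoidHom e2.injective).symm.toEquiv
    obtain ⟨H₂, hH₂⟩ := abelian_splitting A₂ habel₂ htf₂ hdiv₂ e he hexp₂ M₂ hM₂fi hM₂cent hlf₂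
    refine ⟨Subgroup.map Hc.subtype H₂, isComplement'_of_disjoint_cover ?_ ?_⟩
    · rw [eq_bot_iff]
      rintro x ⟨hxK, hxH⟩
      obtain ⟨u, huH₂, rfl⟩ := hxH
      have h1 : (u : Γ) ∈ Z := (hKHc _).mp ⟨hxK, u.2⟩
      have h2 : u ∈ A₂ ⊓ H₂ := ⟨h1, huH₂⟩
      rw [disjoint_iff.mp hH₂.disjoint, Subgroup.mem_bot] at h2
      rw [Subgroup.mem_bot, h2]
      rfl
    · intro γ
      obtain ⟨k, hkK, hk⟩ := hdecomp γ
      obtain ⟨p, hp⟩ := (hH₂.existsUnique (⟨k⁻¹ * γ, hk⟩ : Hc)).exists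
      obtain ⟨⟨a₂, ha₂⟩, ⟨h₂, hh₂⟩⟩ := p
      simp only at hp
      refine ⟨k * (a₂ : Γ), Subgroup.mul_mem _ hkK (hZK ((hmemA₂ a₂).mp ha₂)), (h₂ : Γ),
        Subgroup.mem_map_of_mem _ hh₂, ?_⟩
      have h3 : (a₂ : Γ) * (h₂ : Γ) = k⁻¹ * γ := by
        have := congrArg (Subtype.val) hp
        exact this
      rw [mul_assoc, h3]
      group

end VNSplit

open VNSplit

/-- A virtually nilpotent group with finitely many automorphism orbits splits as
G = K ⋊ H with K torsion-free radicable nilpotent and H torsion. -/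
theorem virtually_nilpotent_splits
    (G : Type*) [Group G]
    (hvn : ∃ N : Subgroup G, N.FiniteIndex ∧ Group.IsNilpotent N)
    (hfin : Finite (MulAction.orbitRel.Quotient (MulAut G) G)) :
    ∃ K H : Subgroup G, K.Normal ∧ Group.IsNilpotent K ∧
      (∀ k ∈ K, k ≠ 1 → ¬ IsOfFinOrder k) ∧
      (∀ k ∈ K, ∀ n : ℕ, 0 < n → ∃ h ∈ K, h ^ n = k) ∧
      (∀ h ∈ H, IsOfFinOrder h) ∧
      K.IsComplement' H := by
  classical
  obtain ⟨N, hNfi, hNnil⟩ := hvn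
  obtain ⟨B, hB⟩ := exists_order_bound hfin
  obtain ⟨K, e, he, hKnorm, hexp, hgen⟩ := exists_radicable_part hfin
  haveI hKn : K.Normal := hKnorm
  have hKN : K ≤ N := le_of_finiteIndex hgen hNfi
  haveI hKnil : Group.IsNilpotent K := nilpotent_of_le hKN hNnil
  -- radicability
  have hgenK : ∀ n : ℕ, 0 < n →
      Subgroup.closure (Set.range fun y : K => y ^ n) = ⊤ := by
    intro n hn
    rw [eq_top_iff]
    intro x _
    exact mem_closure_pow_subgroup (hgen n hn) x
  have hradK := radicable_of_nilpotent_gen K hgenK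
  have hrad : ∀ k ∈ K, ∀ n : ℕ, 0 < n → ∃ h ∈ K, h ^ n = k := by
    intro k hk n hn
    obtain ⟨x, hx⟩ := hradK ⟨k, hk⟩ n hn
    refine ⟨(x : G), x.2, ?_⟩
    have := congrArg (Subtype.val) hx
    rwa [SubgroupClass.coe_pow] at this
  -- torsion-freeness
  have htfG : ∀ k ∈ K, k ≠ 1 → ¬ IsOfFinOrder k := torsionfree_of_radicable B hB hrad
  have htfK : ∀ x : K, ∀ n : ℕ, 0 < n → x ^ n = 1 → x = 1 := by
    intro x n hn hxn
    by_contra hx1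
    have hcoe : (x : G) ^ n = 1 := by
      have := congrArg (Subtype.val) hxn
      rwa [SubgroupClass.coe_pow] at this
    have hne : (x : G) ≠ 1 := by
      intro h
      exact hx1 (Subtype.ext h)
    exact htfG (x : G) x.2 hne (isOfFinOrder_iff_pow_eq_one.mpr ⟨n, hn, hcoe⟩)
  -- the normal nilpotent finite-index subgroup
  set N₀ := N.normalCore with hN₀
  haveI hN₀n : N₀.Normal := Subgroup.normalCore_normal N
  haveI := hNfi
  haveI hN₀fi : N₀.FiniteIndex := Subgroup.finiteIndex_normalCore N
  haveI hN₀nil : Group.IsNilpotent N₀ := nilpotent_of_le (Subgroup.normalCore_le N) hNnil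
  have hKN₀ : K ≤ N₀ := Subgroup.normal_le_normalCore.mpr hKN
  have hMc := ucsMap_M_comm K N₀ hKN₀ e he hexp htfK
  -- the chain
  set cK := Group.nilpotencyClass K with hcK
  set C : ℕ → Subgroup G := fun i => ucsMap K (min i cK) with hCdef
  have hC0 : C 0 = ⊥ := by
    show ucsMap K (min 0 cK) = ⊥
    rw [Nat.min_eq_left (Nat.zero_le _)]
    exact ucsMap_zero K
  have hCc : C cK = K := by
    show ucsMap K (min cK cK) = K
    rw [Nat.min_self]
    exact ucsMap_top K
  have hCK : ∀ i, C i ≤ K := fun i => ucsMap_le K _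
  have hCtop : ∀ i, cK ≤ i → C i = K := by
    intro i hi
    show ucsMap K (min i cK) = K
    rw [Nat.min_eq_right hi]
    exact ucsMap_top K
  have hmono : ∀ i, C i ≤ C (i + 1) :=
    fun i => ucsMap_mono K (min_le_min (Nat.le_succ i) le_rfl)
  have hnorm : ∀ i, (C i).Normal := fun i => ucsMap_normal K _
  have hstep : ∀ i, i < cK → (min (i + 1) cK = i + 1 ∧ min i cK = i) := by
    intro i hi
    omega
  have habelC : ∀ i, ∀ x ∈ C (i + 1), ∀ y ∈ C (i + 1), ⁅x, y⁆ ∈ C i := by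
    intro i x hx y hy
    rcases lt_or_ge i cK with hi | hi
    · obtain ⟨h1, h2⟩ := hstep i hi
      show ⁅x, y⁆ ∈ ucsMap K (min i cK)
      rw [h2]
      have hx0 : x ∈ ucsMap K (min (i + 1) cK) := hx
      have hy0 : y ∈ ucsMap K (min (i + 1) cK) := hy
      rw [h1] at hx0 hy0
      exact ucsMap_comm K hx0 hy0
    · rw [hCtop i hi]
      have hxK : x ∈ K := hCK _ hx
      have hyK : y ∈ K := hCK _ hy
      exact Subgroup.mul_mem _ (Subgroup.mul_mem _ (Subgroup.mul_mem _ hxK hyK)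
        (Subgroup.inv_mem _ hxK)) (Subgroup.inv_mem _ hyK)
  have htC : ∀ i, ∀ x ∈ C (i + 1), ∀ n : ℕ, 0 < n → x ^ n ∈ C i → x ∈ C i := by
    intro i x hx n hn hxn
    rcases lt_or_ge i cK with hi | hi
    · obtain ⟨h1, h2⟩ := hstep i hi
      have hx0 : x ∈ ucsMap K (min (i + 1) cK) := hx
      have hxn0 : x ^ n ∈ ucsMap K (min i cK) := hxn
      rw [h1] at hx0
      rw [h2] at hxn0
      show x ∈ ucsMap K (min i cK)
      rw [h2]
      exact ucsMap_ht K htfK hn hx0 hxn0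
    · rw [hCtop i hi]
      rw [hCtop (i + 1) (by omega)] at hx
      exact hx
  have hdC : ∀ i, ∀ x ∈ C (i + 1), ∀ n : ℕ, 0 < n → ∃ y ∈ C (i + 1), y ^ n * x⁻¹ ∈ C i := by
    intro i x hx n hn
    rcases lt_or_ge i cK with hi | hi
    · obtain ⟨h1, h2⟩ := hstep i hi
      have hx0 : x ∈ ucsMap K (min (i + 1) cK) := hx
      rw [h1] at hx0
      obtain ⟨y, hy, hyx⟩ := ucsMap_hd K htfK hrad hn hx0
      have hy0 : y ∈ ucsMap K (min (i + 1) cK) := by rw [h1]; exact hy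
      refine ⟨y, hy0, ?_⟩
      show y ^ n * x⁻¹ ∈ ucsMap K (min i cK)
      rw [hyx, mul_inv_cancel]
      exact Subgroup.one_mem _
    · obtain ⟨y, hyK, hyx⟩ := hrad x (hCK _ hx) n hn
      refine ⟨y, by rw [hCtop (i + 1) (by omega)]; exact hyK, ?_⟩
      rw [hyx, mul_inv_cancel]
      exact Subgroup.one_mem _
  have hMcC : ∀ i, ∀ g ∈ N₀, ∀ x ∈ C (i + 1), ⁅g, x⁆ ∈ C i := by
    intro i g hg x hx
    rcases lt_or_ge i cK with hi | hi
    · obtain ⟨h1, h2⟩ := hstep i hi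
      have hx0 : x ∈ ucsMap K (min (i + 1) cK) := hx
      rw [h1] at hx0
      show ⁅g, x⁆ ∈ ucsMap K (min i cK)
      rw [h2]
      exact hMc i g hg x hx0
    · rw [hCtop i hi]
      have hxK : x ∈ K := hCK _ hx
      show g * x * g⁻¹ * x⁻¹ ∈ K
      exact Subgroup.mul_mem _ (hKn.conj_mem x hxK g) (Subgroup.inv_mem _ hxK)
  -- local finiteness of G / K
  have hlf : ∀ S : Subgroup (G ⧸ K), S.FG → Finite S := by
    set f : N₀ →* G ⧸ K := (QuotientGroup.mk' K).comp N₀.subtype with hf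
    have hfr : f.range = Subgroup.map (QuotientGroup.mk' K) N₀ := by
      rw [hf, MonoidHom.range_comp, Subgroup.range_subtype]
    haveI hnil : Group.IsNilpotent (Subgroup.map (QuotientGroup.mk' K) N₀) := by
      rw [← hfr]
      exact nilpotent_of_surjective f.rangeRestrict f.rangeRestrict_surjective
    have hfi : (Subgroup.map (QuotientGroup.mk' K) N₀).FiniteIndex := by
      constructor
      intro h0
      have hdvd := Subgroup.index_map_dvd (f := QuotientGroup.mk' K) N₀
        (QuotientGroup.mk'_surjective K)
      rw [h0] at hdvd
      exact hN₀fi.index_ne_zero (zero_dvd_iff.mp hdvd)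
    have hexpQ : ∀ q : G ⧸ K, q ^ e = 1 := by
      intro q
      obtain ⟨g, rfl⟩ := QuotientGroup.mk'_surjective K q
      rw [← map_pow, QuotientGroup.mk'_apply, QuotientGroup.eq_one_iff]
      exact hexp g
    intro S hS
    exact finite_of_fg_torsion_virtually_nilpotent _ hfi e he hexpQ S hS
  obtain ⟨H, hH⟩ := splitting_rec cK G e he K N₀ hN₀fi C hC0 hCc hmono hnorm habelC htC hdC
    hMcC hexp hlf
  refine ⟨K, H, hKnorm, hKnil, htfG, hrad, ?_, hH⟩
  intro h hh
  have h1 : h ^ e ∈ K ⊓ H := ⟨hexp h, H.pow_mem hh e⟩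
  rw [disjoint_iff.mp hH.disjoint, Subgroup.mem_bot] at h1
  exact isOfFinOrder_iff_pow_eq_one.mpr ⟨e, he, h1⟩
end
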